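/- arXiv:1702.06256 — 4 statements merged into one kernel-verified Lean document; each statement's English description precedes it below -/
import Mathlib

section
/- Assume every letter occurs at most 2 times in A, and suppose there is a maximal series of p consecutive squares starting at S(i,i';j,j') (p ≥ 1). Let M be the set of the 4p member vertices of the squares in the series, and let I* be a maximum independent set of the conflict graph G. If |I* ∩ M| < 2p, then either all four pairs (i-1,j-1), (i'-1,j'-1), (i'+p,j+p), (i+p,j'+p) are vertices and belong to I*, or all four pairs (i'-1,j-1), (i-1,j'-1), (i+p,j+p), (i'+p,j'+p) are vertices and belong to I*. -/
/-- `(i, j)` is a vertex: `A i = B j` and `A (i+1) = B (j+1)`,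
with the required index bounds (`i, j ≤ n - 2`, i.e. `i + 1 < n` and `j + 1 < n`). -/
def IsVertex {Γ : Type*} (n : ℕ) (A B : Fin n → Γ) (i j : ℕ) : Prop :=
  ∃ (hi : i + 1 < n) (hj : j + 1 < n),
    A ⟨i, Nat.lt_of_succ_lt hi⟩ = B ⟨j, Nat.lt_of_succ_lt hj⟩ ∧
    A ⟨i + 1, hi⟩ = B ⟨j + 1, hj⟩

/-- Adjacency in the conflict graph `G`. -/
def ConflictAdj {Γ : Type*} (n : ℕ) (A B : Fin n → Γ) (v w : ℕ × ℕ) : Prop :=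
  IsVertex n A B v.1 v.2 ∧ IsVertex n A B w.1 w.2 ∧ v ≠ w ∧
  ∃ p : ℤ, (p = -1 ∨ p = 0 ∨ p = 1) ∧
    (((w.1 : ℤ) = (v.1 : ℤ) + p ∧ (w.2 : ℤ) ≠ (v.2 : ℤ) + p) ∨
     ((w.2 : ℤ) = (v.2 : ℤ) + p ∧ (w.1 : ℤ) ≠ (v.1 : ℤ) + p))

/-- An independent set of the conflict graph: a set of vertices, pairwise non-adjacent. -/
def IsIndep {Γ : Type*} (n : ℕ) (A B : Fin n → Γ) (I : Set (ℕ × ℕ)) : Prop :=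
  (∀ v ∈ I, IsVertex n A B v.1 v.2) ∧ ∀ v ∈ I, ∀ w ∈ I, ¬ ConflictAdj n A B v w

/-- A square `S(i,i';j,j')`: `i ≠ i'`, `j ≠ j'`, and all four pairs are vertices. -/
def IsConflictSquare {Γ : Type*} (n : ℕ) (A B : Fin n → Γ) (i i' j j' : ℕ) : Prop :=
  i ≠ i' ∧ j ≠ j' ∧ IsVertex n A B i j ∧ IsVertex n A B i j' ∧
    IsVertex n A B i' j ∧ IsVertex n A B i' j'

/-- The four member vertices of the square `S(i,i';j,j')`. -/
def SqMembers (i i' j j' : ℕ) : Set (ℕ × ℕ) :=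
  {(i, j), (i, j'), (i', j), (i', j')}

/- ### helper lemmas -/

def wrapF {Γ : Type*} (n : ℕ) (hn : 0 < n) (A : Fin n → Γ) (x : ℕ) : Γ :=
  A ⟨x % n, Nat.mod_lt x hn⟩

lemma wrapF_eq {Γ : Type*} (n : ℕ) (hn : 0 < n) (A : Fin n → Γ) (x : ℕ) (h : x < n) :
    wrapF n hn A x = A ⟨x, h⟩ := by
  unfold wrapF
  congr 1
  exact Fin.ext (by simp [Nat.mod_eq_of_lt h])

lemma adj_symm {Γ : Type*} {n : ℕ} {A B : Fin n → Γ} {v w : ℕ × ℕ}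
    (h : ConflictAdj n A B v w) : ConflictAdj n A B w v := by
  obtain ⟨h1, h2, h3, s, hs, hd⟩ := h
  refine ⟨h2, h1, h3.symm, -s, by omega, ?_⟩
  rcases hd with ⟨ha, hb⟩ | ⟨ha, hb⟩
  · exact Or.inl ⟨by omega, by omega⟩
  · exact Or.inr ⟨by omega, by omega⟩

lemma adj_mk {Γ : Type*} {n : ℕ} {A B : Fin n → Γ} {x y x' y' : ℕ}
    (hv : IsVertex n A B x y) (hw : IsVertex n A B x' y') (s : ℤ)
    (hs : s = -1 ∨ s = 0 ∨ s = 1)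
    (h : ((x' : ℤ) = x + s ∧ (y' : ℤ) ≠ y + s) ∨ ((y' : ℤ) = y + s ∧ (x' : ℤ) ≠ x + s)) :
    ConflictAdj n A B (x, y) (x', y') := by
  refine ⟨hv, hw, ?_, s, hs, h⟩
  intro heq
  rw [Prod.mk.injEq] at heq
  rcases h with ⟨ha, hb⟩ | ⟨ha, hb⟩ <;> omega

lemma sq_comm_i {Γ : Type*} {n : ℕ} {A B : Fin n → Γ} {i i' j j' : ℕ}
    (h : IsConflictSquare n A B i i' j j') : IsConflictSquare n A B i' i j j' := by
  obtain ⟨a, b, c, d, e, f⟩ := h; exact ⟨a.symm, b, e, f, c, d⟩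

lemma sq_comm_j {Γ : Type*} {n : ℕ} {A B : Fin n → Γ} {i i' j j' : ℕ}
    (h : IsConflictSquare n A B i i' j j') : IsConflictSquare n A B i i' j' j := by
  obtain ⟨a, b, c, d, e, f⟩ := h; exact ⟨a, b.symm, d, c, f, e⟩

lemma sqMembers_comm_i (i i' j j' : ℕ) : SqMembers i i' j j' = SqMembers i' i j j' := by
  unfold SqMembers; ext v; simp; tauto

lemma sqMembers_comm_j (i i' j j' : ℕ) : SqMembers i i' j j' = SqMembers i i' j' j := by
  unfold SqMembers; ext v; simp; tauto

lemma swap_bound {Γ : Type*} {n : ℕ} {A B : Fin n → Γ} {I M : Set (ℕ × ℕ)}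
    (hI : IsIndep n A B I) (hIfin : I.Finite)
    (hImax : ∀ J : Set (ℕ × ℕ), IsIndep n A B J → J.ncard ≤ I.ncard)
    (P : Finset (ℕ × ℕ)) (hPv : ∀ w ∈ P, IsVertex n A B w.1 w.2)
    (hPind : ∀ v ∈ P, ∀ w ∈ P, ¬ ConflictAdj n A B v w)
    (hPM : ↑P ⊆ M) :
    P.card ≤ (I ∩ M).ncard +
      {v | v ∈ I ∧ v ∉ M ∧ ∃ w ∈ (↑P : Set (ℕ × ℕ)), ConflictAdj n A B v w}.ncard := by
  set X : Set (ℕ × ℕ) :=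
    {v | v ∈ I ∧ v ∉ M ∧ ∃ w ∈ (↑P : Set (ℕ × ℕ)), ConflictAdj n A B v w} with hX
  have hXI : X ⊆ I := fun v hv => hv.1
  have hXfin : X.Finite := hIfin.subset hXI
  have hXM : ∀ v ∈ X, v ∉ M := fun v hv => hv.2.1
  set J : Set (ℕ × ℕ) := (I \ (M ∪ X)) ∪ ↑P with hJ
  have hJind : IsIndep n A B J := by
    constructor
    · rintro v (⟨hvI, -⟩ | hvP)
      · exact hI.1 v hvI
      · exact hPv v hvP
    · rintro v (⟨hvI, hvM⟩ | hvP) w (⟨hwI, hwM⟩ | hwP)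
      · exact hI.2 v hvI w hwI
      · intro hadj
        exact hvM (Or.inr ⟨hvI, fun h => hvM (Or.inl h), w, hwP, hadj⟩)
      · intro hadj
        exact hwM (Or.inr ⟨hwI, fun h => hwM (Or.inl h), v, hvP, adj_symm hadj⟩)
      · exact hPind v hvP w hwP
  have hdisj : Disjoint (I \ (M ∪ X)) (↑P : Set (ℕ × ℕ)) := by
    rw [Set.disjoint_left]
    rintro v ⟨hvI, hvM⟩ hvP
    exact hvM (Or.inl (hPM hvP))
  have hJcard : J.ncard = (I \ (M ∪ X)).ncard + P.card := by
    rw [hJ, Set.ncard_union_eq hdisj (hIfin.subset Set.diff_subset) P.finite_toSet,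
      Set.ncard_coe_finset]
  have hYsub : (I ∩ M) ∪ X ⊆ I := by
    rintro v (hv | hv); exacts [hv.1, hXI hv]
  have hdiffeq : I \ (M ∪ X) = I \ ((I ∩ M) ∪ X) := by
    ext v
    simp only [Set.mem_diff, Set.mem_union, Set.mem_inter_iff]
    tauto
  have hYcard : ((I ∩ M) ∪ X).ncard = (I ∩ M).ncard + X.ncard := by
    apply Set.ncard_union_eq _ (hIfin.subset Set.inter_subset_left) hXfin
    rw [Set.disjoint_left]
    rintro v ⟨-, hvM⟩ hvX
    exact hXM v hvX hvM
  have hdiffcard : (I \ ((I ∩ M) ∪ X)).ncard = I.ncard - ((I ∩ M) ∪ X).ncard :=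
    Set.ncard_diff hYsub (hIfin.subset hYsub)
  have hYle : ((I ∩ M) ∪ X).ncard ≤ I.ncard :=
    Set.ncard_le_ncard hYsub hIfin
  have hle := hImax J hJind
  rw [hJcard, hdiffeq, hdiffcard] at hle
  omega

def Corner8 (i i' j j' p x y : ℕ) : Prop :=
  (x + 1 = i ∧ y + 1 = j) ∨ (x + 1 = i ∧ y + 1 = j') ∨ (x + 1 = i' ∧ y + 1 = j) ∨
  (x + 1 = i' ∧ y + 1 = j') ∨ (x = i + p ∧ y = j + p) ∨ (x = i + p ∧ y = j' + p) ∨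
  (x = i' + p ∧ y = j + p) ∨ (x = i' + p ∧ y = j' + p)

def AntiC (i i' j j' p x y : ℕ) : Prop :=
  (x + 1 = i ∧ y + 1 = j') ∨ (x + 1 = i' ∧ y + 1 = j) ∨
  (x = i + p ∧ y = j' + p) ∨ (x = i' + p ∧ y = j + p)

def ParC (i i' j j' p x y : ℕ) : Prop :=
  (x + 1 = i ∧ y + 1 = j) ∨ (x + 1 = i' ∧ y + 1 = j') ∨
  (x = i + p ∧ y = j + p) ∨ (x = i' + p ∧ y = j' + p)
set_option maxHeartbeats 2000000 in
lemma core {Γ : Type*} (n : ℕ) (A B : Fin n → Γ)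
    (σ : Equiv.Perm (Fin n)) (hB : B = A ∘ σ)
    (h2 : ∀ c : Γ, {x : Fin n | A x = c}.ncard ≤ 2)
    (i i' j j' p : ℕ) (hp : 1 ≤ p)
    (hilt : i < i') (hjlt : j < j')
    (hser : ∀ q < p, IsConflictSquare n A B (i + q) (i' + q) (j + q) (j' + q))
    (M : Set (ℕ × ℕ))
    (hM : M = ⋃ q ∈ Finset.range p, SqMembers (i + q) (i' + q) (j + q) (j' + q))
    (I : Set (ℕ × ℕ)) (hI : IsIndep n A B I)
    (hImax : ∀ J : Set (ℕ × ℕ), IsIndep n A B J → J.ncard ≤ I.ncard)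
    (hfew : (I ∩ M).ncard < 2 * p) :
    (1 ≤ i ∧ 1 ≤ i' ∧ 1 ≤ j ∧ 1 ≤ j' ∧
      IsVertex n A B (i - 1) (j - 1) ∧ (i - 1, j - 1) ∈ I ∧
      IsVertex n A B (i' - 1) (j' - 1) ∧ (i' - 1, j' - 1) ∈ I ∧
      IsVertex n A B (i' + p) (j + p) ∧ (i' + p, j + p) ∈ I ∧
      IsVertex n A B (i + p) (j' + p) ∧ (i + p, j' + p) ∈ I) ∨
    (1 ≤ i ∧ 1 ≤ i' ∧ 1 ≤ j ∧ 1 ≤ j' ∧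
      IsVertex n A B (i' - 1) (j - 1) ∧ (i' - 1, j - 1) ∈ I ∧
      IsVertex n A B (i - 1) (j' - 1) ∧ (i - 1, j' - 1) ∈ I ∧
      IsVertex n A B (i + p) (j + p) ∧ (i + p, j + p) ∈ I ∧
      IsVertex n A B (i' + p) (j' + p) ∧ (i' + p, j' + p) ∈ I) := by
  have hp0 : 0 < p := hp
  have hn0 : 0 < n := by
    obtain ⟨hi, -, -⟩ := (hser 0 hp0).2.2.1
    omega
  set F := wrapF n hn0 A with hF
  set G := wrapF n hn0 B with hG
  have hVert : ∀ x y : ℕ, IsVertex n A B x y →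
      x + 1 < n ∧ y + 1 < n ∧ F x = G y ∧ F (x + 1) = G (y + 1) := by
    intro x y hv
    obtain ⟨hx, hy, h1, h2'⟩ := hv
    refine ⟨hx, hy, ?_, ?_⟩
    · rw [hF, hG, wrapF_eq n hn0 A x (Nat.lt_of_succ_lt hx),
        wrapF_eq n hn0 B y (Nat.lt_of_succ_lt hy)]
      exact h1
    · rw [hF, hG, wrapF_eq n hn0 A (x + 1) hx, wrapF_eq n hn0 B (y + 1) hy]
      exact h2'
  have hbound : ∀ q ≤ p, i + q < n ∧ i' + q < n ∧ j + q < n ∧ j' + q < n := by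
    intro q hq
    rcases Nat.lt_or_ge q p with h | h
    · obtain ⟨-, -, v1, -, -, v4⟩ := hser q h
      obtain ⟨a1, b1, -, -⟩ := v1
      obtain ⟨a4, b4, -, -⟩ := v4
      exact ⟨by omega, by omega, by omega, by omega⟩
    · have hqp : p = q := by omega
      subst hqp
      obtain ⟨-, -, v1, -, -, v4⟩ := hser (p - 1) (by omega)
      obtain ⟨a1, b1, -, -⟩ := v1
      obtain ⟨a4, b4, -, -⟩ := v4
      exact ⟨by omega, by omega, by omega, by omega⟩
  have hFv : ∀ q ≤ p, F (i + q) = G (j + q) ∧ F (i' + q) = G (j + q) ∧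
      F (i + q) = G (j' + q) ∧ F (i' + q) = G (j' + q) := by
    intro q hq
    rcases Nat.lt_or_ge q p with h | h
    · obtain ⟨-, -, v1, v2, v3, v4⟩ := hser q h
      exact ⟨(hVert _ _ v1).2.2.1, (hVert _ _ v3).2.2.1,
        (hVert _ _ v2).2.2.1, (hVert _ _ v4).2.2.1⟩
    · have hqp : p = q := by omega
      subst hqp
      obtain ⟨-, -, v1, v2, v3, v4⟩ := hser (p - 1) (by omega)
      have e1 := (hVert _ _ v1).2.2.2
      have e2 := (hVert _ _ v3).2.2.2
      have e3 := (hVert _ _ v2).2.2.2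
      have e4 := (hVert _ _ v4).2.2.2
      have c1 : i + (p - 1) + 1 = i + p := by omega
      have c2 : i' + (p - 1) + 1 = i' + p := by omega
      have c3 : j + (p - 1) + 1 = j + p := by omega
      have c4 : j' + (p - 1) + 1 = j' + p := by omega
      rw [c1, c3] at e1; rw [c2, c3] at e2; rw [c1, c4] at e3; rw [c2, c4] at e4
      exact ⟨e1, e2, e3, e4⟩
  have h3occ : ∀ x1 x2 x3 : Fin n, x1 ≠ x2 → x1 ≠ x3 → x2 ≠ x3 →
      A x1 = A x2 → A x1 = A x3 → False := by
    intro x1 x2 x3 h12 h13 h23 e2 e3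
    have hsub : ({x1, x2, x3} : Set (Fin n)) ⊆ {x : Fin n | A x = A x1} := by
      rintro z (rfl | rfl | rfl)
      · rfl
      · exact e2.symm
      · exact e3.symm
    have hc : ({x1, x2, x3} : Set (Fin n)).ncard = 3 := by
      rw [Set.ncard_insert_of_notMem (by simp [h12, h13]),
        Set.ncard_insert_of_notMem (by simp [h23]), Set.ncard_singleton]
    have hle := Set.ncard_le_ncard hsub (Set.toFinite _)
    have := h2 (A x1)
    omega
  have hA2 : ∀ q ≤ p, ∀ x, x < n → F x = F (i + q) → x = i + q ∨ x = i' + q := by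
    intro q hq x hx he
    by_contra hcon
    push_neg at hcon
    obtain ⟨hb1, hb2, -, -⟩ := hbound q hq
    apply h3occ ⟨x, hx⟩ ⟨i + q, hb1⟩ ⟨i' + q, hb2⟩
    · intro h; exact hcon.1 (congrArg Fin.val h)
    · intro h; exact hcon.2 (congrArg Fin.val h)
    · intro h
      have := congrArg Fin.val h
      simp only at this
      omega
    · rw [hF] at he
      rw [wrapF_eq n hn0 A x hx, wrapF_eq n hn0 A (i + q) hb1] at he
      exact he
    · rw [hF] at he
      rw [wrapF_eq n hn0 A x hx, wrapF_eq n hn0 A (i + q) hb1] at he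
      have heq : F (i + q) = F (i' + q) := ((hFv q hq).2.1.trans (hFv q hq).1.symm).symm
      rw [hF] at heq
      rw [wrapF_eq n hn0 A (i + q) hb1, wrapF_eq n hn0 A (i' + q) hb2] at heq
      exact he.trans heq
  have hB2 : ∀ q ≤ p, ∀ y, y < n → G y = F (i + q) → y = j + q ∨ y = j' + q := by
    intro q hq y hy he
    obtain ⟨hb1, hb2, hb3, hb4⟩ := hbound q hq
    have hGA : ∀ z, ∀ hz : z < n, G z = A (σ ⟨z, hz⟩) := by
      intro z hz
      rw [hG, wrapF_eq n hn0 B z hz, hB]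
      rfl
    have hFA : ∀ z, ∀ hz : z < n, F z = A ⟨z, hz⟩ := by
      intro z hz
      rw [hF, wrapF_eq n hn0 A z hz]
    have key : ∀ z, ∀ hz : z < n, G z = F (i + q) →
        ((σ ⟨z, hz⟩ : Fin n) : ℕ) = i + q ∨ ((σ ⟨z, hz⟩ : Fin n) : ℕ) = i' + q := by
      intro z hz hze
      apply hA2 q hq _ (σ ⟨z, hz⟩).isLt
      rw [hFA _ (σ ⟨z, hz⟩).isLt, Fin.eta, ← hGA z hz]
      exact hze
    have h1 := key y hy he
    have h2j := key (j + q) hb3 (hFv q hq).1.symm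
    have h3j := key (j' + q) hb4 (hFv q hq).2.2.1.symm
    have hnej : ((σ ⟨j + q, hb3⟩ : Fin n) : ℕ) ≠ ((σ ⟨j' + q, hb4⟩ : Fin n) : ℕ) := by
      intro h
      have h' := σ.injective (Fin.ext h)
      have := congrArg Fin.val h'
      simp only at this
      omega
    have hv : ((σ ⟨y, hy⟩ : Fin n) : ℕ) = ((σ ⟨j + q, hb3⟩ : Fin n) : ℕ) ∨
        ((σ ⟨y, hy⟩ : Fin n) : ℕ) = ((σ ⟨j' + q, hb4⟩ : Fin n) : ℕ) := by omega
    rcases hv with h | h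
    · left
      have := σ.injective (Fin.ext h)
      have := congrArg Fin.val this
      simpa using this
    · right
      have := σ.injective (Fin.ext h)
      have := congrArg Fin.val this
      simpa using this
  -- the gap inequalities
  have hii2 : i + p + 1 ≤ i' := by
    by_contra hcon
    set d : ℕ := i' - i with hd
    have hd1 : 1 ≤ d ∧ d ≤ p := by omega
    have e1 : F (i + d) = F (i' + d) := (hFv d hd1.2).1.trans (hFv d hd1.2).2.1.symm
    have e2 : F (i + d) = F (i') := by rw [show i + d = i' by omega]
    have e3 : F (i') = F i := by
      have := (hFv 0 (by omega)).1.trans (hFv 0 (by omega)).2.1.symm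
      simpa using this.symm
    have e4 : F (i' + d) = F (i + 0) := by
      rw [← e1, e2, e3]; norm_num
    have := hA2 0 (by omega) (i' + d) (by have := (hbound d hd1.2).2.1; omega) e4
    omega
  have hjj2 : j + p + 1 ≤ j' := by
    by_contra hcon
    set d : ℕ := j' - j with hd
    have hd1 : 1 ≤ d ∧ d ≤ p := by omega
    have e1 : G (j + d) = G (j' + d) := (hFv d hd1.2).1.symm.trans (hFv d hd1.2).2.2.1
    have e2 : G (j + d) = G (j') := by rw [show j + d = j' by omega]
    have e3 : G (j') = F (i + 0) := by
      have := (hFv 0 (by omega)).2.2.1.symm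
      simpa using this
    have e4 : G (j' + d) = F (i + 0) := by rw [← e1, e2, e3]
    have := hB2 0 (by omega) (j' + d) (by have := (hbound d hd1.2).2.2.2; omega) e4
    omega
  -- confinement lemmas
  have hRow : ∀ x y q, q ≤ p → IsVertex n A B x y → (x = i + q ∨ x = i' + q) →
      y = j + q ∨ y = j' + q := by
    intro x y q hq hv hx
    obtain ⟨hx1, hy1, hl1, -⟩ := hVert x y hv
    apply hB2 q hq y (by omega)
    rcases hx with rfl | rfl
    · exact hl1.symm
    · exact hl1.symm.trans ((hFv q hq).2.1.trans (hFv q hq).1.symm)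
  have hRow' : ∀ x y q, q ≤ p → IsVertex n A B x y → (x + 1 = i + q ∨ x + 1 = i' + q) →
      y + 1 = j + q ∨ y + 1 = j' + q := by
    intro x y q hq hv hx
    obtain ⟨hx1, hy1, -, hl2⟩ := hVert x y hv
    apply hB2 q hq (y + 1) (by omega)
    rcases hx with hx | hx
    · rw [hx] at hl2; exact hl2.symm
    · rw [hx] at hl2
      exact hl2.symm.trans ((hFv q hq).2.1.trans (hFv q hq).1.symm)
  have hCol : ∀ x y q, q ≤ p → IsVertex n A B x y → (y = j + q ∨ y = j' + q) →
      x = i + q ∨ x = i' + q := by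
    intro x y q hq hv hy
    obtain ⟨hx1, hy1, hl1, -⟩ := hVert x y hv
    apply hA2 q hq x (by omega)
    rcases hy with rfl | rfl
    · exact hl1.trans (hFv q hq).1.symm
    · exact hl1.trans (hFv q hq).2.2.1.symm
  have hCol' : ∀ x y q, q ≤ p → IsVertex n A B x y → (y + 1 = j + q ∨ y + 1 = j' + q) →
      x + 1 = i + q ∨ x + 1 = i' + q := by
    intro x y q hq hv hy
    obtain ⟨hx1, hy1, -, hl2⟩ := hVert x y hv
    apply hA2 q hq (x + 1) (by omega)
    rcases hy with hy | hy
    · rw [hy] at hl2; exact hl2.trans (hFv q hq).1.symm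
    · rw [hy] at hl2; exact hl2.trans (hFv q hq).2.2.1.symm
  have hMmem : ∀ x y : ℕ, (x, y) ∈ M ↔
      ∃ q, q < p ∧ (x = i + q ∨ x = i' + q) ∧ (y = j + q ∨ y = j' + q) := by
    intro x y
    rw [hM]
    simp only [Set.mem_iUnion, Finset.mem_range, SqMembers, Set.mem_insert_iff,
      Set.mem_singleton_iff, Prod.mk.injEq]
    constructor
    · rintro ⟨q, hq, h⟩
      exact ⟨q, hq, by tauto⟩
    · rintro ⟨q, hq, h1, h2⟩
      exact ⟨q, hq, by tauto⟩
  have hVMr : ∀ x y, IsVertex n A B x y → ∀ q, q < p → (x = i + q ∨ x = i' + q) →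
      (x, y) ∈ M := by
    intro x y hv q hq hx
    exact (hMmem x y).mpr ⟨q, hq, hx, hRow x y q (le_of_lt hq) hv hx⟩
  have hVMc : ∀ x y, IsVertex n A B x y → ∀ q, q < p → (y = j + q ∨ y = j' + q) →
      (x, y) ∈ M := by
    intro x y hv q hq hy
    exact (hMmem x y).mpr ⟨q, hq, hCol x y q (le_of_lt hq) hv hy, hy⟩
  have hIfin : I.Finite := by
    apply Set.Finite.subset (Finset.range n ×ˢ Finset.range n).finite_toSet
    intro v hv
    obtain ⟨h1', h2', -, -⟩ := hI.1 v hv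
    simp only [Finset.coe_product, Set.mem_prod, Finset.mem_coe, Finset.mem_range]
    omega
  -- the two patterns
  have hinj1 : Function.Injective fun q : ℕ => (i + q, j + q) := by
    intro a b h
    rw [Prod.mk.injEq] at h
    omega
  have hinj2 : Function.Injective fun q : ℕ => (i' + q, j' + q) := by
    intro a b h
    rw [Prod.mk.injEq] at h
    omega
  have hinj3 : Function.Injective fun q : ℕ => (i + q, j' + q) := by
    intro a b h
    rw [Prod.mk.injEq] at h
    omega
  have hinj4 : Function.Injective fun q : ℕ => (i' + q, j + q) := by
    intro a b h
    rw [Prod.mk.injEq] at h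
    omega
  set P1 : Finset (ℕ × ℕ) := ((Finset.range p).image fun q => (i + q, j + q)) ∪
      ((Finset.range p).image fun q => (i' + q, j' + q)) with hP1def
  set P2 : Finset (ℕ × ℕ) := ((Finset.range p).image fun q => (i + q, j' + q)) ∪
      ((Finset.range p).image fun q => (i' + q, j + q)) with hP2def
  have hP1mem : ∀ w : ℕ × ℕ, w ∈ P1 ↔
      ((∃ q, q < p ∧ (i + q, j + q) = w) ∨ (∃ q, q < p ∧ (i' + q, j' + q) = w)) := by
    intro w
    rw [hP1def]
    simp only [Finset.mem_union, Finset.mem_image, Finset.mem_range]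
  have hP2mem : ∀ w : ℕ × ℕ, w ∈ P2 ↔
      ((∃ q, q < p ∧ (i + q, j' + q) = w) ∨ (∃ q, q < p ∧ (i' + q, j + q) = w)) := by
    intro w
    rw [hP2def]
    simp only [Finset.mem_union, Finset.mem_image, Finset.mem_range]
  have hP1card : P1.card = 2 * p := by
    rw [hP1def, Finset.card_union_of_disjoint, Finset.card_image_of_injective _ hinj1,
      Finset.card_image_of_injective _ hinj2, Finset.card_range]
    · ring
    · rw [Finset.disjoint_left]
      intro w hw1 hw2
      simp only [Finset.mem_image, Finset.mem_range] at hw1 hw2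
      obtain ⟨q, hq, rfl⟩ := hw1
      obtain ⟨r, hr, heq⟩ := hw2
      rw [Prod.mk.injEq] at heq
      omega
  have hP2card : P2.card = 2 * p := by
    rw [hP2def, Finset.card_union_of_disjoint, Finset.card_image_of_injective _ hinj3,
      Finset.card_image_of_injective _ hinj4, Finset.card_range]
    · ring
    · rw [Finset.disjoint_left]
      intro w hw1 hw2
      simp only [Finset.mem_image, Finset.mem_range] at hw1 hw2
      obtain ⟨q, hq, rfl⟩ := hw1
      obtain ⟨r, hr, heq⟩ := hw2
      rw [Prod.mk.injEq] at heq
      omega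
  have hP1v : ∀ w ∈ P1, IsVertex n A B w.1 w.2 := by
    intro w hw
    rcases (hP1mem w).mp hw with ⟨q, hq, rfl⟩ | ⟨q, hq, rfl⟩
    · exact (hser q hq).2.2.1
    · exact (hser q hq).2.2.2.2.2
  have hP2v : ∀ w ∈ P2, IsVertex n A B w.1 w.2 := by
    intro w hw
    rcases (hP2mem w).mp hw with ⟨q, hq, rfl⟩ | ⟨q, hq, rfl⟩
    · exact (hser q hq).2.2.2.1
    · exact (hser q hq).2.2.2.2.1
  have hP1M : (↑P1 : Set (ℕ × ℕ)) ⊆ M := by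
    intro w hw
    rcases (hP1mem w).mp hw with ⟨q, hq, rfl⟩ | ⟨q, hq, rfl⟩
    · exact (hMmem _ _).mpr ⟨q, hq, Or.inl rfl, Or.inl rfl⟩
    · exact (hMmem _ _).mpr ⟨q, hq, Or.inr rfl, Or.inr rfl⟩
  have hP2M : (↑P2 : Set (ℕ × ℕ)) ⊆ M := by
    intro w hw
    rcases (hP2mem w).mp hw with ⟨q, hq, rfl⟩ | ⟨q, hq, rfl⟩
    · exact (hMmem _ _).mpr ⟨q, hq, Or.inl rfl, Or.inr rfl⟩
    · exact (hMmem _ _).mpr ⟨q, hq, Or.inr rfl, Or.inl rfl⟩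
  have hP1ind : ∀ v ∈ P1, ∀ w ∈ P1, ¬ ConflictAdj n A B v w := by
    intro v hv w hw hadj
    obtain ⟨-, -, hne, s, hs, hd⟩ := hadj
    rcases (hP1mem v).mp hv with ⟨q, hq, rfl⟩ | ⟨q, hq, rfl⟩ <;>
      rcases (hP1mem w).mp hw with ⟨r, hr, rfl⟩ | ⟨r, hr, rfl⟩ <;>
      dsimp only at hd <;>
      rcases hs with rfl | rfl | rfl <;>
      rcases hd with ⟨h1', h2'⟩ | ⟨h1', h2'⟩ <;>
      omega
  have hP2ind : ∀ v ∈ P2, ∀ w ∈ P2, ¬ ConflictAdj n A B v w := by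
    intro v hv w hw hadj
    obtain ⟨-, -, hne, s, hs, hd⟩ := hadj
    rcases (hP2mem v).mp hv with ⟨q, hq, rfl⟩ | ⟨q, hq, rfl⟩ <;>
      rcases (hP2mem w).mp hw with ⟨r, hr, rfl⟩ | ⟨r, hr, rfl⟩ <;>
      dsimp only at hd <;>
      rcases hs with rfl | rfl | rfl <;>
      rcases hd with ⟨h1', h2'⟩ | ⟨h1', h2'⟩ <;>
      omega
  have hbX1 := swap_bound hI hIfin hImax P1 hP1v hP1ind hP1M
  have hbX2 := swap_bound hI hIfin hImax P2 hP2v hP2ind hP2M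
  rw [hP1card] at hbX1
  rw [hP2card] at hbX2
  set X1 : Set (ℕ × ℕ) :=
    {v | v ∈ I ∧ v ∉ M ∧ ∃ w ∈ (↑P1 : Set (ℕ × ℕ)), ConflictAdj n A B v w} with hX1def
  set X2 : Set (ℕ × ℕ) :=
    {v | v ∈ I ∧ v ∉ M ∧ ∃ w ∈ (↑P2 : Set (ℕ × ℕ)), ConflictAdj n A B v w} with hX2def
  have hconv : ∀ x y, IsVertex n A B x y →
      (x + 1 = i ∨ x + 1 = i' ∨ x = i + p ∨ x = i' + p ∨
        y + 1 = j ∨ y + 1 = j' ∨ y = j + p ∨ y = j' + p) →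
      Corner8 i i' j j' p x y := by
    intro x y hv hside
    rcases hside with h | h | h | h | h | h | h | h
    · have hh := hRow' x y 0 (by omega) hv (by omega)
      unfold Corner8; omega
    · have hh := hRow' x y 0 (by omega) hv (by omega)
      unfold Corner8; omega
    · have hh := hRow x y p le_rfl hv (by omega)
      unfold Corner8; omega
    · have hh := hRow x y p le_rfl hv (by omega)
      unfold Corner8; omega
    · have hh := hCol' x y 0 (by omega) hv (by omega)
      unfold Corner8; omega
    · have hh := hCol' x y 0 (by omega) hv (by omega)
      unfold Corner8; omega
    · have hh := hCol x y p le_rfl hv (by omega)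
      unfold Corner8; omega
    · have hh := hCol x y p le_rfl hv (by omega)
      unfold Corner8; omega
  have hcorner8 : ∀ x y, (x, y) ∈ I → (x, y) ∉ M → ∀ q, q < p → ∀ x' y',
      (x' = i + q ∨ x' = i' + q) → (y' = j + q ∨ y' = j' + q) →
      ConflictAdj n A B (x, y) (x', y') → Corner8 i i' j j' p x y := by
    intro x y hvI hvM q hq x' y' hx' hy' hadj
    have hv : IsVertex n A B x y := hI.1 _ hvI
    have e1 : x ≠ i + q ∧ x ≠ i' + q := by
      constructor <;> intro hh <;> exact hvM (hVMr x y hv q hq (by omega))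
    have e2 : x ≠ i + (q - 1) ∧ x ≠ i' + (q - 1) := by
      constructor <;> intro hh <;> exact hvM (hVMr x y hv (q - 1) (by omega) (by omega))
    have e3 : q + 1 < p → x ≠ i + (q + 1) ∧ x ≠ i' + (q + 1) := by
      intro hlt
      constructor <;> intro hh <;> exact hvM (hVMr x y hv (q + 1) hlt (by omega))
    have f1 : y ≠ j + q ∧ y ≠ j' + q := by
      constructor <;> intro hh <;> exact hvM (hVMc x y hv q hq (by omega))
    have f2 : y ≠ j + (q - 1) ∧ y ≠ j' + (q - 1) := by
      constructor <;> intro hh <;> exact hvM (hVMc x y hv (q - 1) (by omega) (by omega))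
    have f3 : q + 1 < p → y ≠ j + (q + 1) ∧ y ≠ j' + (q + 1) := by
      intro hlt
      constructor <;> intro hh <;> exact hvM (hVMc x y hv (q + 1) hlt (by omega))
    obtain ⟨-, -, hne, s, hs, hd⟩ := hadj
    dsimp only at hd
    apply hconv x y hv
    rcases hx' with rfl | rfl <;> rcases hy' with rfl | rfl <;>
      rcases hs with rfl | rfl | rfl <;> rcases hd with ⟨h1', h2'⟩ | ⟨h1', h2'⟩ <;> omega
  have hclassify1 : ∀ x y, (x, y) ∈ I → (x, y) ∉ M → ∀ w ∈ (↑P1 : Set (ℕ × ℕ)),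
      ConflictAdj n A B (x, y) w → AntiC i i' j j' p x y := by
    intro x y hvI hvM w hw hadj
    have hv : IsVertex n A B x y := hI.1 _ hvI
    rcases (hP1mem w).mp (Finset.mem_coe.mp hw) with ⟨q, hq, rfl⟩ | ⟨q, hq, rfl⟩
    · have hc8 := hcorner8 x y hvI hvM q hq (i + q) (j + q) (Or.inl rfl) (Or.inl rfl) hadj
      obtain ⟨-, -, hne, s, hs, hd⟩ := hadj
      dsimp only at hd
      unfold Corner8 at hc8
      unfold AntiC
      rcases hc8 with h | h | h | h | h | h | h | h
      · exfalso
        rcases hs with rfl | rfl | rfl <;> rcases hd with ⟨h1', h2'⟩ | ⟨h1', h2'⟩ <;> omega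
      · omega
      · omega
      · exfalso
        by_cases ha0 : i' = i + p + 1
        · have hy3 := hRow x y p le_rfl hv (by omega)
          rcases hs with rfl | rfl | rfl <;> rcases hd with ⟨h1', h2'⟩ | ⟨h1', h2'⟩ <;> omega
        · by_cases hb0 : j' = j + p + 1
          · have hx3 := hCol x y p le_rfl hv (by omega)
            rcases hs with rfl | rfl | rfl <;> rcases hd with ⟨h1', h2'⟩ | ⟨h1', h2'⟩ <;> omega
          · rcases hs with rfl | rfl | rfl <;> rcases hd with ⟨h1', h2'⟩ | ⟨h1', h2'⟩ <;> omega
      · exfalso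
        rcases hs with rfl | rfl | rfl <;> rcases hd with ⟨h1', h2'⟩ | ⟨h1', h2'⟩ <;> omega
      · omega
      · omega
      · exfalso
        rcases hs with rfl | rfl | rfl <;> rcases hd with ⟨h1', h2'⟩ | ⟨h1', h2'⟩ <;> omega
    · have hc8 := hcorner8 x y hvI hvM q hq (i' + q) (j' + q) (Or.inr rfl) (Or.inr rfl) hadj
      obtain ⟨-, -, hne, s, hs, hd⟩ := hadj
      dsimp only at hd
      unfold Corner8 at hc8
      unfold AntiC
      rcases hc8 with h | h | h | h | h | h | h | h
      · exfalso
        rcases hs with rfl | rfl | rfl <;> rcases hd with ⟨h1', h2'⟩ | ⟨h1', h2'⟩ <;> omega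
      · omega
      · omega
      · exfalso
        rcases hs with rfl | rfl | rfl <;> rcases hd with ⟨h1', h2'⟩ | ⟨h1', h2'⟩ <;> omega
      · exfalso
        by_cases ha0 : i' = i + p + 1
        · have hy3 := hRow' x y 0 (by omega) hv (by omega)
          rcases hs with rfl | rfl | rfl <;> rcases hd with ⟨h1', h2'⟩ | ⟨h1', h2'⟩ <;> omega
        · by_cases hb0 : j' = j + p + 1
          · have hx3 := hCol' x y 0 (by omega) hv (by omega)
            rcases hs with rfl | rfl | rfl <;> rcases hd with ⟨h1', h2'⟩ | ⟨h1', h2'⟩ <;> omega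
          · rcases hs with rfl | rfl | rfl <;> rcases hd with ⟨h1', h2'⟩ | ⟨h1', h2'⟩ <;> omega
      · omega
      · omega
      · exfalso
        rcases hs with rfl | rfl | rfl <;> rcases hd with ⟨h1', h2'⟩ | ⟨h1', h2'⟩ <;> omega
  have hclassify2 : ∀ x y, (x, y) ∈ I → (x, y) ∉ M → ∀ w ∈ (↑P2 : Set (ℕ × ℕ)),
      ConflictAdj n A B (x, y) w → ParC i i' j j' p x y := by
    intro x y hvI hvM w hw hadj
    have hv : IsVertex n A B x y := hI.1 _ hvI
    rcases (hP2mem w).mp (Finset.mem_coe.mp hw) with ⟨q, hq, rfl⟩ | ⟨q, hq, rfl⟩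
    · have hc8 := hcorner8 x y hvI hvM q hq (i + q) (j' + q) (Or.inl rfl) (Or.inr rfl) hadj
      obtain ⟨-, -, hne, s, hs, hd⟩ := hadj
      dsimp only at hd
      unfold Corner8 at hc8
      unfold ParC
      rcases hc8 with h | h | h | h | h | h | h | h
      · omega
      · exfalso
        rcases hs with rfl | rfl | rfl <;> rcases hd with ⟨h1', h2'⟩ | ⟨h1', h2'⟩ <;> omega
      · exfalso
        by_cases ha0 : i' = i + p + 1
        · have hy3 := hRow x y p le_rfl hv (by omega)
          rcases hs with rfl | rfl | rfl <;> rcases hd with ⟨h1', h2'⟩ | ⟨h1', h2'⟩ <;> omega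
        · rcases hs with rfl | rfl | rfl <;> rcases hd with ⟨h1', h2'⟩ | ⟨h1', h2'⟩ <;> omega
      · omega
      · omega
      · exfalso
        rcases hs with rfl | rfl | rfl <;> rcases hd with ⟨h1', h2'⟩ | ⟨h1', h2'⟩ <;> omega
      · exfalso
        by_cases hb0 : j' = j + p + 1
        · have hx3 := hCol' x y 0 (by omega) hv (by omega)
          rcases hs with rfl | rfl | rfl <;> rcases hd with ⟨h1', h2'⟩ | ⟨h1', h2'⟩ <;> omega
        · rcases hs with rfl | rfl | rfl <;> rcases hd with ⟨h1', h2'⟩ | ⟨h1', h2'⟩ <;> omega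
      · omega
    · have hc8 := hcorner8 x y hvI hvM q hq (i' + q) (j + q) (Or.inr rfl) (Or.inl rfl) hadj
      obtain ⟨-, -, hne, s, hs, hd⟩ := hadj
      dsimp only at hd
      unfold Corner8 at hc8
      unfold ParC
      rcases hc8 with h | h | h | h | h | h | h | h
      · omega
      · exfalso
        by_cases hb0 : j' = j + p + 1
        · have hx3 := hCol x y p le_rfl hv (by omega)
          rcases hs with rfl | rfl | rfl <;> rcases hd with ⟨h1', h2'⟩ | ⟨h1', h2'⟩ <;> omega
        · rcases hs with rfl | rfl | rfl <;> rcases hd with ⟨h1', h2'⟩ | ⟨h1', h2'⟩ <;> omega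
      · exfalso
        rcases hs with rfl | rfl | rfl <;> rcases hd with ⟨h1', h2'⟩ | ⟨h1', h2'⟩ <;> omega
      · omega
      · omega
      · exfalso
        by_cases ha0 : i' = i + p + 1
        · have hy3 := hRow' x y 0 (by omega) hv (by omega)
          rcases hs with rfl | rfl | rfl <;> rcases hd with ⟨h1', h2'⟩ | ⟨h1', h2'⟩ <;> omega
        · rcases hs with rfl | rfl | rfl <;> rcases hd with ⟨h1', h2'⟩ | ⟨h1', h2'⟩ <;> omega
      · exfalso
        rcases hs with rfl | rfl | rfl <;> rcases hd with ⟨h1', h2'⟩ | ⟨h1', h2'⟩ <;> omega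
      · omega
  have hX1I : ∀ v ∈ X1, v ∈ I := by
    intro v hv
    rw [hX1def] at hv
    exact hv.1
  have hX2I : ∀ v ∈ X2, v ∈ I := by
    intro v hv
    rw [hX2def] at hv
    exact hv.1
  have hX1fin : X1.Finite := hIfin.subset hX1I
  have hX2fin : X2.Finite := hIfin.subset hX2I
  have hX1c : ∀ v ∈ X1, AntiC i i' j j' p v.1 v.2 := by
    intro v hv
    rw [hX1def] at hv
    obtain ⟨hvI, hvM, w, hwP, hadj⟩ := hv
    exact hclassify1 v.1 v.2 (by rwa [Prod.mk.eta]) (by rwa [Prod.mk.eta]) w hwP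
      (by rwa [Prod.mk.eta])
  have hX2c : ∀ v ∈ X2, ParC i i' j j' p v.1 v.2 := by
    intro v hv
    rw [hX2def] at hv
    obtain ⟨hvI, hvM, w, hwP, hadj⟩ := hv
    exact hclassify2 v.1 v.2 (by rwa [Prod.mk.eta]) (by rwa [Prod.mk.eta]) w hwP
      (by rwa [Prod.mk.eta])
  have hchain : ∀ u v v' : ℕ, (u = i ∨ u = i') → ((v = j ∧ v' = j') ∨ (v = j' ∧ v' = j)) →
      (∀ r, r < p → ∃ y, (u + r, y) ∈ I) → ((u, v') ∉ I) →
      ∀ q, q < p → (u + q, v + q) ∈ I := by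
    intro u v v' hu hv hall hbl q
    induction q with
    | zero =>
      intro hq
      obtain ⟨y, hy⟩ := hall 0 hp0
      have hvert : IsVertex n A B (u + 0) y := hI.1 _ hy
      have hy2 := hRow (u + 0) y 0 (by omega) hvert (by omega)
      rcases hv with ⟨rfl, rfl⟩ | ⟨rfl, rfl⟩
      · rcases hy2 with h | h
        · rwa [h] at hy
        · exact absurd (by rwa [show y = v' from by omega,
            show u + 0 = u from by omega] at hy) hbl
      · rcases hy2 with h | h
        · exact absurd (by rwa [show y = v' from by omega,
            show u + 0 = u from by omega] at hy) hbl
        · rwa [h] at hy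
    | succ q ih =>
      intro hq
      have hprev := ih (by omega)
      obtain ⟨y, hy⟩ := hall (q + 1) hq
      have hvert : IsVertex n A B (u + (q + 1)) y := hI.1 _ hy
      have hy2 := hRow (u + (q + 1)) y (q + 1) (by omega) hvert (by omega)
      have hstep : y ≠ v' + (q + 1) := by
        intro hcon
        apply hI.2 _ hprev _ hy
        apply adj_mk (hI.1 _ hprev) hvert 1 (by norm_num)
        rcases hv with ⟨rfl, rfl⟩ | ⟨rfl, rfl⟩
        · exact Or.inl ⟨by omega, by omega⟩
        · exact Or.inl ⟨by omega, by omega⟩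
      rcases hv with ⟨rfl, rfl⟩ | ⟨rfl, rfl⟩ <;> rcases hy2 with h | h <;>
        first
          | (rwa [h] at hy)
          | (exact absurd h hstep)
  have hcount : ∀ q1 q2, q1 < p → q2 < p → (∀ y, (i + q1, y) ∉ I) →
      (∀ y, (i' + q2, y) ∉ I) → (I ∩ M).ncard + 2 ≤ 2 * p := by
    intro q1 q2 hq1 hq2 hm1 hm2
    have hinjr1 : Function.Injective fun q : ℕ => i + q := by
      intro a b h
      simp only at h
      omega
    have hinjr2 : Function.Injective fun q : ℕ => i' + q := by
      intro a b h
      simp only at h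
      omega
    have hdisjR : Disjoint ((Finset.range p).image fun q => i + q)
        ((Finset.range p).image fun q => i' + q) := by
      rw [Finset.disjoint_left]
      intro a ha hb
      simp only [Finset.mem_image, Finset.mem_range] at ha hb
      obtain ⟨q, hqq, rfl⟩ := ha
      obtain ⟨r, hr, h⟩ := hb
      omega
    set R0 : Finset ℕ := ((Finset.range p).image fun q => i + q) ∪
        ((Finset.range p).image fun q => i' + q) with hR0
    have hR0card : R0.card = 2 * p := by
      rw [hR0, Finset.card_union_of_disjoint hdisjR,
        Finset.card_image_of_injective _ hinjr1,
        Finset.card_image_of_injective _ hinjr2, Finset.card_range]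
      ring
    have hsubR : ({i + q1, i' + q2} : Finset ℕ) ⊆ R0 := by
      intro a ha
      simp only [Finset.mem_insert, Finset.mem_singleton] at ha
      rw [hR0]
      simp only [Finset.mem_union, Finset.mem_image, Finset.mem_range]
      rcases ha with rfl | rfl
      · exact Or.inl ⟨q1, hq1, rfl⟩
      · exact Or.inr ⟨q2, hq2, rfl⟩
    have hpaircard : ({i + q1, i' + q2} : Finset ℕ).card = 2 := by
      rw [Finset.card_insert_of_notMem (by simp; omega), Finset.card_singleton]
    set R : Finset ℕ := R0 \ {i + q1, i' + q2} with hR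
    have hRcard : R.card = 2 * p - 2 := by
      rw [hR, Finset.card_sdiff_of_subset hsubR, hR0card, hpaircard]
    have hinj : Set.InjOn Prod.fst (I ∩ M) := by
      intro v hv w hw hfe
      by_contra hne
      apply hI.2 v hv.1 w hw.1
      have hsne : v.2 ≠ w.2 := by
        intro h
        exact hne (Prod.ext_iff.mpr ⟨hfe, h⟩)
      refine ⟨hI.1 v hv.1, hI.1 w hw.1, hne, 0, by norm_num, Or.inl ⟨by omega, by omega⟩⟩
    have himg : Prod.fst '' (I ∩ M) ⊆ ↑R := by
      rintro u ⟨v, hv, rfl⟩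
      have hvM : (v.1, v.2) ∈ M := by rw [Prod.mk.eta]; exact hv.2
      obtain ⟨q, hqq, hx, hy⟩ := (hMmem v.1 v.2).mp hvM
      rw [hR, Finset.coe_sdiff]
      refine ⟨?_, ?_⟩
      · rw [hR0]
        simp only [Finset.coe_union, Set.mem_union, Finset.coe_image, Set.mem_image,
          Finset.mem_coe, Finset.mem_range]
        rcases hx with h | h
        · exact Or.inl ⟨q, hqq, h.symm⟩
        · exact Or.inr ⟨q, hqq, h.symm⟩
      · simp only [Finset.coe_insert, Set.mem_insert_iff, Finset.coe_singleton,
          Set.mem_singleton_iff]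
        push_neg
        constructor
        · intro h
          apply hm1 v.2
          rw [← h, Prod.mk.eta]
          exact hv.1
        · intro h
          apply hm2 v.2
          rw [← h, Prod.mk.eta]
          exact hv.1
    have hle := Set.ncard_le_ncard himg R.finite_toSet
    rw [Set.ncard_image_of_injOn hinj, Set.ncard_coe_finset] at hle
    omega
  have scenario2 : ∀ x1 y1, (x1, y1) ∈ I →
      ((x1 + 1 = i ∧ y1 + 1 = j') ∨ (x1 + 1 = i' ∧ y1 + 1 = j)) →
      ∀ x2 y2, (x2, y2) ∈ I →
      ((x2 = i + p ∧ y2 = j + p) ∨ (x2 = i' + p ∧ y2 = j' + p)) →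
      (1 ≤ i ∧ 1 ≤ i' ∧ 1 ≤ j ∧ 1 ≤ j' ∧
        IsVertex n A B (i - 1) (j - 1) ∧ (i - 1, j - 1) ∈ I ∧
        IsVertex n A B (i' - 1) (j' - 1) ∧ (i' - 1, j' - 1) ∈ I ∧
        IsVertex n A B (i' + p) (j + p) ∧ (i' + p, j + p) ∈ I ∧
        IsVertex n A B (i + p) (j' + p) ∧ (i + p, j' + p) ∈ I) ∨
      (1 ≤ i ∧ 1 ≤ i' ∧ 1 ≤ j ∧ 1 ≤ j' ∧
        IsVertex n A B (i' - 1) (j - 1) ∧ (i' - 1, j - 1) ∈ I ∧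
        IsVertex n A B (i - 1) (j' - 1) ∧ (i - 1, j' - 1) ∈ I ∧
        IsVertex n A B (i + p) (j + p) ∧ (i + p, j + p) ∈ I ∧
        IsVertex n A B (i' + p) (j' + p) ∧ (i' + p, j' + p) ∈ I) := by
    intro x1 y1 ha1I ha1f x2 y2 ha2I ha2f
    have hv1 : IsVertex n A B x1 y1 := hI.1 _ ha1I
    have hv2 : IsVertex n A B x2 y2 := hI.1 _ ha2I
    have hblock1 : ∀ u v : ℕ, u = i → v = j → (u, v) ∉ I := by
      intro u v rfl rfl hmem
      apply hI.2 _ ha1I _ hmem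
      rcases ha1f with ⟨e1, e2⟩ | ⟨e1, e2⟩
      · exact adj_mk hv1 (hI.1 _ hmem) 1 (by norm_num) (Or.inl ⟨by omega, by omega⟩)
      · exact adj_mk hv1 (hI.1 _ hmem) 1 (by norm_num) (Or.inr ⟨by omega, by omega⟩)
    have hblock2 : ∀ u v : ℕ, u = i' → v = j' → (u, v) ∉ I := by
      intro u v rfl rfl hmem
      apply hI.2 _ ha1I _ hmem
      rcases ha1f with ⟨e1, e2⟩ | ⟨e1, e2⟩
      · exact adj_mk hv1 (hI.1 _ hmem) 1 (by norm_num) (Or.inr ⟨by omega, by omega⟩)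
      · exact adj_mk hv1 (hI.1 _ hmem) 1 (by norm_num) (Or.inl ⟨by omega, by omega⟩)
    have hblock3 : ∀ u v : ℕ, u + 1 = i + p → v + 1 = j' + p → (u, v) ∉ I := by
      intro u v e3 e4 hmem
      apply hI.2 _ hmem _ ha2I
      rcases ha2f with ⟨e1, e2⟩ | ⟨e1, e2⟩
      · exact adj_mk (hI.1 _ hmem) hv2 1 (by norm_num) (Or.inl ⟨by omega, by omega⟩)
      · exact adj_mk (hI.1 _ hmem) hv2 1 (by norm_num) (Or.inr ⟨by omega, by omega⟩)
    have hblock4 : ∀ u v : ℕ, u + 1 = i' + p → v + 1 = j + p → (u, v) ∉ I := by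
      intro u v e3 e4 hmem
      apply hI.2 _ hmem _ ha2I
      rcases ha2f with ⟨e1, e2⟩ | ⟨e1, e2⟩
      · exact adj_mk (hI.1 _ hmem) hv2 1 (by norm_num) (Or.inr ⟨by omega, by omega⟩)
      · exact adj_mk (hI.1 _ hmem) hv2 1 (by norm_num) (Or.inl ⟨by omega, by omega⟩)
    have hmiss1 : ∃ q, q < p ∧ ∀ y, (i + q, y) ∉ I := by
      by_contra hcon
      push_neg at hcon
      have hch := hchain i j' j (Or.inl rfl) (Or.inr ⟨rfl, rfl⟩) hcon
        (hblock1 i j rfl rfl) (p - 1) (by omega)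
      exact hblock3 (i + (p - 1)) (j' + (p - 1)) (by omega) (by omega) hch
    have hmiss2 : ∃ q, q < p ∧ ∀ y, (i' + q, y) ∉ I := by
      by_contra hcon
      push_neg at hcon
      have hch := hchain i' j j' (Or.inr rfl) (Or.inl ⟨rfl, rfl⟩) hcon
        (hblock2 i' j' rfl rfl) (p - 1) (by omega)
      exact hblock4 (i' + (p - 1)) (j + (p - 1)) (by omega) (by omega) hch
    obtain ⟨q1, hq1, hm1⟩ := hmiss1
    obtain ⟨q2, hq2, hm2⟩ := hmiss2
    have hkk := hcount q1 q2 hq1 hq2 hm1 hm2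
    have h2X1 : 1 < X1.ncard := by omega
    have h2X2 : 1 < X2.ncard := by omega
    have hbot : ∀ v ∈ X1, (v.1 + 1 = i ∧ v.2 + 1 = j') ∨ (v.1 + 1 = i' ∧ v.2 + 1 = j) := by
      intro v hv
      have hvI := hX1I v hv
      have hvv : IsVertex n A B v.1 v.2 := hI.1 _ hvI
      have hc := hX1c v hv
      unfold AntiC at hc
      rcases hc with h | h | h | h
      · exact Or.inl h
      · exact Or.inr h
      · exfalso
        apply hI.2 _ hvI _ ha2I
        rcases ha2f with ⟨e1, e2⟩ | ⟨e1, e2⟩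
        · have hadj := adj_mk hvv hv2 0 (by norm_num) (Or.inl ⟨by omega, by omega⟩)
          rwa [Prod.mk.eta] at hadj
        · have hadj := adj_mk hvv hv2 0 (by norm_num) (Or.inr ⟨by omega, by omega⟩)
          rwa [Prod.mk.eta] at hadj
      · exfalso
        apply hI.2 _ hvI _ ha2I
        rcases ha2f with ⟨e1, e2⟩ | ⟨e1, e2⟩
        · have hadj := adj_mk hvv hv2 0 (by norm_num) (Or.inr ⟨by omega, by omega⟩)
          rwa [Prod.mk.eta] at hadj
        · have hadj := adj_mk hvv hv2 0 (by norm_num) (Or.inl ⟨by omega, by omega⟩)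
          rwa [Prod.mk.eta] at hadj
    have htop : ∀ v ∈ X2, (v.1 = i + p ∧ v.2 = j + p) ∨ (v.1 = i' + p ∧ v.2 = j' + p) := by
      intro v hv
      have hvI := hX2I v hv
      have hvv : IsVertex n A B v.1 v.2 := hI.1 _ hvI
      have hc := hX2c v hv
      unfold ParC at hc
      rcases hc with h | h | h | h
      · exfalso
        apply hI.2 _ hvI _ ha1I
        rcases ha1f with ⟨e1, e2⟩ | ⟨e1, e2⟩
        · have hadj := adj_mk hvv hv1 0 (by norm_num) (Or.inl ⟨by omega, by omega⟩)
          rwa [Prod.mk.eta] at hadj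
        · have hadj := adj_mk hvv hv1 0 (by norm_num) (Or.inr ⟨by omega, by omega⟩)
          rwa [Prod.mk.eta] at hadj
      · exfalso
        apply hI.2 _ hvI _ ha1I
        rcases ha1f with ⟨e1, e2⟩ | ⟨e1, e2⟩
        · have hadj := adj_mk hvv hv1 0 (by norm_num) (Or.inr ⟨by omega, by omega⟩)
          rwa [Prod.mk.eta] at hadj
        · have hadj := adj_mk hvv hv1 0 (by norm_num) (Or.inl ⟨by omega, by omega⟩)
          rwa [Prod.mk.eta] at hadj
      · exact Or.inl h
      · exact Or.inr h
    obtain ⟨a, b, haX, hbX, hab⟩ := (Set.one_lt_ncard_iff hX1fin).mp h2X1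
    have haI := hX1I a haX
    have hbI := hX1I b hbX
    have hmemA : (i - 1, j' - 1) ∈ I ∧ (i' - 1, j - 1) ∈ I ∧
        1 ≤ i ∧ 1 ≤ i' ∧ 1 ≤ j ∧ 1 ≤ j' := by
      have ha' := hbot a haX
      have hb' := hbot b hbX
      rcases ha' with ⟨e1, e2⟩ | ⟨e1, e2⟩ <;> rcases hb' with ⟨e3, e4⟩ | ⟨e3, e4⟩
      · exact absurd (Prod.ext_iff.mpr ⟨by omega, by omega⟩) hab
      · refine ⟨?_, ?_, by omega, by omega, by omega, by omega⟩
        · rw [show (i - 1, j' - 1) = (a.1, a.2) from by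
            rw [Prod.mk.injEq]; exact ⟨by omega, by omega⟩, Prod.mk.eta]
          exact haI
        · rw [show (i' - 1, j - 1) = (b.1, b.2) from by
            rw [Prod.mk.injEq]; exact ⟨by omega, by omega⟩, Prod.mk.eta]
          exact hbI
      · refine ⟨?_, ?_, by omega, by omega, by omega, by omega⟩
        · rw [show (i - 1, j' - 1) = (b.1, b.2) from by
            rw [Prod.mk.injEq]; exact ⟨by omega, by omega⟩, Prod.mk.eta]
          exact hbI
        · rw [show (i' - 1, j - 1) = (a.1, a.2) from by
            rw [Prod.mk.injEq]; exact ⟨by omega, by omega⟩, Prod.mk.eta]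
          exact haI
      · exact absurd (Prod.ext_iff.mpr ⟨by omega, by omega⟩) hab
    obtain ⟨c, d, hcX, hdX, hcd⟩ := (Set.one_lt_ncard_iff hX2fin).mp h2X2
    have hcI := hX2I c hcX
    have hdI := hX2I d hdX
    have hmemB : (i + p, j + p) ∈ I ∧ (i' + p, j' + p) ∈ I := by
      have hc' := htop c hcX
      have hd' := htop d hdX
      rcases hc' with ⟨e1, e2⟩ | ⟨e1, e2⟩ <;> rcases hd' with ⟨e3, e4⟩ | ⟨e3, e4⟩
      · exact absurd (Prod.ext_iff.mpr ⟨by omega, by omega⟩) hcd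
      · constructor
        · rw [show (i + p, j + p) = (c.1, c.2) from by
            rw [Prod.mk.injEq]; exact ⟨by omega, by omega⟩, Prod.mk.eta]
          exact hcI
        · rw [show (i' + p, j' + p) = (d.1, d.2) from by
            rw [Prod.mk.injEq]; exact ⟨by omega, by omega⟩, Prod.mk.eta]
          exact hdI
      · constructor
        · rw [show (i + p, j + p) = (d.1, d.2) from by
            rw [Prod.mk.injEq]; exact ⟨by omega, by omega⟩, Prod.mk.eta]
          exact hdI
        · rw [show (i' + p, j' + p) = (c.1, c.2) from by
            rw [Prod.mk.injEq]; exact ⟨by omega, by omega⟩, Prod.mk.eta]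
          exact hcI
      · exact absurd (Prod.ext_iff.mpr ⟨by omega, by omega⟩) hcd
    exact Or.inr ⟨hmemA.2.2.1, hmemA.2.2.2.1, hmemA.2.2.2.2.1, hmemA.2.2.2.2.2,
      hI.1 _ hmemA.2.1, hmemA.2.1, hI.1 _ hmemA.1, hmemA.1,
      hI.1 _ hmemB.1, hmemB.1, hI.1 _ hmemB.2, hmemB.2⟩
  have scenario1 : ∀ x1 y1, (x1, y1) ∈ I →
      ((x1 = i + p ∧ y1 = j' + p) ∨ (x1 = i' + p ∧ y1 = j + p)) →
      ∀ x2 y2, (x2, y2) ∈ I →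
      ((x2 + 1 = i ∧ y2 + 1 = j) ∨ (x2 + 1 = i' ∧ y2 + 1 = j')) →
      (1 ≤ i ∧ 1 ≤ i' ∧ 1 ≤ j ∧ 1 ≤ j' ∧
        IsVertex n A B (i - 1) (j - 1) ∧ (i - 1, j - 1) ∈ I ∧
        IsVertex n A B (i' - 1) (j' - 1) ∧ (i' - 1, j' - 1) ∈ I ∧
        IsVertex n A B (i' + p) (j + p) ∧ (i' + p, j + p) ∈ I ∧
        IsVertex n A B (i + p) (j' + p) ∧ (i + p, j' + p) ∈ I) ∨
      (1 ≤ i ∧ 1 ≤ i' ∧ 1 ≤ j ∧ 1 ≤ j' ∧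
        IsVertex n A B (i' - 1) (j - 1) ∧ (i' - 1, j - 1) ∈ I ∧
        IsVertex n A B (i - 1) (j' - 1) ∧ (i - 1, j' - 1) ∈ I ∧
        IsVertex n A B (i + p) (j + p) ∧ (i + p, j + p) ∈ I ∧
        IsVertex n A B (i' + p) (j' + p) ∧ (i' + p, j' + p) ∈ I) := by
    intro x1 y1 ha1I ha1f x2 y2 ha2I ha2f
    have hv1 : IsVertex n A B x1 y1 := hI.1 _ ha1I
    have hv2 : IsVertex n A B x2 y2 := hI.1 _ ha2I
    have hblock1 : ∀ u v : ℕ, u = i → v = j' → (u, v) ∉ I := by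
      intro u v rfl rfl hmem
      apply hI.2 _ ha2I _ hmem
      rcases ha2f with ⟨e1, e2⟩ | ⟨e1, e2⟩
      · exact adj_mk hv2 (hI.1 _ hmem) 1 (by norm_num) (Or.inl ⟨by omega, by omega⟩)
      · exact adj_mk hv2 (hI.1 _ hmem) 1 (by norm_num) (Or.inr ⟨by omega, by omega⟩)
    have hblock2 : ∀ u v : ℕ, u = i' → v = j → (u, v) ∉ I := by
      intro u v rfl rfl hmem
      apply hI.2 _ ha2I _ hmem
      rcases ha2f with ⟨e1, e2⟩ | ⟨e1, e2⟩
      · exact adj_mk hv2 (hI.1 _ hmem) 1 (by norm_num) (Or.inr ⟨by omega, by omega⟩)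
      · exact adj_mk hv2 (hI.1 _ hmem) 1 (by norm_num) (Or.inl ⟨by omega, by omega⟩)
    have hblock3 : ∀ u v : ℕ, u + 1 = i + p → v + 1 = j + p → (u, v) ∉ I := by
      intro u v e3 e4 hmem
      apply hI.2 _ hmem _ ha1I
      rcases ha1f with ⟨e1, e2⟩ | ⟨e1, e2⟩
      · exact adj_mk (hI.1 _ hmem) hv1 1 (by norm_num) (Or.inl ⟨by omega, by omega⟩)
      · exact adj_mk (hI.1 _ hmem) hv1 1 (by norm_num) (Or.inr ⟨by omega, by omega⟩)
    have hblock4 : ∀ u v : ℕ, u + 1 = i' + p → v + 1 = j' + p → (u, v) ∉ I := by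
      intro u v e3 e4 hmem
      apply hI.2 _ hmem _ ha1I
      rcases ha1f with ⟨e1, e2⟩ | ⟨e1, e2⟩
      · exact adj_mk (hI.1 _ hmem) hv1 1 (by norm_num) (Or.inr ⟨by omega, by omega⟩)
      · exact adj_mk (hI.1 _ hmem) hv1 1 (by norm_num) (Or.inl ⟨by omega, by omega⟩)
    have hmiss1 : ∃ q, q < p ∧ ∀ y, (i + q, y) ∉ I := by
      by_contra hcon
      push_neg at hcon
      have hch := hchain i j j' (Or.inl rfl) (Or.inl ⟨rfl, rfl⟩) hcon
        (hblock1 i j' rfl rfl) (p - 1) (by omega)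
      exact hblock3 (i + (p - 1)) (j + (p - 1)) (by omega) (by omega) hch
    have hmiss2 : ∃ q, q < p ∧ ∀ y, (i' + q, y) ∉ I := by
      by_contra hcon
      push_neg at hcon
      have hch := hchain i' j' j (Or.inr rfl) (Or.inr ⟨rfl, rfl⟩) hcon
        (hblock2 i' j rfl rfl) (p - 1) (by omega)
      exact hblock4 (i' + (p - 1)) (j' + (p - 1)) (by omega) (by omega) hch
    obtain ⟨q1, hq1, hm1⟩ := hmiss1
    obtain ⟨q2, hq2, hm2⟩ := hmiss2
    have hkk := hcount q1 q2 hq1 hq2 hm1 hm2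
    have h2X1 : 1 < X1.ncard := by omega
    have h2X2 : 1 < X2.ncard := by omega
    have htop : ∀ v ∈ X1, (v.1 = i + p ∧ v.2 = j' + p) ∨ (v.1 = i' + p ∧ v.2 = j + p) := by
      intro v hv
      have hvI := hX1I v hv
      have hvv : IsVertex n A B v.1 v.2 := hI.1 _ hvI
      have hc := hX1c v hv
      unfold AntiC at hc
      rcases hc with h | h | h | h
      · exfalso
        apply hI.2 _ hvI _ ha2I
        rcases ha2f with ⟨e1, e2⟩ | ⟨e1, e2⟩
        · have hadj := adj_mk hvv hv2 0 (by norm_num) (Or.inl ⟨by omega, by omega⟩)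
          rwa [Prod.mk.eta] at hadj
        · have hadj := adj_mk hvv hv2 0 (by norm_num) (Or.inr ⟨by omega, by omega⟩)
          rwa [Prod.mk.eta] at hadj
      · exfalso
        apply hI.2 _ hvI _ ha2I
        rcases ha2f with ⟨e1, e2⟩ | ⟨e1, e2⟩
        · have hadj := adj_mk hvv hv2 0 (by norm_num) (Or.inr ⟨by omega, by omega⟩)
          rwa [Prod.mk.eta] at hadj
        · have hadj := adj_mk hvv hv2 0 (by norm_num) (Or.inl ⟨by omega, by omega⟩)
          rwa [Prod.mk.eta] at hadj
      · exact Or.inl h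
      · exact Or.inr h
    have hbot : ∀ v ∈ X2, (v.1 + 1 = i ∧ v.2 + 1 = j) ∨ (v.1 + 1 = i' ∧ v.2 + 1 = j') := by
      intro v hv
      have hvI := hX2I v hv
      have hvv : IsVertex n A B v.1 v.2 := hI.1 _ hvI
      have hc := hX2c v hv
      unfold ParC at hc
      rcases hc with h | h | h | h
      · exact Or.inl h
      · exact Or.inr h
      · exfalso
        apply hI.2 _ hvI _ ha1I
        rcases ha1f with ⟨e1, e2⟩ | ⟨e1, e2⟩
        · have hadj := adj_mk hvv hv1 0 (by norm_num) (Or.inl ⟨by omega, by omega⟩)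
          rwa [Prod.mk.eta] at hadj
        · have hadj := adj_mk hvv hv1 0 (by norm_num) (Or.inr ⟨by omega, by omega⟩)
          rwa [Prod.mk.eta] at hadj
      · exfalso
        apply hI.2 _ hvI _ ha1I
        rcases ha1f with ⟨e1, e2⟩ | ⟨e1, e2⟩
        · have hadj := adj_mk hvv hv1 0 (by norm_num) (Or.inr ⟨by omega, by omega⟩)
          rwa [Prod.mk.eta] at hadj
        · have hadj := adj_mk hvv hv1 0 (by norm_num) (Or.inl ⟨by omega, by omega⟩)
          rwa [Prod.mk.eta] at hadj
    obtain ⟨a, b, haX, hbX, hab⟩ := (Set.one_lt_ncard_iff hX1fin).mp h2X1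
    have haI := hX1I a haX
    have hbI := hX1I b hbX
    have hmemA : (i' + p, j + p) ∈ I ∧ (i + p, j' + p) ∈ I := by
      have ha' := htop a haX
      have hb' := htop b hbX
      rcases ha' with ⟨e1, e2⟩ | ⟨e1, e2⟩ <;> rcases hb' with ⟨e3, e4⟩ | ⟨e3, e4⟩
      · exact absurd (Prod.ext_iff.mpr ⟨by omega, by omega⟩) hab
      · constructor
        · rw [show (i' + p, j + p) = (b.1, b.2) from by
            rw [Prod.mk.injEq]; exact ⟨by omega, by omega⟩, Prod.mk.eta]
          exact hbI
        · rw [show (i + p, j' + p) = (a.1, a.2) from by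
            rw [Prod.mk.injEq]; exact ⟨by omega, by omega⟩, Prod.mk.eta]
          exact haI
      · constructor
        · rw [show (i' + p, j + p) = (a.1, a.2) from by
            rw [Prod.mk.injEq]; exact ⟨by omega, by omega⟩, Prod.mk.eta]
          exact haI
        · rw [show (i + p, j' + p) = (b.1, b.2) from by
            rw [Prod.mk.injEq]; exact ⟨by omega, by omega⟩, Prod.mk.eta]
          exact hbI
      · exact absurd (Prod.ext_iff.mpr ⟨by omega, by omega⟩) hab
    obtain ⟨c, d, hcX, hdX, hcd⟩ := (Set.one_lt_ncard_iff hX2fin).mp h2X2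
    have hcI := hX2I c hcX
    have hdI := hX2I d hdX
    have hmemB : (i - 1, j - 1) ∈ I ∧ (i' - 1, j' - 1) ∈ I ∧
        1 ≤ i ∧ 1 ≤ i' ∧ 1 ≤ j ∧ 1 ≤ j' := by
      have hc' := hbot c hcX
      have hd' := hbot d hdX
      rcases hc' with ⟨e1, e2⟩ | ⟨e1, e2⟩ <;> rcases hd' with ⟨e3, e4⟩ | ⟨e3, e4⟩
      · exact absurd (Prod.ext_iff.mpr ⟨by omega, by omega⟩) hcd
      · refine ⟨?_, ?_, by omega, by omega, by omega, by omega⟩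
        · rw [show (i - 1, j - 1) = (c.1, c.2) from by
            rw [Prod.mk.injEq]; exact ⟨by omega, by omega⟩, Prod.mk.eta]
          exact hcI
        · rw [show (i' - 1, j' - 1) = (d.1, d.2) from by
            rw [Prod.mk.injEq]; exact ⟨by omega, by omega⟩, Prod.mk.eta]
          exact hdI
      · refine ⟨?_, ?_, by omega, by omega, by omega, by omega⟩
        · rw [show (i - 1, j - 1) = (d.1, d.2) from by
            rw [Prod.mk.injEq]; exact ⟨by omega, by omega⟩, Prod.mk.eta]
          exact hdI
        · rw [show (i' - 1, j' - 1) = (c.1, c.2) from by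
            rw [Prod.mk.injEq]; exact ⟨by omega, by omega⟩, Prod.mk.eta]
          exact hcI
      · exact absurd (Prod.ext_iff.mpr ⟨by omega, by omega⟩) hcd
    exact Or.inl ⟨hmemB.2.2.1, hmemB.2.2.2.1, hmemB.2.2.2.2.1, hmemB.2.2.2.2.2,
      hI.1 _ hmemB.1, hmemB.1, hI.1 _ hmemB.2.1, hmemB.2.1,
      hI.1 _ hmemA.1, hmemA.1, hI.1 _ hmemA.2, hmemA.2⟩
  have hX1ne : X1.Nonempty := Set.nonempty_of_ncard_ne_zero (by omega)
  have hX2ne : X2.Nonempty := Set.nonempty_of_ncard_ne_zero (by omega)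
  obtain ⟨a1, ha1X⟩ := hX1ne
  obtain ⟨a2, ha2X⟩ := hX2ne
  have ha1I := hX1I a1 ha1X
  have ha2I := hX2I a2 ha2X
  have hv1 : IsVertex n A B a1.1 a1.2 := hI.1 _ ha1I
  have hv2 : IsVertex n A B a2.1 a2.2 := hI.1 _ ha2I
  have hc1 := hX1c a1 ha1X
  have hc2 := hX2c a2 ha2X
  unfold AntiC at hc1
  unfold ParC at hc2
  have hcontra : ∀ s : ℤ, s = -1 ∨ s = 0 ∨ s = 1 →
      (((a2.1 : ℤ) = a1.1 + s ∧ (a2.2 : ℤ) ≠ a1.2 + s) ∨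
       ((a2.2 : ℤ) = a1.2 + s ∧ (a2.1 : ℤ) ≠ a1.1 + s)) → False := by
    intro s hs h
    apply hI.2 _ ha1I _ ha2I
    have hadj := adj_mk hv1 hv2 s hs h
    rwa [Prod.mk.eta, Prod.mk.eta] at hadj
  rcases hc1 with h1 | h1 | h1 | h1 <;> rcases hc2 with h2 | h2 | h2 | h2
  · exact (hcontra 0 (by norm_num) (Or.inl ⟨by omega, by omega⟩)).elim
  · exact (hcontra 0 (by norm_num) (Or.inr ⟨by omega, by omega⟩)).elim
  · exact scenario2 a1.1 a1.2 (by rw [Prod.mk.eta]; exact ha1I) (Or.inl h1)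
      a2.1 a2.2 (by rw [Prod.mk.eta]; exact ha2I) (Or.inl h2)
  · exact scenario2 a1.1 a1.2 (by rw [Prod.mk.eta]; exact ha1I) (Or.inl h1)
      a2.1 a2.2 (by rw [Prod.mk.eta]; exact ha2I) (Or.inr h2)
  · exact (hcontra 0 (by norm_num) (Or.inr ⟨by omega, by omega⟩)).elim
  · exact (hcontra 0 (by norm_num) (Or.inl ⟨by omega, by omega⟩)).elim
  · exact scenario2 a1.1 a1.2 (by rw [Prod.mk.eta]; exact ha1I) (Or.inr h1)
      a2.1 a2.2 (by rw [Prod.mk.eta]; exact ha2I) (Or.inl h2)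
  · exact scenario2 a1.1 a1.2 (by rw [Prod.mk.eta]; exact ha1I) (Or.inr h1)
      a2.1 a2.2 (by rw [Prod.mk.eta]; exact ha2I) (Or.inr h2)
  · exact scenario1 a1.1 a1.2 (by rw [Prod.mk.eta]; exact ha1I) (Or.inl h1)
      a2.1 a2.2 (by rw [Prod.mk.eta]; exact ha2I) (Or.inl h2)
  · exact scenario1 a1.1 a1.2 (by rw [Prod.mk.eta]; exact ha1I) (Or.inl h1)
      a2.1 a2.2 (by rw [Prod.mk.eta]; exact ha2I) (Or.inr h2)
  · exact (hcontra 0 (by norm_num) (Or.inl ⟨by omega, by omega⟩)).elim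
  · exact (hcontra 0 (by norm_num) (Or.inr ⟨by omega, by omega⟩)).elim
  · exact scenario1 a1.1 a1.2 (by rw [Prod.mk.eta]; exact ha1I) (Or.inr h1)
      a2.1 a2.2 (by rw [Prod.mk.eta]; exact ha2I) (Or.inl h2)
  · exact scenario1 a1.1 a1.2 (by rw [Prod.mk.eta]; exact ha1I) (Or.inr h1)
      a2.1 a2.2 (by rw [Prod.mk.eta]; exact ha2I) (Or.inr h2)
  · exact (hcontra 0 (by norm_num) (Or.inr ⟨by omega, by omega⟩)).elim
  · exact (hcontra 0 (by norm_num) (Or.inl ⟨by omega, by omega⟩)).elim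

theorem stmt_13 {Γ : Type*} (n : ℕ) (hn : 2 ≤ n) (A B : Fin n → Γ)
    (σ : Equiv.Perm (Fin n)) (hB : B = A ∘ σ)
    (h2 : ∀ c : Γ, {x : Fin n | A x = c}.ncard ≤ 2)
    (i i' j j' p : ℕ) (hp : 1 ≤ p)
    (hser : ∀ q < p, IsConflictSquare n A B (i + q) (i' + q) (j + q) (j' + q))
    (hmax1 : ¬ ∃ i₀ i₀' j₀ j₀' : ℕ, i₀ + 1 = i ∧ i₀' + 1 = i' ∧ j₀ + 1 = j ∧ j₀' + 1 = j' ∧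
        IsConflictSquare n A B i₀ i₀' j₀ j₀')
    (hmax2 : ¬ IsConflictSquare n A B (i + p) (i' + p) (j + p) (j' + p))
    (M : Set (ℕ × ℕ))
    (hM : M = ⋃ q ∈ Finset.range p, SqMembers (i + q) (i' + q) (j + q) (j' + q))
    (I : Set (ℕ × ℕ)) (hI : IsIndep n A B I)
    (hImax : ∀ J : Set (ℕ × ℕ), IsIndep n A B J → J.ncard ≤ I.ncard)
    (hfew : (I ∩ M).ncard < 2 * p) :
    (1 ≤ i ∧ 1 ≤ i' ∧ 1 ≤ j ∧ 1 ≤ j' ∧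
      IsVertex n A B (i - 1) (j - 1) ∧ (i - 1, j - 1) ∈ I ∧
      IsVertex n A B (i' - 1) (j' - 1) ∧ (i' - 1, j' - 1) ∈ I ∧
      IsVertex n A B (i' + p) (j + p) ∧ (i' + p, j + p) ∈ I ∧
      IsVertex n A B (i + p) (j' + p) ∧ (i + p, j' + p) ∈ I) ∨
    (1 ≤ i ∧ 1 ≤ i' ∧ 1 ≤ j ∧ 1 ≤ j' ∧
      IsVertex n A B (i' - 1) (j - 1) ∧ (i' - 1, j - 1) ∈ I ∧
      IsVertex n A B (i - 1) (j' - 1) ∧ (i - 1, j' - 1) ∈ I ∧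
      IsVertex n A B (i + p) (j + p) ∧ (i + p, j + p) ∈ I ∧
      IsVertex n A B (i' + p) (j' + p) ∧ (i' + p, j' + p) ∈ I) := by
  have hne_i : i ≠ i' := by
    have := (hser 0 hp).1
    omega
  have hne_j : j ≠ j' := by
    have := (hser 0 hp).2.1
    omega
  have hser_ii : ∀ q < p, IsConflictSquare n A B (i' + q) (i + q) (j + q) (j' + q) :=
    fun q hq => sq_comm_i (hser q hq)
  have hser_jj : ∀ q < p, IsConflictSquare n A B (i + q) (i' + q) (j' + q) (j + q) :=
    fun q hq => sq_comm_j (hser q hq)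
  have hser_ij : ∀ q < p, IsConflictSquare n A B (i' + q) (i + q) (j' + q) (j + q) :=
    fun q hq => sq_comm_j (sq_comm_i (hser q hq))
  have hM_ii : M = ⋃ q ∈ Finset.range p, SqMembers (i' + q) (i + q) (j + q) (j' + q) := by
    rw [hM]
    exact Set.iUnion_congr fun q => Set.iUnion_congr fun hq => sqMembers_comm_i _ _ _ _
  have hM_jj : M = ⋃ q ∈ Finset.range p, SqMembers (i + q) (i' + q) (j' + q) (j + q) := by
    rw [hM]
    exact Set.iUnion_congr fun q => Set.iUnion_congr fun hq => sqMembers_comm_j _ _ _ _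
  have hM_ij : M = ⋃ q ∈ Finset.range p, SqMembers (i' + q) (i + q) (j' + q) (j + q) := by
    rw [hM]
    exact Set.iUnion_congr fun q => Set.iUnion_congr fun hq =>
      (sqMembers_comm_i _ _ _ _).trans (sqMembers_comm_j _ _ _ _)
  rcases Nat.lt_or_ge i i' with hi | hi
  · rcases Nat.lt_or_ge j j' with hj | hj
    · exact core n A B σ hB h2 i i' j j' p hp hi hj hser M hM I hI hImax hfew
    · have hj2 : j' < j := by omega
      have hres := core n A B σ hB h2 i i' j' j p hp hi hj2 hser_jj M hM_jj I hI hImax hfew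
      rcases hres with ⟨g1, g2, g3, g4, g5, g6, g7, g8, g9, g10, g11, g12⟩ |
        ⟨g1, g2, g3, g4, g5, g6, g7, g8, g9, g10, g11, g12⟩
      · exact Or.inr ⟨g1, g2, g4, g3, g7, g8, g5, g6, g11, g12, g9, g10⟩
      · exact Or.inl ⟨g1, g2, g4, g3, g7, g8, g5, g6, g11, g12, g9, g10⟩
  · have hi2 : i' < i := by omega
    rcases Nat.lt_or_ge j j' with hj | hj
    · have hres := core n A B σ hB h2 i' i j j' p hp hi2 hj hser_ii M hM_ii I hI hImax hfew
      rcases hres with ⟨g1, g2, g3, g4, g5, g6, g7, g8, g9, g10, g11, g12⟩ |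
        ⟨g1, g2, g3, g4, g5, g6, g7, g8, g9, g10, g11, g12⟩
      · exact Or.inr ⟨g2, g1, g3, g4, g5, g6, g7, g8, g9, g10, g11, g12⟩
      · exact Or.inl ⟨g2, g1, g3, g4, g5, g6, g7, g8, g9, g10, g11, g12⟩
    · have hj2 : j' < j := by omega
      have hres := core n A B σ hB h2 i' i j' j p hp hi2 hj2 hser_ij M hM_ij I hI hImax hfew
      rcases hres with ⟨g1, g2, g3, g4, g5, g6, g7, g8, g9, g10, g11, g12⟩ |
        ⟨g1, g2, g3, g4, g5, g6, g7, g8, g9, g10, g11, g12⟩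
      · exact Or.inl ⟨g2, g1, g4, g3, g7, g8, g5, g6, g11, g12, g9, g10⟩
      · exact Or.inr ⟨g2, g1, g4, g3, g7, g8, g5, g6, g11, g12, g9, g10⟩
end

section
/- Assume every letter occurs at most 2 times in A, and suppose there is a maximal series of p consecutive squares starting at S(i,i';j,j') (p ≥ 1). Let A' : Fin (n-2p) → Σ be the string obtained from A by deleting the entries at positions i, i+1, ..., i+p-1 and i', i'+1, ..., i'+p-1 (and concatenating the remainder in order), and let B' : Fin (n-2p) → Σ be obtained from B by deleting the entries at positions j, ..., j+p-1 and j', ..., j'+p-1. Let G' be the conflict graph constructed from the strings A' and B'. Then α(G) = α(G') + 2p, where α denotes the maximum cardinality of an independent set. -/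
/-- `α(G)`: the largest cardinality of an independent set of the conflict graph
built from the strings `A` and `B`. -/
noncomputable def alphaG {Γ : Type*} (n : ℕ) (A B : Fin n → Γ) : ℕ :=
  sSup {m : ℕ | ∃ I : Set (ℕ × ℕ), IsIndep n A B I ∧ I.ncard = m}

/-- The list obtained from `L` by deleting the `p` entries starting at position `u`
and the `p` entries starting at position `w`, where `u ≤ w` are the two given positions. -/
def deleteTwoBlocks {Γ : Type*} (L : List Γ) (u w p : ℕ) : List Γ :=
  L.take (min u w) ++ ((L.drop (min u w + p)).take (max u w - min u w - p)) ++
    L.drop (max u w + p)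

namespace Stmt14

variable {Γ : Type*}

/-- total (padded) version of a `Fin n`-indexed string -/
def pf (n : ℕ) (A : Fin n → Γ) (g : Γ) (x : ℕ) : Γ := if h : x < n then A ⟨x, h⟩ else g

lemma isVertex_iff (n : ℕ) (A B : Fin n → Γ) (g : Γ) (x y : ℕ) :
    IsVertex n A B x y ↔ x + 1 < n ∧ y + 1 < n ∧
      pf n A g x = pf n B g y ∧ pf n A g (x+1) = pf n B g (y+1) := by
  constructor
  · rintro ⟨hx, hy, h1, h2⟩
    have hx' : x < n := by omega
    have hy' : y < n := by omega
    exact ⟨hx, hy, by simpa [pf, hx', hy'] using h1, by simpa [pf, hx, hy] using h2⟩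
  · rintro ⟨hx, hy, h1, h2⟩
    have hx' : x < n := by omega
    have hy' : y < n := by omega
    exact ⟨hx, hy, by simpa [pf, hx', hy'] using h1, by simpa [pf, hx, hy] using h2⟩

lemma vertex_lt {n : ℕ} {A B : Fin n → Γ} {x y : ℕ} (h : IsVertex n A B x y) :
    x + 1 < n ∧ y + 1 < n := by
  obtain ⟨hx, hy, -⟩ := h; exact ⟨hx, hy⟩

lemma adj_intro {n : ℕ} {A B : Fin n → Γ} {x y x' y' : ℕ}
    (hv : IsVertex n A B x y) (hw : IsVertex n A B x' y') (s : ℤ)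
    (hs : s = -1 ∨ s = 0 ∨ s = 1)
    (h : ((x' : ℤ) = x + s ∧ (y' : ℤ) ≠ y + s) ∨ ((y' : ℤ) = y + s ∧ (x' : ℤ) ≠ x + s)) :
    ConflictAdj n A B (x, y) (x', y') := by
  refine ⟨hv, hw, ?_, s, hs, h⟩
  intro he
  rw [Prod.mk.injEq] at he
  obtain ⟨e1, e2⟩ := he
  subst e1; subst e2
  rcases h with ⟨h1, h2⟩ | ⟨h1, h2⟩ <;> omega

lemma adj_symm {n : ℕ} {A B : Fin n → Γ} {v w : ℕ × ℕ}
    (h : ConflictAdj n A B v w) : ConflictAdj n A B w v := by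
  obtain ⟨hv, hw, hne, s, hs, h⟩ := h
  refine ⟨hw, hv, hne.symm, -s, by omega, ?_⟩
  rcases h with ⟨h1, h2⟩ | ⟨h1, h2⟩
  · exact Or.inl ⟨by omega, by omega⟩
  · exact Or.inr ⟨by omega, by omega⟩

lemma not_adj_shift {n : ℕ} {A B : Fin n → Γ} {v w : ℕ × ℕ}
    (h : (w.1 : ℤ) - v.1 = (w.2 : ℤ) - v.2) : ¬ ConflictAdj n A B v w := by
  rintro ⟨-, -, -, s, hs, (⟨h1, h2⟩ | ⟨h1, h2⟩)⟩ <;> omega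

lemma not_adj_far {n : ℕ} {A B : Fin n → Γ} {v w : ℕ × ℕ}
    (h1 : (v.1 : ℤ) + 2 ≤ w.1 ∨ (w.1 : ℤ) + 2 ≤ v.1)
    (h2 : (v.2 : ℤ) + 2 ≤ w.2 ∨ (w.2 : ℤ) + 2 ≤ v.2) : ¬ ConflictAdj n A B v w := by
  rintro ⟨-, -, -, s, hs, (⟨ha, hb⟩ | ⟨ha, hb⟩)⟩ <;> omega

lemma isIndep_empty {n : ℕ} {A B : Fin n → Γ} : IsIndep n A B ∅ :=
  ⟨by simp, by simp⟩

lemma indep_subset_box {n : ℕ} {A B : Fin n → Γ} {I : Set (ℕ × ℕ)} (h : IsIndep n A B I) :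
    I ⊆ (Set.Iio n) ×ˢ (Set.Iio n) := by
  intro v hv
  obtain ⟨h1, h2, -⟩ := h.1 v hv
  exact ⟨by simpa using by omega, by simpa using by omega⟩

lemma indep_finite {n : ℕ} {A B : Fin n → Γ} {I : Set (ℕ × ℕ)} (h : IsIndep n A B I) :
    I.Finite :=
  Set.Finite.subset ((Set.finite_Iio _).prod (Set.finite_Iio _)) (indep_subset_box h)

lemma indep_ncard_le {n : ℕ} {A B : Fin n → Γ} {I : Set (ℕ × ℕ)} (h : IsIndep n A B I) :
    I.ncard ≤ ((Set.Iio n) ×ˢ (Set.Iio n) : Set (ℕ × ℕ)).ncard :=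
  Set.ncard_le_ncard (indep_subset_box h) ((Set.finite_Iio _).prod (Set.finite_Iio _))

lemma alpha_bdd {n : ℕ} {A B : Fin n → Γ} :
    BddAbove {m : ℕ | ∃ I : Set (ℕ × ℕ), IsIndep n A B I ∧ I.ncard = m} := by
  refine ⟨((Set.Iio n) ×ˢ (Set.Iio n) : Set (ℕ × ℕ)).ncard, ?_⟩
  rintro m ⟨I, hI, rfl⟩
  exact indep_ncard_le hI

lemma alphaG_spec {n : ℕ} (A B : Fin n → Γ) :
    ∃ I : Set (ℕ × ℕ), IsIndep n A B I ∧ I.ncard = alphaG n A B := by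
  have h0 : (0 : ℕ) ∈ {m : ℕ | ∃ I : Set (ℕ × ℕ), IsIndep n A B I ∧ I.ncard = m} :=
    ⟨∅, isIndep_empty, by simp⟩
  exact Nat.sSup_mem ⟨0, h0⟩ alpha_bdd

lemma le_alphaG {n : ℕ} {A B : Fin n → Γ} {I : Set (ℕ × ℕ)} (h : IsIndep n A B I) :
    I.ncard ≤ alphaG n A B :=
  le_csSup alpha_bdd ⟨I, h, rfl⟩

lemma three_ne {n : ℕ} {A : Fin n → Γ} (h2 : ∀ c : Γ, {x : Fin n | A x = c}.ncard ≤ 2)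
    {x y z : Fin n} (hxy : x ≠ y) (hxz : x ≠ z) (hyz : y ≠ z)
    (e1 : A y = A x) (e2 : A z = A x) : False := by
  have hsub : ({x, y, z} : Set (Fin n)) ⊆ {w : Fin n | A w = A x} := by
    intro w hw
    simp only [Set.mem_insert_iff, Set.mem_singleton_iff] at hw
    rcases hw with rfl | rfl | rfl
    · rfl
    · exact e1
    · exact e2
  have h3 : ({x, y, z} : Set (Fin n)).ncard = 3 :=
    Set.ncard_eq_three.mpr ⟨x, y, z, hxy, hxz, hyz, rfl⟩
  have hle := Set.ncard_le_ncard hsub (Set.toFinite _)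
  have := h2 (A x)
  omega



/-- position map from the original string to the reduced string -/
def cut (i i' p x : ℕ) : ℕ := if x < i then x else if x < i' then x - p else x - 2*p

/-- position map from the reduced string to the original string -/
def unc (i i' p k : ℕ) : ℕ := if k < i then k else if k + p < i' then k + p else k + 2*p

/-- positions of the original string that survive the deletion -/
def Surv (n i i' p x : ℕ) : Prop :=
  x < n ∧ (x < i ∨ i + p ≤ x) ∧ (x < i' ∨ i' + p ≤ x)

variable {n i i' p : ℕ}

lemma surv_unc (hsep : i + p < i') (hbnd : i' + p < n) {k : ℕ} (hk : k < n - 2*p) :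
    Surv n i i' p (unc i i' p k) := by
  simp only [unc, Surv]; split_ifs <;> omega

lemma cut_unc (hsep : i + p < i') {k : ℕ} (hk : k < n - 2*p) :
    cut i i' p (unc i i' p k) = k := by
  simp only [unc, cut]; split_ifs <;> omega

lemma unc_cut (hsep : i + p < i') {x : ℕ} (hx : Surv n i i' p x) :
    unc i i' p (cut i i' p x) = x := by
  obtain ⟨h1, h2, h3⟩ := hx
  simp only [unc, cut]; split_ifs <;> omega

lemma cut_lt (hsep : i + p < i') (hbnd : i' + p < n) {x : ℕ} (hx : Surv n i i' p x) :
    cut i i' p x < n - 2*p := by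
  obtain ⟨h1, h2, h3⟩ := hx
  simp only [cut]; split_ifs <;> omega

lemma unc_lt_of_lt {k k' : ℕ} (h : k < k') : unc i i' p k < unc i i' p k' := by
  simp only [unc]; split_ifs <;> omega

lemma surv_eq_of_cut_eq (hsep : i + p < i') {x x' : ℕ}
    (hx : Surv n i i' p x) (hx' : Surv n i i' p x')
    (h : cut i i' p x = cut i i' p x') : x = x' := by
  have := unc_cut (n := n) hsep hx
  have := unc_cut (n := n) hsep hx'
  rw [h] at *; omega

lemma next_cut (hsep : i + p < i') (hbnd : i' + p < n) (hp : 1 ≤ p) {x : ℕ}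
    (hx : Surv n i i' p x) (hxn : x + 1 < n) :
    ∃ x2, Surv n i i' p x2 ∧ cut i i' p x2 = cut i i' p x + 1 ∧
      ((x2 = x + 1 ∧ x + 1 ≠ i ∧ x + 1 ≠ i') ∨
       (x + 1 = i ∧ x2 = i + p) ∨ (x + 1 = i' ∧ x2 = i' + p)) := by
  obtain ⟨h1, h2, h3⟩ := hx
  by_cases e1 : x + 1 = i
  · refine ⟨i + p, ⟨by omega, by omega, by omega⟩, ?_, Or.inr (Or.inl ⟨e1, rfl⟩)⟩
    simp only [cut]; split_ifs <;> omega
  by_cases e2 : x + 1 = i'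
  · refine ⟨i' + p, ⟨by omega, by omega, by omega⟩, ?_, Or.inr (Or.inr ⟨e2, rfl⟩)⟩
    simp only [cut]; split_ifs <;> omega
  · refine ⟨x + 1, ⟨by omega, by omega, by omega⟩, ?_, Or.inl ⟨rfl, e1, e2⟩⟩
    simp only [cut]; split_ifs <;> omega



lemma pf_reduced {n p : ℕ} {A : Fin n → Γ} {A' : Fin (n - 2*p) → Γ} {g : Γ} {u w : ℕ}
    (h : List.ofFn A' = deleteTwoBlocks (List.ofFn A) u w p)
    (huw : u + p ≤ w) (hwn : w + p ≤ n) {k : ℕ} (hk : k < n - 2*p) :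
    pf (n - 2*p) A' g k = pf n A g (unc u w p k) := by
  have hmin : min u w = u := by omega
  have hmax : max u w = w := by omega
  have huk : unc u w p k < n := by simp only [unc]; split_ifs <;> omega
  have hL : pf (n - 2*p) A' g k = (List.ofFn A')[k]'(by simpa using hk) := by
    simp [pf, hk, List.getElem_ofFn]
  rw [hL]
  have hR : pf n A g (unc u w p k) = (List.ofFn A)[unc u w p k]'(by simpa using huk) := by
    simp [pf, huk, List.getElem_ofFn]
  rw [hR]
  rw [List.getElem_of_eq h]
  simp only [deleteTwoBlocks, hmin, hmax]
  rw [List.getElem_append]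
  simp only [List.length_append, List.length_take, List.length_ofFn, List.length_drop]
  split_ifs with h1
  · rw [List.getElem_append]
    simp only [List.length_take, List.length_ofFn]
    split_ifs with h2 <;>
    simp only [List.getElem_take, List.getElem_drop, List.getElem_ofFn] <;>
    (congr 1; apply Fin.ext; simp only [unc]; split_ifs <;> omega)
  · simp only [List.getElem_take, List.getElem_drop, List.getElem_ofFn]
    congr 1
    apply Fin.ext
    simp only [unc]
    split_ifs <;> omega



lemma pf_eq {n : ℕ} {A : Fin n → Γ} {g : Γ} {x : ℕ} (h : x < n) :
    pf n A g x = A ⟨x, h⟩ := dif_pos h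

lemma vertex_symm {n : ℕ} {A B : Fin n → Γ} {x y : ℕ}
    (h : IsVertex n A B x y) : IsVertex n B A y x := by
  obtain ⟨hx, hy, h1, h2⟩ := h; exact ⟨hy, hx, h1.symm, h2.symm⟩

lemma square_symm {n : ℕ} {A B : Fin n → Γ} {i i' j j' : ℕ}
    (h : IsConflictSquare n A B i i' j j') : IsConflictSquare n B A j j' i i' := by
  obtain ⟨h1, h2, v1, v2, v3, v4⟩ := h
  exact ⟨h2, h1, vertex_symm v1, vertex_symm v3, vertex_symm v2, vertex_symm v4⟩

/-- All relevant consequences of the hypotheses, bundled (assuming `i < i'`, `j < j'`). -/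
structure Setup (Γ : Type*) (n : ℕ) (A B : Fin n → Γ) (g : Γ) (i i' j j' p : ℕ) : Prop where
  hp : 1 ≤ p
  sepA : i + p < i'
  sepB : j + p < j'
  bndA : i' + p < n
  bndB : j' + p < n
  E1 : ∀ q ≤ p, pf n B g (j+q) = pf n A g (i+q)
  E2 : ∀ q ≤ p, pf n B g (j'+q) = pf n A g (i+q)
  E3 : ∀ q ≤ p, pf n A g (i'+q) = pf n A g (i+q)
  occA : ∀ q ≤ p, ∀ x, x < n → pf n A g x = pf n A g (i+q) → x = i+q ∨ x = i'+q
  occB : ∀ q ≤ p, ∀ y, y < n → pf n B g y = pf n A g (i+q) → y = j+q ∨ y = j'+q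
  sq : ∀ q < p, IsConflictSquare n A B (i+q) (i'+q) (j+q) (j'+q)

lemma mkSetup {n : ℕ} {A B : Fin n → Γ} {σ : Equiv.Perm (Fin n)} (hB : B = A ∘ σ)
    (h2 : ∀ c : Γ, {x : Fin n | A x = c}.ncard ≤ 2) {i i' j j' p : ℕ} (hp : 1 ≤ p)
    (hser : ∀ q < p, IsConflictSquare n A B (i+q) (i'+q) (j+q) (j'+q))
    (hii : i < i') (hjj : j < j') (g : Γ) :
    Setup Γ n A B g i i' j j' p := by
  have hne_j : j ≠ j' := (hser 0 hp).2.1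
  have hbndA : i' + p < n := by
    have hv := (hser (p-1) (by omega)).2.2.2.2.1
    obtain ⟨hx, -, -⟩ := hv
    omega
  have hbndB : j' + p < n := by
    have hv := (hser (p-1) (by omega)).2.2.2.2.2
    obtain ⟨-, hy, -⟩ := hv
    omega
  have hbndA0 : i + p < n := by omega
  have hbndB0 : j + p < n := by omega
  have E1 : ∀ q ≤ p, pf n B g (j+q) = pf n A g (i+q) := by
    intro q hq
    rcases Nat.lt_or_ge q p with h | h
    · have hv := (hser q h).2.2.1
      rw [isVertex_iff n A B g] at hv
      exact hv.2.2.1.symm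
    · have hq' : q = p := by omega
      rw [hq']
      have hv := (hser (p-1) (by omega)).2.2.1
      rw [isVertex_iff n A B g] at hv
      have e1 : i + (p-1) + 1 = i + p := by omega
      have e2 : j + (p-1) + 1 = j + p := by omega
      rw [e1, e2] at hv
      exact hv.2.2.2.symm
  have E2 : ∀ q ≤ p, pf n B g (j'+q) = pf n A g (i+q) := by
    intro q hq
    rcases Nat.lt_or_ge q p with h | h
    · have hv := (hser q h).2.2.2.1
      rw [isVertex_iff n A B g] at hv
      exact hv.2.2.1.symm
    · have hq' : q = p := by omega
      rw [hq']
      have hv := (hser (p-1) (by omega)).2.2.2.1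
      rw [isVertex_iff n A B g] at hv
      have e1 : i + (p-1) + 1 = i + p := by omega
      have e2 : j' + (p-1) + 1 = j' + p := by omega
      rw [e1, e2] at hv
      exact hv.2.2.2.symm
  have E3 : ∀ q ≤ p, pf n A g (i'+q) = pf n A g (i+q) := by
    intro q hq
    rcases Nat.lt_or_ge q p with h | h
    · have hv := (hser q h).2.2.2.2.1
      rw [isVertex_iff n A B g] at hv
      exact hv.2.2.1.trans (E1 q hq)
    · have hq' : q = p := by omega
      rw [hq']
      have hv := (hser (p-1) (by omega)).2.2.2.2.1
      rw [isVertex_iff n A B g] at hv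
      have e1 : i' + (p-1) + 1 = i' + p := by omega
      have e2 : j + (p-1) + 1 = j + p := by omega
      rw [e1, e2] at hv
      exact hv.2.2.2.trans (E1 p le_rfl)
  have occA : ∀ q ≤ p, ∀ x, x < n → pf n A g x = pf n A g (i+q) → x = i+q ∨ x = i'+q := by
    intro q hq x hx hval
    by_contra hcon
    push_neg at hcon
    have hiq : i + q < n := by omega
    have hiq' : i' + q < n := by omega
    have e3 : A ⟨i'+q, hiq'⟩ = A ⟨i+q, hiq⟩ := by
      have := E3 q hq
      rwa [pf_eq hiq', pf_eq hiq] at this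
    have ex : A ⟨x, hx⟩ = A ⟨i+q, hiq⟩ := by
      rwa [pf_eq hx, pf_eq hiq] at hval
    exact three_ne h2 (x := ⟨i+q, hiq⟩) (y := ⟨i'+q, hiq'⟩) (z := ⟨x, hx⟩)
      (by simp [Fin.ext_iff]; omega) (by simp [Fin.ext_iff]; omega)
      (by simp [Fin.ext_iff]; omega) e3 ex
  have hAσ : ∀ (y : ℕ) (hy : y < n), pf n B g y = pf n A g ((σ ⟨y, hy⟩ : Fin n) : ℕ) := by
    intro y hy
    rw [pf_eq hy, pf_eq (σ ⟨y, hy⟩).isLt, hB]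
    simp
  have inj2 : ∀ z1 z2 : Fin n, ((σ z1 : Fin n) : ℕ) = ((σ z2 : Fin n) : ℕ) → (z1 : ℕ) = (z2 : ℕ) := by
    intro z1 z2 h
    exact congrArg Fin.val (σ.injective (Fin.ext h))
  have occB : ∀ q ≤ p, ∀ y, y < n → pf n B g y = pf n A g (i+q) → y = j+q ∨ y = j'+q := by
    intro q hq y hy hval
    have key : ((σ ⟨y, hy⟩ : Fin n) : ℕ) = i+q ∨ ((σ ⟨y, hy⟩ : Fin n) : ℕ) = i'+q :=
      occA q hq _ (σ ⟨y, hy⟩).isLt (by rw [← hAσ y hy]; exact hval)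
    have keyJ : ((σ ⟨j+q, by omega⟩ : Fin n) : ℕ) = i+q ∨ ((σ ⟨j+q, by omega⟩ : Fin n) : ℕ) = i'+q :=
      occA q hq _ (σ _).isLt (by rw [← hAσ (j+q) (by omega)]; exact E1 q hq)
    have keyJ' : ((σ ⟨j'+q, by omega⟩ : Fin n) : ℕ) = i+q ∨ ((σ ⟨j'+q, by omega⟩ : Fin n) : ℕ) = i'+q :=
      occA q hq _ (σ _).isLt (by rw [← hAσ (j'+q) (by omega)]; exact E2 q hq)
    rcases key with h1 | h1 <;> rcases keyJ with h2 | h2 <;> rcases keyJ' with h3 | h3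
    · have hc : j + q = j' + q := inj2 ⟨j+q, by omega⟩ ⟨j'+q, by omega⟩ (h2.trans h3.symm)
      omega
    · have hm : y = j + q := inj2 ⟨y, hy⟩ ⟨j+q, by omega⟩ (h1.trans h2.symm)
      exact Or.inl hm
    · have hm : y = j' + q := inj2 ⟨y, hy⟩ ⟨j'+q, by omega⟩ (h1.trans h3.symm)
      exact Or.inr hm
    · have hc : j + q = j' + q := inj2 ⟨j+q, by omega⟩ ⟨j'+q, by omega⟩ (h2.trans h3.symm)
      omega
    · have hc : j + q = j' + q := inj2 ⟨j+q, by omega⟩ ⟨j'+q, by omega⟩ (h2.trans h3.symm)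
      omega
    · have hm : y = j' + q := inj2 ⟨y, hy⟩ ⟨j'+q, by omega⟩ (h1.trans h3.symm)
      exact Or.inr hm
    · have hm : y = j + q := inj2 ⟨y, hy⟩ ⟨j+q, by omega⟩ (h1.trans h2.symm)
      exact Or.inl hm
    · have hc : j + q = j' + q := inj2 ⟨j+q, by omega⟩ ⟨j'+q, by omega⟩ (h2.trans h3.symm)
      omega
  have vA : ∀ z : Fin n, pf n A g z.val = A z := fun z => dif_pos z.isLt
  have threeB : ∀ y1 y2 y3 : ℕ, ∀ (hy1 : y1 < n) (hy2 : y2 < n) (hy3 : y3 < n),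
      y1 ≠ y2 → y1 ≠ y3 → y2 ≠ y3 →
      pf n B g y2 = pf n B g y1 → pf n B g y3 = pf n B g y1 → False := by
    intro y1 y2 y3 hy1 hy2 hy3 hne12 hne13 hne23 e2 e3
    rw [hAσ y1 hy1, hAσ y2 hy2, vA, vA] at e2
    rw [hAσ y1 hy1, hAσ y3 hy3, vA, vA] at e3
    refine three_ne h2 (x := σ ⟨y1, hy1⟩) (y := σ ⟨y2, hy2⟩) (z := σ ⟨y3, hy3⟩)
      ?_ ?_ ?_ e2 e3
    · intro h
      have : y1 = y2 := congrArg Fin.val (σ.injective h)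
      exact hne12 this
    · intro h
      have : y1 = y3 := congrArg Fin.val (σ.injective h)
      exact hne13 this
    · intro h
      have : y2 = y3 := congrArg Fin.val (σ.injective h)
      exact hne23 this
  have sepA : i + p < i' := by
    by_contra hcon
    push_neg at hcon
    set t := i' - i with ht
    have h1t : 1 ≤ t := by omega
    have htp : t ≤ p := by omega
    have e1 : pf n A g (i+t) = pf n A g (i+0) := by
      have : i + t = i' + 0 := by omega
      rw [this]; exact E3 0 (by omega)
    have e2 : pf n A g (i+2*t) = pf n A g (i+t) := by
      have : i + 2*t = i' + t := by omega
      rw [this]; exact E3 t htp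
    have hb1 : i + t < n := by omega
    have hb2 : i + 2*t < n := by omega
    have hb0 : i + 0 < n := by omega
    rw [pf_eq hb1, pf_eq hb0] at e1
    rw [pf_eq hb2, pf_eq hb1] at e2
    exact three_ne h2 (x := ⟨i+0, hb0⟩) (y := ⟨i+t, hb1⟩) (z := ⟨i+2*t, hb2⟩)
      (by simp [Fin.ext_iff]; omega) (by simp [Fin.ext_iff]; omega)
      (by simp [Fin.ext_iff]; omega) e1 (e2.trans e1)
  have sepB : j + p < j' := by
    by_contra hcon
    push_neg at hcon
    set t := j' - j with ht
    have h1t : 1 ≤ t := by omega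
    have htp : t ≤ p := by omega
    have e1 : pf n B g (j+t) = pf n B g (j+0) := by
      have h1 : j + t = j' + 0 := by omega
      rw [h1, E2 0 (by omega)]
      exact (E1 0 (by omega)).symm
    have e2 : pf n B g (j+2*t) = pf n B g (j+t) := by
      have h1 : j + 2*t = j' + t := by omega
      rw [h1, E2 t htp]
      exact (E1 t htp).symm
    exact threeB (j+0) (j+t) (j+2*t) (by omega) (by omega) (by omega)
      (by omega) (by omega) (by omega) e1 (e2.trans e1)
  exact ⟨hp, sepA, sepB, hbndA, hbndB, E1, E2, E3, occA, occB, hser⟩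

lemma Setup.swap {n : ℕ} {A B : Fin n → Γ} {g : Γ} {i i' j j' p : ℕ}
    (S : Setup Γ n A B g i i' j j' p) : Setup Γ n B A g j j' i i' p := by
  refine ⟨S.hp, S.sepB, S.sepA, S.bndB, S.bndA, ?_, ?_, ?_, ?_, ?_, ?_⟩
  · intro q hq; exact (S.E1 q hq).symm
  · intro q hq; exact (S.E3 q hq).trans (S.E1 q hq).symm
  · intro q hq; exact (S.E2 q hq).trans (S.E1 q hq).symm
  · intro q hq y hy hval
    exact S.occB q hq y hy (hval.trans (S.E1 q hq))
  · intro q hq x hx hval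
    exact S.occA q hq x hx (hval.trans (S.E1 q hq))
  · intro q hq; exact square_symm (S.sq q hq)

section Main

variable {n : ℕ} {A B : Fin n → Γ} {g : Γ} {i i' j j' p : ℕ}

lemma unc_succ (hsep : i + p < i') (hbnd : i' + p < n) (hp : 1 ≤ p) {k : ℕ}
    (hk : k + 1 < n - 2*p) :
    (unc i i' p (k+1) = unc i i' p k + 1 ∧ unc i i' p k + 1 ≠ i ∧ unc i i' p k + 1 ≠ i') ∨
    (unc i i' p k + 1 = i ∧ unc i i' p (k+1) = i + p) ∨
    (unc i i' p k + 1 = i' ∧ unc i i' p (k+1) = i' + p) := by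
  simp only [unc]; split_ifs <;> omega

lemma clA (S : Setup Γ n A B g i i' j j' p) {x y : ℕ} (hv : IsVertex n A B x y)
    (h1 : i ≤ x) (h2 : x < i + p) :
    ∃ q, q < p ∧ x = i + q ∧ (y = j + q ∨ y = j' + q) := by
  rw [isVertex_iff n A B g] at hv
  obtain ⟨hx, hy, hv1, hv2⟩ := hv
  have hex : x = i + (x - i) := by omega
  refine ⟨x - i, by omega, hex, ?_⟩
  apply S.occB (x-i) (by omega) y (by omega)
  rw [← hex]
  exact hv1.symm

lemma clA' (S : Setup Γ n A B g i i' j j' p) {x y : ℕ} (hv : IsVertex n A B x y)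
    (h1 : i' ≤ x) (h2 : x < i' + p) :
    ∃ q, q < p ∧ x = i' + q ∧ (y = j + q ∨ y = j' + q) := by
  rw [isVertex_iff n A B g] at hv
  obtain ⟨hx, hy, hv1, hv2⟩ := hv
  have hex : x = i' + (x - i') := by omega
  refine ⟨x - i', by omega, hex, ?_⟩
  apply S.occB (x-i') (by omega) y (by omega)
  have e3 := S.E3 (x-i') (by omega)
  rw [← e3, ← hex]
  exact hv1.symm

lemma clB (S : Setup Γ n A B g i i' j j' p) {x y : ℕ} (hv : IsVertex n A B x y)
    (h : x + 1 = i) : y + 1 = j ∨ y + 1 = j' := by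
  rw [isVertex_iff n A B g] at hv
  obtain ⟨hx, hy, hv1, hv2⟩ := hv
  have key : pf n B g (y+1) = pf n A g (i+0) := by
    rw [Nat.add_zero, ← h]; exact hv2.symm
  have := S.occB 0 (by omega) (y+1) (by omega) key
  omega

lemma clB' (S : Setup Γ n A B g i i' j j' p) {x y : ℕ} (hv : IsVertex n A B x y)
    (h : x + 1 = i') : y + 1 = j ∨ y + 1 = j' := by
  rw [isVertex_iff n A B g] at hv
  obtain ⟨hx, hy, hv1, hv2⟩ := hv
  have key : pf n B g (y+1) = pf n A g (i+0) := by
    have e3 := S.E3 0 (by omega)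
    rw [Nat.add_zero] at e3 ⊢
    rw [← e3, ← h]
    exact hv2.symm
  have := S.occB 0 (by omega) (y+1) (by omega) key
  omega

lemma clC (S : Setup Γ n A B g i i' j j' p) {x y : ℕ} (hv : IsVertex n A B x y)
    (h : x = i + p) : y = j + p ∨ y = j' + p := by
  rw [isVertex_iff n A B g] at hv
  obtain ⟨hx, hy, hv1, hv2⟩ := hv
  have key : pf n B g y = pf n A g (i+p) := by rw [← h]; exact hv1.symm
  exact S.occB p le_rfl y (by omega) key

lemma clC' (S : Setup Γ n A B g i i' j j' p) {x y : ℕ} (hv : IsVertex n A B x y)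
    (h : x = i' + p) : y = j + p ∨ y = j' + p := by
  rw [isVertex_iff n A B g] at hv
  obtain ⟨hx, hy, hv1, hv2⟩ := hv
  have key : pf n B g y = pf n A g (i+p) := by
    rw [← S.E3 p le_rfl, ← h]; exact hv1.symm
  exact S.occB p le_rfl y (by omega) key

lemma survB_of_survA (S : Setup Γ n A B g i i' j j' p) {x y : ℕ}
    (hv : IsVertex n A B x y) (hx : Surv n i i' p x) : Surv n j j' p y := by
  have hy : y < n := by obtain ⟨-, hy, -⟩ := hv; omega
  obtain ⟨hx1, hx2, hx3⟩ := hx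
  refine ⟨hy, ?_, ?_⟩
  · by_contra hcon
    obtain ⟨q, hq, he, hor⟩ := clA S.swap (vertex_symm hv) (by omega) (by omega)
    rcases hor with h | h <;> omega
  · by_contra hcon
    obtain ⟨q, hq, he, hor⟩ := clA' S.swap (vertex_symm hv) (by omega) (by omega)
    rcases hor with h | h <;> omega

variable {A' B' : Fin (n - 2*p) → Γ}

lemma push (S : Setup Γ n A B g i i' j j' p)
    (ha' : ∀ k, k < n - 2*p → pf (n-2*p) A' g k = pf n A g (unc i i' p k))
    (hb' : ∀ k, k < n - 2*p → pf (n-2*p) B' g k = pf n B g (unc j j' p k))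
    {x y : ℕ} (hv : IsVertex n A B x y) (hx : Surv n i i' p x) :
    IsVertex (n-2*p) A' B' (cut i i' p x) (cut j j' p y) := by
  have hv0 := hv
  have hy := survB_of_survA S hv hx
  rw [isVertex_iff n A B g] at hv
  obtain ⟨hx1, hy1, hv1, hv2⟩ := hv
  obtain ⟨x2, hx2s, hx2c, hx2b⟩ := next_cut S.sepA S.bndA S.hp hx hx1
  obtain ⟨y2, hy2s, hy2c, hy2b⟩ := next_cut S.sepB S.bndB S.hp hy hy1
  have hcx2 := cut_lt S.sepA S.bndA hx2s
  have hcy2 := cut_lt S.sepB S.bndB hy2s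
  rw [isVertex_iff (n-2*p) A' B' g]
  refine ⟨by omega, by omega, ?_, ?_⟩
  · rw [ha' _ (by omega), hb' _ (by omega), unc_cut S.sepA hx, unc_cut S.sepB hy]
    exact hv1
  · rw [← hx2c, ← hy2c, ha' _ (by omega), hb' _ (by omega),
      unc_cut S.sepA hx2s, unc_cut S.sepB hy2s]
    rcases hx2b with ⟨e1, e2, e3⟩ | ⟨e1, e2⟩ | ⟨e1, e2⟩ <;>
      rcases hy2b with ⟨f1, f2, f3⟩ | ⟨f1, f2⟩ | ⟨f1, f2⟩
    · rw [e1, f1]; exact hv2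
    · exact absurd (clB S.swap (vertex_symm hv0) f1) (by omega)
    · exact absurd (clB' S.swap (vertex_symm hv0) f1) (by omega)
    · exact absurd (clB S hv0 e1) (by omega)
    · rw [e2, f2]; exact (S.E1 p le_rfl).symm
    · rw [e2, f2]; exact (S.E2 p le_rfl).symm
    · exact absurd (clB' S hv0 e1) (by omega)
    · rw [e2, f2]; exact (S.E3 p le_rfl).trans (S.E1 p le_rfl).symm
    · rw [e2, f2]; exact (S.E3 p le_rfl).trans (S.E2 p le_rfl).symm

lemma lift (S : Setup Γ n A B g i i' j j' p)
    (ha' : ∀ k, k < n - 2*p → pf (n-2*p) A' g k = pf n A g (unc i i' p k))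
    (hb' : ∀ k, k < n - 2*p → pf (n-2*p) B' g k = pf n B g (unc j j' p k))
    {u v : ℕ} (hv : IsVertex (n-2*p) A' B' u v) :
    IsVertex n A B (unc i i' p u) (unc j j' p v) := by
  rw [isVertex_iff (n-2*p) A' B' g] at hv
  obtain ⟨hu1, hv1, e1, e2⟩ := hv
  have hsu : Surv n i i' p (unc i i' p u) := surv_unc S.sepA S.bndA (by omega)
  have hsv : Surv n j j' p (unc j j' p v) := surv_unc S.sepB S.bndB (by omega)
  have hsu2 : Surv n i i' p (unc i i' p (u+1)) := surv_unc S.sepA S.bndA hu1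
  have hsv2 : Surv n j j' p (unc j j' p (v+1)) := surv_unc S.sepB S.bndB hv1
  have hmu : unc i i' p u < unc i i' p (u+1) := unc_lt_of_lt (by omega)
  have hmv : unc j j' p v < unc j j' p (v+1) := unc_lt_of_lt (by omega)
  rw [ha' u (by omega), hb' v (by omega)] at e1
  rw [ha' (u+1) hu1, hb' (v+1) hv1] at e2
  rw [isVertex_iff n A B g]
  have hb1 : unc i i' p u + 1 < n := by have := hsu2.1; omega
  have hb2 : unc j j' p v + 1 < n := by have := hsv2.1; omega
  refine ⟨hb1, hb2, e1, ?_⟩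
  rcases unc_succ S.sepA S.bndA S.hp hu1 with ⟨f1, f2, f3⟩ | ⟨f1, f2⟩ | ⟨f1, f2⟩ <;>
    rcases unc_succ S.sepB S.bndB S.hp hv1 with ⟨g1, g2, g3⟩ | ⟨g1, g2⟩ | ⟨g1, g2⟩
  · rw [← f1, ← g1]; exact e2
  · -- x no jump, y jumps to j
    exfalso
    rw [g2, S.E1 p le_rfl] at e2
    have := S.occA p le_rfl _ hsu2.1 e2
    obtain ⟨-, s2, s3⟩ := hsu
    have hp := S.hp
    omega
  · exfalso
    rw [g2, S.E2 p le_rfl] at e2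
    have := S.occA p le_rfl _ hsu2.1 e2
    obtain ⟨-, s2, s3⟩ := hsu
    have hp := S.hp
    omega
  · exfalso
    rw [f2] at e2
    have e2' : pf n B g (unc j j' p (v+1)) = pf n A g (i + p) := e2.symm
    have := S.occB p le_rfl _ hsv2.1 e2'
    obtain ⟨-, s2, s3⟩ := hsv
    have hp := S.hp
    omega
  · rw [f1, g1]
    have := S.E1 0 (by omega)
    simpa using this.symm
  · rw [f1, g1]
    have := S.E2 0 (by omega)
    simpa using this.symm
  · exfalso
    rw [f2, S.E3 p le_rfl] at e2
    have e2' : pf n B g (unc j j' p (v+1)) = pf n A g (i + p) := e2.symm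
    have := S.occB p le_rfl _ hsv2.1 e2'
    obtain ⟨-, s2, s3⟩ := hsv
    have hp := S.hp
    omega
  · rw [f1, g1]
    have h3 := S.E3 0 (by omega)
    have h1 := S.E1 0 (by omega)
    simpa using h3.trans h1.symm
  · rw [f1, g1]
    have h3 := S.E3 0 (by omega)
    have h1 := S.E2 0 (by omega)
    simpa using h3.trans h1.symm

end Main

section GE

variable {n : ℕ} {A B : Fin n → Γ} {g : Γ} {i i' j j' p : ℕ} {A' B' : Fin (n - 2*p) → Γ}

lemma geL1 (S : Setup Γ n A B g i i' j j' p)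
    (ha' : ∀ k, k < n - 2*p → pf (n-2*p) A' g k = pf n A g (unc i i' p k))
    (hb' : ∀ k, k < n - 2*p → pf (n-2*p) B' g k = pf n B g (unc j j' p k))
    {I' : Set (ℕ × ℕ)} (hI' : IsIndep (n-2*p) A' B' I')
    {u1 v1 u2 v2 : ℕ} (h1 : (u1, v1) ∈ I') (h2 : (u2, v2) ∈ I')
    (e : unc i i' p u2 = unc i i' p u1 + 1) (ne : unc j j' p v2 ≠ unc j j' p v1 + 1) :
    False := by
  have hv1' : IsVertex (n-2*p) A' B' u1 v1 := hI'.1 _ h1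
  have hv2' : IsVertex (n-2*p) A' B' u2 v2 := hI'.1 _ h2
  have hbu1 : u1 + 1 < n - 2*p := (vertex_lt hv1').1
  have hbv1 : v1 + 1 < n - 2*p := (vertex_lt hv1').2
  have hbu2 : u2 + 1 < n - 2*p := (vertex_lt hv2').1
  have hbv2 : v2 + 1 < n - 2*p := (vertex_lt hv2').2
  have lift1 : IsVertex n A B (unc i i' p u1) (unc j j' p v1) := lift S ha' hb' hv1'
  have hu21 : u2 = u1 + 1 := by
    rcases Nat.lt_trichotomy u2 (u1+1) with h | h | h
    · rcases Nat.lt_or_ge u2 u1 with hh | hh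
      · have := unc_lt_of_lt (i := i) (i' := i') (p := p) hh; omega
      · have he : u2 = u1 := by omega
        rw [he] at e; omega
    · exact h
    · have t1 := unc_lt_of_lt (i := i) (i' := i') (p := p) (show u1 < u1 + 1 by omega)
      have t2 := unc_lt_of_lt (i := i) (i' := i') (p := p) h
      omega
  subst hu21
  rcases unc_succ S.sepA S.bndA S.hp hbu1 with ⟨f1, f2, f3⟩ | ⟨f1, f2⟩ | ⟨f1, f2⟩
  · have hvne : v2 ≠ v1 + 1 := by
      intro hveq
      subst hveq
      rcases unc_succ S.sepB S.bndB S.hp hbv1 with ⟨g1, g2, g3⟩ | ⟨g1, g2⟩ | ⟨g1, g2⟩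
      · exact ne g1
      · have hor := clB S.swap (vertex_symm lift1) g1
        have hs2 : Surv n i i' p (unc i i' p (u1+1)) := surv_unc S.sepA S.bndA hbu1
        rw [f1] at hs2
        obtain ⟨s1, s2, s3⟩ := hs2
        have hsp := S.hp
        rcases hor with h | h <;> omega
      · have hor := clB' S.swap (vertex_symm lift1) g1
        have hs2 : Surv n i i' p (unc i i' p (u1+1)) := surv_unc S.sepA S.bndA hbu1
        rw [f1] at hs2
        obtain ⟨s1, s2, s3⟩ := hs2
        have hsp := S.hp
        rcases hor with h | h <;> omega
    exact hI'.2 _ h1 _ h2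
      (adj_intro hv1' hv2' 1 (by omega) (Or.inl ⟨by omega, by omega⟩))
  · have := S.hp; omega
  · have := S.hp; omega

lemma geL2 (S : Setup Γ n A B g i i' j j' p)
    (ha' : ∀ k, k < n - 2*p → pf (n-2*p) A' g k = pf n A g (unc i i' p k))
    (hb' : ∀ k, k < n - 2*p → pf (n-2*p) B' g k = pf n B g (unc j j' p k))
    {I' : Set (ℕ × ℕ)} (hI' : IsIndep (n-2*p) A' B' I')
    {u1 v1 u2 v2 : ℕ} (h1 : (u1, v1) ∈ I') (h2 : (u2, v2) ∈ I')
    (e : unc j j' p v2 = unc j j' p v1 + 1) (ne : unc i i' p u2 ≠ unc i i' p u1 + 1) :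
    False := by
  have hv1' : IsVertex (n-2*p) A' B' u1 v1 := hI'.1 _ h1
  have hv2' : IsVertex (n-2*p) A' B' u2 v2 := hI'.1 _ h2
  have hbu1 : u1 + 1 < n - 2*p := (vertex_lt hv1').1
  have hbv1 : v1 + 1 < n - 2*p := (vertex_lt hv1').2
  have hbu2 : u2 + 1 < n - 2*p := (vertex_lt hv2').1
  have hbv2 : v2 + 1 < n - 2*p := (vertex_lt hv2').2
  have lift1 : IsVertex n A B (unc i i' p u1) (unc j j' p v1) := lift S ha' hb' hv1'
  have hv21 : v2 = v1 + 1 := by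
    rcases Nat.lt_trichotomy v2 (v1+1) with h | h | h
    · rcases Nat.lt_or_ge v2 v1 with hh | hh
      · have := unc_lt_of_lt (i := j) (i' := j') (p := p) hh; omega
      · have he : v2 = v1 := by omega
        rw [he] at e; omega
    · exact h
    · have t1 := unc_lt_of_lt (i := j) (i' := j') (p := p) (show v1 < v1 + 1 by omega)
      have t2 := unc_lt_of_lt (i := j) (i' := j') (p := p) h
      omega
  subst hv21
  rcases unc_succ S.sepB S.bndB S.hp hbv1 with ⟨f1, f2, f3⟩ | ⟨f1, f2⟩ | ⟨f1, f2⟩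
  · have hune : u2 ≠ u1 + 1 := by
      intro hueq
      subst hueq
      rcases unc_succ S.sepA S.bndA S.hp hbu1 with ⟨g1, g2, g3⟩ | ⟨g1, g2⟩ | ⟨g1, g2⟩
      · exact ne g1
      · have hor := clB S lift1 g1
        have hs2 : Surv n j j' p (unc j j' p (v1+1)) := surv_unc S.sepB S.bndB hbv1
        rw [f1] at hs2
        obtain ⟨s1, s2, s3⟩ := hs2
        have hsp := S.hp
        rcases hor with h | h <;> omega
      · have hor := clB' S lift1 g1
        have hs2 : Surv n j j' p (unc j j' p (v1+1)) := surv_unc S.sepB S.bndB hbv1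
        rw [f1] at hs2
        obtain ⟨s1, s2, s3⟩ := hs2
        have hsp := S.hp
        rcases hor with h | h <;> omega
    exact hI'.2 _ h1 _ h2
      (adj_intro hv1' hv2' 1 (by omega) (Or.inr ⟨by omega, by omega⟩))
  · have := S.hp; omega
  · have := S.hp; omega

lemma geL0 (S : Setup Γ n A B g i i' j j' p)
    {I' : Set (ℕ × ℕ)} (hI' : IsIndep (n-2*p) A' B' I')
    {u1 v1 u2 v2 : ℕ} (h1 : (u1, v1) ∈ I') (h2 : (u2, v2) ∈ I')
    (e : unc i i' p u2 = unc i i' p u1) (ne : unc j j' p v2 ≠ unc j j' p v1) :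
    False := by
  have hv1' : IsVertex (n-2*p) A' B' u1 v1 := hI'.1 _ h1
  have hv2' : IsVertex (n-2*p) A' B' u2 v2 := hI'.1 _ h2
  have hu : u2 = u1 := by
    have c1 := cut_unc (n := n) S.sepA (show u1 < n - 2*p by have := (vertex_lt hv1').1; omega)
    have c2 := cut_unc (n := n) S.sepA (show u2 < n - 2*p by have := (vertex_lt hv2').1; omega)
    rw [e] at c2; omega
  have hv : v2 ≠ v1 := by intro h; rw [h] at ne; exact ne rfl
  exact hI'.2 _ h1 _ h2
    (adj_intro hv1' hv2' 0 (by omega) (Or.inl ⟨by omega, by omega⟩))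

lemma geL0' (S : Setup Γ n A B g i i' j j' p)
    {I' : Set (ℕ × ℕ)} (hI' : IsIndep (n-2*p) A' B' I')
    {u1 v1 u2 v2 : ℕ} (h1 : (u1, v1) ∈ I') (h2 : (u2, v2) ∈ I')
    (e : unc j j' p v2 = unc j j' p v1) (ne : unc i i' p u2 ≠ unc i i' p u1) :
    False := by
  have hv1' : IsVertex (n-2*p) A' B' u1 v1 := hI'.1 _ h1
  have hv2' : IsVertex (n-2*p) A' B' u2 v2 := hI'.1 _ h2
  have hv : v2 = v1 := by
    have c1 := cut_unc (n := n) S.sepB (show v1 < n - 2*p by have := (vertex_lt hv1').2; omega)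
    have c2 := cut_unc (n := n) S.sepB (show v2 < n - 2*p by have := (vertex_lt hv2').2; omega)
    rw [e] at c2; omega
  have hu : u2 ≠ u1 := by intro h; rw [h] at ne; exact ne rfl
  exact hI'.2 _ h1 _ h2
    (adj_intro hv1' hv2' 0 (by omega) (Or.inr ⟨by omega, by omega⟩))

lemma lift_indep (S : Setup Γ n A B g i i' j j' p)
    (ha' : ∀ k, k < n - 2*p → pf (n-2*p) A' g k = pf n A g (unc i i' p k))
    (hb' : ∀ k, k < n - 2*p → pf (n-2*p) B' g k = pf n B g (unc j j' p k))
    {I' : Set (ℕ × ℕ)} (hI' : IsIndep (n-2*p) A' B' I')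
    {w1 w2 : ℕ × ℕ} (hw1 : w1 ∈ I') (hw2 : w2 ∈ I') :
    ¬ ConflictAdj n A B (unc i i' p w1.1, unc j j' p w1.2) (unc i i' p w2.1, unc j j' p w2.2) := by
  rintro ⟨-, -, -, s, hs, (⟨d1, d2⟩ | ⟨d1, d2⟩)⟩ <;> simp only at d1 d2
  · rcases hs with rfl | rfl | rfl
    · exact geL1 S ha' hb' hI' hw2 hw1 (by omega) (by omega)
    · exact geL0 S hI' hw1 hw2 (by omega) (by omega)
    · exact geL1 S ha' hb' hI' hw1 hw2 (by omega) (by omega)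
  · rcases hs with rfl | rfl | rfl
    · exact geL2 S ha' hb' hI' hw2 hw1 (by omega) (by omega)
    · exact geL0' S hI' hw1 hw2 (by omega) (by omega)
    · exact geL2 S ha' hb' hI' hw1 hw2 (by omega) (by omega)

end GE

section LiftDiag

variable {n : ℕ} {A B : Fin n → Γ} {g : Γ} {i i' j j' p : ℕ} {A' B' : Fin (n - 2*p) → Γ}

lemma lift_class (S : Setup Γ n A B g i i' j j' p) {X Y : ℕ}
    (hv : IsVertex n A B X Y) (hsX : Surv n i i' p X) (hsY : Surv n j j' p Y) :
    (X+1 = i ∧ (Y+1 = j ∨ Y+1 = j')) ∨ (X+1 = i' ∧ (Y+1 = j ∨ Y+1 = j')) ∨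
    (X = i+p ∧ (Y = j+p ∨ Y = j'+p)) ∨ (X = i'+p ∧ (Y = j+p ∨ Y = j'+p)) ∨
    (X+1 ≠ i ∧ X+1 ≠ i' ∧ X ≠ i+p ∧ X ≠ i'+p ∧
     Y+1 ≠ j ∧ Y+1 ≠ j' ∧ Y ≠ j+p ∧ Y ≠ j'+p) := by
  by_cases c1 : X + 1 = i
  · exact Or.inl ⟨c1, clB S hv c1⟩
  by_cases c2 : X + 1 = i'
  · exact Or.inr (Or.inl ⟨c2, clB' S hv c2⟩)
  by_cases c3 : X = i + p
  · exact Or.inr (Or.inr (Or.inl ⟨c3, clC S hv c3⟩))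
  by_cases c4 : X = i' + p
  · exact Or.inr (Or.inr (Or.inr (Or.inl ⟨c4, clC' S hv c4⟩)))
  refine Or.inr (Or.inr (Or.inr (Or.inr ⟨c1, c2, c3, c4, ?_, ?_, ?_, ?_⟩)))
  · intro h; rcases clB S.swap (vertex_symm hv) h with hh | hh <;> omega
  · intro h; rcases clB' S.swap (vertex_symm hv) h with hh | hh <;> omega
  · intro h; rcases clC S.swap (vertex_symm hv) h with hh | hh <;> omega
  · intro h; rcases clC' S.swap (vertex_symm hv) h with hh | hh <;> omega

lemma lift_diag (S : Setup Γ n A B g i i' j j' p) {X Y : ℕ}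
    (hv : IsVertex n A B X Y) (hsX : Surv n i i' p X) (hsY : Surv n j j' p Y)
    {c d : ℕ} (hcd : (c = j ∧ d = j') ∨ (c = j' ∧ d = j))
    (hno : ¬ ((X+1 = i ∧ Y+1 = d) ∨ (X+1 = i' ∧ Y+1 = c) ∨
              (X = i+p ∧ Y = d+p) ∨ (X = i'+p ∧ Y = c+p)))
    {q : ℕ} (hq : q < p) :
    ¬ ConflictAdj n A B (X, Y) (i+q, c+q) ∧ ¬ ConflictAdj n A B (X, Y) (i'+q, d+q) := by
  have hsepA := S.sepA
  have hsepB := S.sepB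
  have hp := S.hp
  rcases lift_class S hv hsX hsY with ⟨h1, h2⟩ | ⟨h1, h2⟩ | ⟨h1, h2⟩ | ⟨h1, h2⟩ |
    ⟨e1, e2, e3, e4, e5, e6, e7, e8⟩ <;>
    rcases hcd with ⟨hc, hd⟩ | ⟨hc, hd⟩
  · -- T1 main
    have hYc : Y + 1 = c := by
      rcases h2 with h | h
      · omega
      · exact absurd (Or.inl ⟨h1, by omega⟩) hno
    exact ⟨not_adj_shift (by omega), not_adj_far (by omega) (by omega)⟩
  · -- T1 anti
    have hYc : Y + 1 = c := by
      rcases h2 with h | h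
      · exact absurd (Or.inl ⟨h1, by omega⟩) hno
      · omega
    refine ⟨not_adj_shift (by omega), ?_⟩
    by_cases hdeg : j + q + 3 ≤ j'
    · exact not_adj_far (by omega) (by omega)
    · exfalso
      have hY : Y = j + p := by omega
      rcases clC S.swap (vertex_symm hv) hY with hh | hh <;> omega
  · -- T2 main
    have hYd : Y + 1 = d := by
      rcases h2 with h | h
      · exact absurd (Or.inr (Or.inl ⟨h1, by omega⟩)) hno
      · omega
    refine ⟨?_, not_adj_shift (by omega)⟩
    by_cases hdg1 : i + q + 3 ≤ i'
    · by_cases hdg2 : j + q + 3 ≤ j'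
      · exact not_adj_far (by omega) (by omega)
      · exfalso
        have hY : Y = j + p := by omega
        rcases clC S.swap (vertex_symm hv) hY with hh | hh <;> omega
    · have hX : X = i + p := by omega
      rcases clC S hv hX with hh | hh
      · exact not_adj_shift (by omega)
      · exfalso; omega
  · -- T2 anti
    have hYd : Y + 1 = d := by
      rcases h2 with h | h
      · omega
      · exact absurd (Or.inr (Or.inl ⟨h1, by omega⟩)) hno
    refine ⟨?_, not_adj_shift (by omega)⟩
    by_cases hdg1 : i + q + 3 ≤ i'
    · exact not_adj_far (by omega) (by omega)
    · have hX : X = i + p := by omega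
      rcases clC S hv hX with hh | hh <;> [exfalso; exfalso] <;> omega
  · -- T3 main
    have hYc : Y = c + p := by
      rcases h2 with h | h
      · omega
      · exact absurd (Or.inr (Or.inr (Or.inl ⟨h1, by omega⟩))) hno
    refine ⟨not_adj_shift (by omega), ?_⟩
    by_cases hdg1 : i + p + 2 ≤ i' + q
    · by_cases hdg2 : j + p + 2 ≤ j' + q
      · exact not_adj_far (by omega) (by omega)
      · exfalso
        have hY1 : Y + 1 = j' := by omega
        rcases clB' S.swap (vertex_symm hv) hY1 with hh | hh <;> omega
    · have hX1 : X + 1 = i' := by omega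
      rcases clB' S hv hX1 with hh | hh
      · exfalso; omega
      · exact not_adj_shift (by omega)
  · -- T3 anti
    have hYc : Y = c + p := by
      rcases h2 with h | h
      · exact absurd (Or.inr (Or.inr (Or.inl ⟨h1, by omega⟩))) hno
      · omega
    refine ⟨not_adj_shift (by omega), ?_⟩
    by_cases hdg1 : i + p + 2 ≤ i' + q
    · exact not_adj_far (by omega) (by omega)
    · have hX1 : X + 1 = i' := by omega
      rcases clB' S hv hX1 with hh | hh <;> [exfalso; exfalso] <;> omega
  · -- T4 main
    have hYd : Y = d + p := by
      rcases h2 with h | h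
      · exact absurd (Or.inr (Or.inr (Or.inr ⟨h1, by omega⟩))) hno
      · omega
    exact ⟨not_adj_far (by omega) (by omega), not_adj_shift (by omega)⟩
  · -- T4 anti
    have hYd : Y = d + p := by
      rcases h2 with h | h
      · omega
      · exact absurd (Or.inr (Or.inr (Or.inr ⟨h1, by omega⟩))) hno
    refine ⟨?_, not_adj_shift (by omega)⟩
    by_cases hdg2 : j + p + 2 ≤ j' + q
    · exact not_adj_far (by omega) (by omega)
    · exfalso
      have hY1 : Y + 1 = j' := by omega
      rcases clB' S.swap (vertex_symm hv) hY1 with hh | hh <;> omega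
  · -- T5 main
    obtain ⟨hX1, hX2, hX3⟩ := hsX
    obtain ⟨hY1, hY2, hY3⟩ := hsY
    exact ⟨not_adj_far (by omega) (by omega), not_adj_far (by omega) (by omega)⟩
  · -- T5 anti
    obtain ⟨hX1, hX2, hX3⟩ := hsX
    obtain ⟨hY1, hY2, hY3⟩ := hsY
    exact ⟨not_adj_far (by omega) (by omega), not_adj_far (by omega) (by omega)⟩

end LiftDiag

section GEDir

variable {n : ℕ} {A B : Fin n → Γ} {g : Γ} {i i' j j' p : ℕ} {A' B' : Fin (n - 2*p) → Γ}

lemma unc_linear (hsep : i + p < i') {u : ℕ} :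
    (u < i ∧ unc i i' p u = u) ∨ (i ≤ u ∧ u + p < i' ∧ unc i i' p u = u + p) ∨
    (i ≤ u ∧ i' ≤ u + p ∧ unc i i' p u = u + 2*p) := by
  simp only [unc]; split_ifs <;> omega

lemma sqVert (S : Setup Γ n A B g i i' j j' p) {q : ℕ} (hq : q < p) :
    IsVertex n A B (i+q) (j+q) ∧ IsVertex n A B (i+q) (j'+q) ∧
    IsVertex n A B (i'+q) (j+q) ∧ IsVertex n A B (i'+q) (j'+q) :=
  ⟨(S.sq q hq).2.2.1, (S.sq q hq).2.2.2.1, (S.sq q hq).2.2.2.2.1, (S.sq q hq).2.2.2.2.2⟩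

lemma ge_aux (S : Setup Γ n A B g i i' j j' p)
    (ha' : ∀ k, k < n - 2*p → pf (n-2*p) A' g k = pf n A g (unc i i' p k))
    (hb' : ∀ k, k < n - 2*p → pf (n-2*p) B' g k = pf n B g (unc j j' p k))
    {I' : Set (ℕ × ℕ)} (hI' : IsIndep (n-2*p) A' B' I')
    {c d : ℕ} (hcd : (c = j ∧ d = j') ∨ (c = j' ∧ d = j))
    (Hno : ∀ w ∈ I', ¬ ((unc i i' p w.1 + 1 = i ∧ unc j j' p w.2 + 1 = d) ∨
        (unc i i' p w.1 + 1 = i' ∧ unc j j' p w.2 + 1 = c) ∨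
        (unc i i' p w.1 = i + p ∧ unc j j' p w.2 = d + p) ∨
        (unc i i' p w.1 = i' + p ∧ unc j j' p w.2 = c + p))) :
    I'.ncard + 2*p ≤ alphaG n A B := by
  classical
  have hsepA := S.sepA
  have hsepB := S.sepB
  have hp := S.hp
  set F : ℕ × ℕ → ℕ × ℕ := fun w => (unc i i' p w.1, unc j j' p w.2) with hF
  set D1 : Set (ℕ × ℕ) := (fun q => ((i+q : ℕ), (c+q : ℕ))) '' (Set.Iio p) with hD1
  set D2 : Set (ℕ × ℕ) := (fun q => ((i'+q : ℕ), (d+q : ℕ))) '' (Set.Iio p) with hD2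
  -- bounds for members of I'
  have hbnd : ∀ w ∈ I', w.1 < n - 2*p ∧ w.2 < n - 2*p := by
    intro w hw
    have := vertex_lt (hI'.1 w hw)
    omega
  have hsurv : ∀ w ∈ I', Surv n i i' p (unc i i' p w.1) ∧ Surv n j j' p (unc j j' p w.2) := by
    intro w hw
    exact ⟨surv_unc S.sepA S.bndA (hbnd w hw).1, surv_unc S.sepB S.bndB (hbnd w hw).2⟩
  have hlift : ∀ w ∈ I', IsVertex n A B (unc i i' p w.1) (unc j j' p w.2) := by
    intro w hw
    exact lift S ha' hb' (hI'.1 w hw)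
  have hD1v : ∀ q, q < p → IsVertex n A B (i+q) (c+q) := by
    intro q hq
    rcases hcd with ⟨hc, hd⟩ | ⟨hc, hd⟩ <;> rw [hc]
    · exact (sqVert S hq).1
    · exact (sqVert S hq).2.1
  have hD2v : ∀ q, q < p → IsVertex n A B (i'+q) (d+q) := by
    intro q hq
    rcases hcd with ⟨hc, hd⟩ | ⟨hc, hd⟩ <;> rw [hd]
    · exact (sqVert S hq).2.2.2
    · exact (sqVert S hq).2.2.1
  have hindep : IsIndep n A B ((F '' I') ∪ (D1 ∪ D2)) := by
    constructor
    · rintro v (⟨w, hw, rfl⟩ | (⟨q, hq, rfl⟩ | ⟨q, hq, rfl⟩))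
      · exact hlift w hw
      · exact hD1v q (by simpa using hq)
      · exact hD2v q (by simpa using hq)
    · rintro v (⟨w1, hw1, rfl⟩ | (⟨q1, hq1, rfl⟩ | ⟨q1, hq1, rfl⟩))
        w (⟨w2, hw2, rfl⟩ | (⟨q2, hq2, rfl⟩ | ⟨q2, hq2, rfl⟩))
      · exact lift_indep S ha' hb' hI' hw1 hw2
      · exact (lift_diag S (hlift w1 hw1) (hsurv w1 hw1).1 (hsurv w1 hw1).2 hcd
          (Hno w1 hw1) (by simpa using hq2)).1
      · exact (lift_diag S (hlift w1 hw1) (hsurv w1 hw1).1 (hsurv w1 hw1).2 hcd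
          (Hno w1 hw1) (by simpa using hq2)).2
      · intro hadj
        exact (lift_diag S (hlift w2 hw2) (hsurv w2 hw2).1 (hsurv w2 hw2).2 hcd
          (Hno w2 hw2) (by simpa using hq1)).1 (adj_symm hadj)
      · exact not_adj_shift (by simp <;> omega)
      · simp only [Set.mem_Iio] at hq1 hq2
        refine not_adj_far (by simp <;> omega) ?_
        rcases hcd with ⟨hc, hd⟩ | ⟨hc, hd⟩ <;> simp <;> omega
      · intro hadj
        exact (lift_diag S (hlift w2 hw2) (hsurv w2 hw2).1 (hsurv w2 hw2).2 hcd
          (Hno w2 hw2) (by simpa using hq1)).2 (adj_symm hadj)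
      · simp only [Set.mem_Iio] at hq1 hq2
        refine not_adj_far (by simp <;> omega) ?_
        rcases hcd with ⟨hc, hd⟩ | ⟨hc, hd⟩ <;> simp <;> omega
      · exact not_adj_shift (by simp <;> omega)
  -- cardinality
  have hIfin : I'.Finite := indep_finite hI'
  have hFinj : Set.InjOn F I' := by
    intro w1 h1 w2 h2 he
    have hb1 := hbnd w1 h1
    have hb2 := hbnd w2 h2
    have e1 : unc i i' p w1.1 = unc i i' p w2.1 := congrArg Prod.fst he
    have e2 : unc j j' p w1.2 = unc j j' p w2.2 := congrArg Prod.snd he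
    have c1 := cut_unc (n := n) S.sepA hb1.1
    have c2 := cut_unc (n := n) S.sepA hb2.1
    have c3 := cut_unc (n := n) S.sepB hb1.2
    have c4 := cut_unc (n := n) S.sepB hb2.2
    rw [e1] at c1
    rw [e2] at c3
    have : w1.1 = w2.1 := by omega
    have : w1.2 = w2.2 := by omega
    exact Prod.ext (by omega) (by omega)
  have hD1inj : Set.InjOn (fun q => ((i+q : ℕ), (c+q : ℕ))) (Set.Iio p) := by
    intro a _ b _ h
    have : i + a = i + b := congrArg Prod.fst h
    omega
  have hD2inj : Set.InjOn (fun q => ((i'+q : ℕ), (d+q : ℕ))) (Set.Iio p) := by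
    intro a _ b _ h
    have : i' + a = i' + b := congrArg Prod.fst h
    omega
  have hIiop : (Set.Iio p).ncard = p := by
    rw [← Finset.coe_range, Set.ncard_coe_finset, Finset.card_range]
  have hcard1 : D1.ncard = p := by rw [hD1, Set.ncard_image_of_injOn hD1inj, hIiop]
  have hcard2 : D2.ncard = p := by rw [hD2, Set.ncard_image_of_injOn hD2inj, hIiop]
  have hdisj12 : Disjoint D1 D2 := by
    rw [Set.disjoint_left]
    rintro v ⟨q1, hq1, rfl⟩ ⟨q2, hq2, he⟩
    simp only [Set.mem_Iio] at hq1 hq2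
    have : i' + q2 = i + q1 := congrArg Prod.fst he
    omega
  have hdisjFD : Disjoint (F '' I') (D1 ∪ D2) := by
    rw [Set.disjoint_left]
    rintro v ⟨w, hw, rfl⟩ (⟨q, hq, he⟩ | ⟨q, hq, he⟩) <;> simp only [Set.mem_Iio] at hq
    · have h1 : i + q = unc i i' p w.1 := congrArg Prod.fst he
      have := (hsurv w hw).1
      obtain ⟨-, s2, s3⟩ := this
      omega
    · have h1 : i' + q = unc i i' p w.1 := congrArg Prod.fst he
      have := (hsurv w hw).1
      obtain ⟨-, s2, s3⟩ := this
      omega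
  have hfinD1 : D1.Finite := (Set.finite_Iio p).image _
  have hfinD2 : D2.Finite := (Set.finite_Iio p).image _
  have hcard : ((F '' I') ∪ (D1 ∪ D2)).ncard = I'.ncard + 2*p := by
    rw [Set.ncard_union_eq hdisjFD (hIfin.image F) (hfinD1.union hfinD2),
      Set.ncard_union_eq hdisj12 hfinD1 hfinD2,
      Set.ncard_image_of_injOn hFinj, hcard1, hcard2]
    omega
  calc I'.ncard + 2*p = ((F '' I') ∪ (D1 ∪ D2)).ncard := hcard.symm
    _ ≤ alphaG n A B := le_alphaG hindep

end GEDir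

section Clash

variable {n : ℕ} {A B : Fin n → Γ} {g : Γ} {i i' j j' p : ℕ} {A' B' : Fin (n - 2*p) → Γ}

lemma clash (S : Setup Γ n A B g i i' j j' p)
    {I' : Set (ℕ × ℕ)} (hI' : IsIndep (n-2*p) A' B' I')
    {w1 w0 : ℕ × ℕ} (hw1 : w1 ∈ I') (hw0 : w0 ∈ I')
    (hm : (unc i i' p w1.1 + 1 = i ∧ unc j j' p w1.2 + 1 = j) ∨
          (unc i i' p w1.1 + 1 = i' ∧ unc j j' p w1.2 + 1 = j') ∨
          (unc i i' p w1.1 = i + p ∧ unc j j' p w1.2 = j + p) ∨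
          (unc i i' p w1.1 = i' + p ∧ unc j j' p w1.2 = j' + p))
    (ha : (unc i i' p w0.1 + 1 = i ∧ unc j j' p w0.2 + 1 = j') ∨
          (unc i i' p w0.1 + 1 = i' ∧ unc j j' p w0.2 + 1 = j) ∨
          (unc i i' p w0.1 = i + p ∧ unc j j' p w0.2 = j' + p) ∨
          (unc i i' p w0.1 = i' + p ∧ unc j j' p w0.2 = j + p)) : False := by
  have hsepA := S.sepA
  have hsepB := S.sepB
  have hp := S.hp
  have hv1 : IsVertex (n-2*p) A' B' w1.1 w1.2 := hI'.1 _ hw1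
  have hv0 : IsVertex (n-2*p) A' B' w0.1 w0.2 := hI'.1 _ hw0
  have L1 := unc_linear (i := i) (i' := i') (p := p) (u := w1.1) S.sepA
  have L2 := unc_linear (i := j) (i' := j') (p := p) (u := w1.2) S.sepB
  have L3 := unc_linear (i := i) (i' := i') (p := p) (u := w0.1) S.sepA
  have L4 := unc_linear (i := j) (i' := j') (p := p) (u := w0.2) S.sepB
  have hm' : (w1.1 + 1 = i ∧ w1.2 + 1 = j) ∨ (w1.1 + 1 + p = i' ∧ w1.2 + 1 + p = j') ∨
      (w1.1 = i ∧ w1.2 = j) ∨ (w1.1 + p = i' ∧ w1.2 + p = j') := by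
    rcases hm with ⟨h1, h2⟩ | ⟨h1, h2⟩ | ⟨h1, h2⟩ | ⟨h1, h2⟩
    · exact Or.inl ⟨by rcases L1 with ⟨_,h⟩|⟨_,_,h⟩|⟨_,_,h⟩ <;> omega,
        by rcases L2 with ⟨_,h⟩|⟨_,_,h⟩|⟨_,_,h⟩ <;> omega⟩
    · exact Or.inr (Or.inl ⟨by rcases L1 with ⟨_,h⟩|⟨_,_,h⟩|⟨_,_,h⟩ <;> omega,
        by rcases L2 with ⟨_,h⟩|⟨_,_,h⟩|⟨_,_,h⟩ <;> omega⟩)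
    · exact Or.inr (Or.inr (Or.inl ⟨by rcases L1 with ⟨_,h⟩|⟨_,_,h⟩|⟨_,_,h⟩ <;> omega,
        by rcases L2 with ⟨_,h⟩|⟨_,_,h⟩|⟨_,_,h⟩ <;> omega⟩))
    · exact Or.inr (Or.inr (Or.inr ⟨by rcases L1 with ⟨_,h⟩|⟨_,_,h⟩|⟨_,_,h⟩ <;> omega,
        by rcases L2 with ⟨_,h⟩|⟨_,_,h⟩|⟨_,_,h⟩ <;> omega⟩))
  have ha' : (w0.1 + 1 = i ∧ w0.2 + 1 + p = j') ∨ (w0.1 + 1 + p = i' ∧ w0.2 + 1 = j) ∨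
      (w0.1 = i ∧ w0.2 + p = j') ∨ (w0.1 + p = i' ∧ w0.2 = j) := by
    rcases ha with ⟨h1, h2⟩ | ⟨h1, h2⟩ | ⟨h1, h2⟩ | ⟨h1, h2⟩
    · exact Or.inl ⟨by rcases L3 with ⟨_,h⟩|⟨_,_,h⟩|⟨_,_,h⟩ <;> omega,
        by rcases L4 with ⟨_,h⟩|⟨_,_,h⟩|⟨_,_,h⟩ <;> omega⟩
    · exact Or.inr (Or.inl ⟨by rcases L3 with ⟨_,h⟩|⟨_,_,h⟩|⟨_,_,h⟩ <;> omega,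
        by rcases L4 with ⟨_,h⟩|⟨_,_,h⟩|⟨_,_,h⟩ <;> omega⟩)
    · exact Or.inr (Or.inr (Or.inl ⟨by rcases L3 with ⟨_,h⟩|⟨_,_,h⟩|⟨_,_,h⟩ <;> omega,
        by rcases L4 with ⟨_,h⟩|⟨_,_,h⟩|⟨_,_,h⟩ <;> omega⟩))
    · exact Or.inr (Or.inr (Or.inr ⟨by rcases L3 with ⟨_,h⟩|⟨_,_,h⟩|⟨_,_,h⟩ <;> omega,
        by rcases L4 with ⟨_,h⟩|⟨_,_,h⟩|⟨_,_,h⟩ <;> omega⟩))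
  clear hm ha L1 L2 L3 L4
  rcases hm' with ⟨m1, m2⟩ | ⟨m1, m2⟩ | ⟨m1, m2⟩ | ⟨m1, m2⟩ <;>
    rcases ha' with ⟨a1, a2⟩ | ⟨a1, a2⟩ | ⟨a1, a2⟩ | ⟨a1, a2⟩
  · exact hI'.2 _ hw1 _ hw0 (adj_intro hv1 hv0 0 (by omega) (Or.inl ⟨by omega, by omega⟩))
  · exact hI'.2 _ hw1 _ hw0 (adj_intro hv1 hv0 0 (by omega) (Or.inr ⟨by omega, by omega⟩))
  · exact hI'.2 _ hw1 _ hw0 (adj_intro hv1 hv0 1 (by omega) (Or.inl ⟨by omega, by omega⟩))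
  · exact hI'.2 _ hw1 _ hw0 (adj_intro hv1 hv0 1 (by omega) (Or.inr ⟨by omega, by omega⟩))
  · exact hI'.2 _ hw1 _ hw0 (adj_intro hv1 hv0 0 (by omega) (Or.inr ⟨by omega, by omega⟩))
  · exact hI'.2 _ hw1 _ hw0 (adj_intro hv1 hv0 0 (by omega) (Or.inl ⟨by omega, by omega⟩))
  · exact hI'.2 _ hw1 _ hw0 (adj_intro hv1 hv0 1 (by omega) (Or.inr ⟨by omega, by omega⟩))
  · exact hI'.2 _ hw1 _ hw0 (adj_intro hv1 hv0 1 (by omega) (Or.inl ⟨by omega, by omega⟩))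
  · exact hI'.2 _ hw1 _ hw0 (adj_intro hv1 hv0 (-1) (by omega) (Or.inl ⟨by omega, by omega⟩))
  · exact hI'.2 _ hw1 _ hw0 (adj_intro hv1 hv0 (-1) (by omega) (Or.inr ⟨by omega, by omega⟩))
  · exact hI'.2 _ hw1 _ hw0 (adj_intro hv1 hv0 0 (by omega) (Or.inl ⟨by omega, by omega⟩))
  · exact hI'.2 _ hw1 _ hw0 (adj_intro hv1 hv0 0 (by omega) (Or.inr ⟨by omega, by omega⟩))
  · exact hI'.2 _ hw1 _ hw0 (adj_intro hv1 hv0 (-1) (by omega) (Or.inr ⟨by omega, by omega⟩))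
  · exact hI'.2 _ hw1 _ hw0 (adj_intro hv1 hv0 (-1) (by omega) (Or.inl ⟨by omega, by omega⟩))
  · exact hI'.2 _ hw1 _ hw0 (adj_intro hv1 hv0 0 (by omega) (Or.inr ⟨by omega, by omega⟩))
  · exact hI'.2 _ hw1 _ hw0 (adj_intro hv1 hv0 0 (by omega) (Or.inl ⟨by omega, by omega⟩))

lemma ge_dir (S : Setup Γ n A B g i i' j j' p)
    (ha' : ∀ k, k < n - 2*p → pf (n-2*p) A' g k = pf n A g (unc i i' p k))
    (hb' : ∀ k, k < n - 2*p → pf (n-2*p) B' g k = pf n B g (unc j j' p k)) :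
    alphaG (n - 2*p) A' B' + 2*p ≤ alphaG n A B := by
  obtain ⟨I', hI', hcard⟩ := alphaG_spec A' B'
  rw [← hcard]
  by_cases hor : ∃ w ∈ I',
      (unc i i' p w.1 + 1 = i ∧ unc j j' p w.2 + 1 = j') ∨
      (unc i i' p w.1 + 1 = i' ∧ unc j j' p w.2 + 1 = j) ∨
      (unc i i' p w.1 = i + p ∧ unc j j' p w.2 = j' + p) ∨
      (unc i i' p w.1 = i' + p ∧ unc j j' p w.2 = j + p)
  · obtain ⟨w0, hw0, hty⟩ := hor
    apply ge_aux S ha' hb' hI' (c := j') (d := j) (Or.inr ⟨rfl, rfl⟩)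
    intro w hw hcon
    apply clash S hI' hw hw0 _ hty
    rcases hcon with ⟨h1, h2⟩ | ⟨h1, h2⟩ | ⟨h1, h2⟩ | ⟨h1, h2⟩
    · exact Or.inl ⟨h1, h2⟩
    · exact Or.inr (Or.inl ⟨h1, h2⟩)
    · exact Or.inr (Or.inr (Or.inl ⟨h1, h2⟩))
    · exact Or.inr (Or.inr (Or.inr ⟨h1, h2⟩))
  · apply ge_aux S ha' hb' hI' (c := j) (d := j') (Or.inl ⟨rfl, rfl⟩)
    intro w hw hcon
    exact hor ⟨w, hw, hcon⟩

end Clash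

section LECore

variable {n : ℕ} {A B : Fin n → Γ} {g : Γ} {i i' j j' p : ℕ}

/-- conclusion: `v` is a left-boundary vertex and `w` a right-boundary vertex of
opposite orientation types. -/
def ClashShape (i i' j j' p : ℕ) (v w : ℕ × ℕ) : Prop :=
  (((v.1+1 = i ∧ v.2+1 = j) ∨ (v.1+1 = i' ∧ v.2+1 = j')) ∧
   ((w.1 = i+p ∧ w.2 = j'+p) ∨ (w.1 = i'+p ∧ w.2 = j+p))) ∨
  (((v.1+1 = i ∧ v.2+1 = j') ∨ (v.1+1 = i' ∧ v.2+1 = j)) ∧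
   ((w.1 = i+p ∧ w.2 = j+p) ∨ (w.1 = i'+p ∧ w.2 = j'+p)))

lemma cut_low {x : ℕ} (h : x < i) : cut i i' p x = x := by
  simp only [cut]; split_ifs <;> omega

lemma cut_mid {x : ℕ} (h1 : i ≤ x) (h2 : x < i') (h3 : p ≤ x) :
    cut i i' p x + p = x := by
  simp only [cut]; split_ifs <;> omega

lemma cut_high {x : ℕ} (h0 : i ≤ i') (h1 : i' ≤ x) (h2 : 2*p ≤ x) : cut i i' p x + 2*p = x := by
  simp only [cut]; split_ifs <;> omega

lemma leL1 (S : Setup Γ n A B g i i' j j' p) {I : Set (ℕ × ℕ)} (hI : IsIndep n A B I)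
    {v w : ℕ × ℕ} (hv : v ∈ I) (hw : w ∈ I)
    (hsv1 : Surv n i i' p v.1) (hsv2 : Surv n j j' p v.2)
    (hsw1 : Surv n i i' p w.1) (hsw2 : Surv n j j' p w.2)
    (e : cut i i' p w.1 = cut i i' p v.1 + 1) (ne : cut j j' p w.2 ≠ cut j j' p v.2 + 1) :
    ClashShape i i' j j' p v w := by
  have hvv : IsVertex n A B v.1 v.2 := hI.1 v hv
  have hvw : IsVertex n A B w.1 w.2 := hI.1 w hw
  have hb1 : v.1 + 1 < n := (vertex_lt hvv).1
  have hb2 : v.2 + 1 < n := (vertex_lt hvv).2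
  obtain ⟨x2, hx2s, hx2c, hx2b⟩ := next_cut S.sepA S.bndA S.hp hsv1 hb1
  have hwx2 : w.1 = x2 := surv_eq_of_cut_eq S.sepA hsw1 hx2s (by omega)
  rcases hx2b with ⟨e1, e2, e3⟩ | ⟨e1, e2⟩ | ⟨e1, e2⟩
  · -- no jump : derive contradiction
    exfalso
    by_cases hw2 : w.2 = v.2 + 1
    · obtain ⟨y2, hy2s, hy2c, hy2b⟩ := next_cut S.sepB S.bndB S.hp hsv2 hb2
      rcases hy2b with ⟨f1, f2, f3⟩ | ⟨f1, f2⟩ | ⟨f1, f2⟩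
      · exact ne (by rw [hw2, ← f1]; exact hy2c)
      · -- v.2 + 1 = j, but w.2 = v.2+1 is a survivor
        obtain ⟨s1, s2, s3⟩ := hsw2
        have := S.hp
        omega
      · obtain ⟨s1, s2, s3⟩ := hsw2
        have := S.hp
        omega
    · exact hI.2 v hv w hw (adj_intro hvv hvw 1 (by omega) (Or.inl ⟨by omega, by omega⟩))
  · -- jump at i : v.1 + 1 = i, w.1 = i + p
    have hvb := clB S hvv e1
    have hwb := clC S hvw (by omega)
    rcases hvb with hvb | hvb <;> rcases hwb with hwb | hwb
    · exfalso
      apply ne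
      have hsB := S.sepB
      have hc1 : cut j j' p w.2 + p = w.2 := cut_mid (by omega) (by omega) (by omega)
      have hc2 : cut j j' p v.2 = v.2 := cut_low (by omega)
      omega
    · exact Or.inl ⟨Or.inl ⟨e1, hvb⟩, Or.inl ⟨by omega, hwb⟩⟩
    · exact Or.inr ⟨Or.inl ⟨e1, hvb⟩, Or.inl ⟨by omega, hwb⟩⟩
    · exfalso
      apply ne
      have hsB := S.sepB
      have hpp := S.hp
      have hc1 : cut j j' p w.2 + 2*p = w.2 := cut_high (by omega) (by omega) (by omega)
      have hc2 : cut j j' p v.2 + p = v.2 := cut_mid (by omega) (by omega) (by omega)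
      omega
  · -- jump at i' : v.1 + 1 = i', w.1 = i' + p
    have hvb := clB' S hvv e1
    have hwb := clC' S hvw (by omega)
    rcases hvb with hvb | hvb <;> rcases hwb with hwb | hwb
    · exfalso
      apply ne
      have hsB := S.sepB
      have hc1 : cut j j' p w.2 + p = w.2 := cut_mid (by omega) (by omega) (by omega)
      have hc2 : cut j j' p v.2 = v.2 := cut_low (by omega)
      omega
    · exact Or.inr ⟨Or.inr ⟨e1, hvb⟩, Or.inr ⟨by omega, hwb⟩⟩
    · exact Or.inl ⟨Or.inr ⟨e1, hvb⟩, Or.inr ⟨by omega, hwb⟩⟩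
    · exfalso
      apply ne
      have hsB := S.sepB
      have hpp := S.hp
      have hc1 : cut j j' p w.2 + 2*p = w.2 := cut_high (by omega) (by omega) (by omega)
      have hc2 : cut j j' p v.2 + p = v.2 := cut_mid (by omega) (by omega) (by omega)
      omega

lemma leL2 (S : Setup Γ n A B g i i' j j' p) {I : Set (ℕ × ℕ)} (hI : IsIndep n A B I)
    {v w : ℕ × ℕ} (hv : v ∈ I) (hw : w ∈ I)
    (hsv1 : Surv n i i' p v.1) (hsv2 : Surv n j j' p v.2)
    (hsw1 : Surv n i i' p w.1) (hsw2 : Surv n j j' p w.2)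
    (e : cut j j' p w.2 = cut j j' p v.2 + 1) (ne : cut i i' p w.1 ≠ cut i i' p v.1 + 1) :
    ClashShape i i' j j' p v w := by
  have hvv : IsVertex n A B v.1 v.2 := hI.1 v hv
  have hvw : IsVertex n A B w.1 w.2 := hI.1 w hw
  have hb1 : v.1 + 1 < n := (vertex_lt hvv).1
  have hb2 : v.2 + 1 < n := (vertex_lt hvv).2
  obtain ⟨y2, hy2s, hy2c, hy2b⟩ := next_cut S.sepB S.bndB S.hp hsv2 hb2
  have hwy2 : w.2 = y2 := surv_eq_of_cut_eq S.sepB hsw2 hy2s (by omega)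
  rcases hy2b with ⟨e1, e2, e3⟩ | ⟨e1, e2⟩ | ⟨e1, e2⟩
  · exfalso
    by_cases hw1 : w.1 = v.1 + 1
    · obtain ⟨x2, hx2s, hx2c, hx2b⟩ := next_cut S.sepA S.bndA S.hp hsv1 hb1
      rcases hx2b with ⟨f1, f2, f3⟩ | ⟨f1, f2⟩ | ⟨f1, f2⟩
      · exact ne (by rw [hw1, ← f1]; exact hx2c)
      · obtain ⟨s1, s2, s3⟩ := hsw1
        have := S.hp
        omega
      · obtain ⟨s1, s2, s3⟩ := hsw1
        have := S.hp
        omega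
    · exact hI.2 v hv w hw (adj_intro hvv hvw 1 (by omega) (Or.inr ⟨by omega, by omega⟩))
  · -- jump at j : v.2 + 1 = j, w.2 = j + p
    have hvb := clB S.swap (vertex_symm hvv) e1
    have hwb := clC S.swap (vertex_symm hvw) (by omega)
    rcases hvb with hvb | hvb <;> rcases hwb with hwb | hwb
    · exfalso
      apply ne
      have hsA := S.sepA
      have hc1 : cut i i' p w.1 + p = w.1 := cut_mid (by omega) (by omega) (by omega)
      have hc2 : cut i i' p v.1 = v.1 := cut_low (by omega)
      omega
    · exact Or.inl ⟨Or.inl ⟨hvb, e1⟩, Or.inr ⟨hwb, by omega⟩⟩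
    · exact Or.inr ⟨Or.inr ⟨hvb, e1⟩, Or.inl ⟨hwb, by omega⟩⟩
    · exfalso
      apply ne
      have hsA := S.sepA
      have hpp := S.hp
      have hc1 : cut i i' p w.1 + 2*p = w.1 := cut_high (by omega) (by omega) (by omega)
      have hc2 : cut i i' p v.1 + p = v.1 := cut_mid (by omega) (by omega) (by omega)
      omega
  · -- jump at j' : v.2 + 1 = j', w.2 = j' + p
    have hvb := clB' S.swap (vertex_symm hvv) e1
    have hwb := clC' S.swap (vertex_symm hvw) (by omega)
    rcases hvb with hvb | hvb <;> rcases hwb with hwb | hwb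
    · exfalso
      apply ne
      have hsA := S.sepA
      have hc1 : cut i i' p w.1 + p = w.1 := cut_mid (by omega) (by omega) (by omega)
      have hc2 : cut i i' p v.1 = v.1 := cut_low (by omega)
      omega
    · exact Or.inr ⟨Or.inl ⟨hvb, e1⟩, Or.inr ⟨hwb, by omega⟩⟩
    · exact Or.inl ⟨Or.inr ⟨hvb, e1⟩, Or.inl ⟨hwb, by omega⟩⟩
    · exfalso
      apply ne
      have hsA := S.sepA
      have hpp := S.hp
      have hc1 : cut i i' p w.1 + 2*p = w.1 := cut_high (by omega) (by omega) (by omega)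
      have hc2 : cut i i' p v.1 + p = v.1 := cut_mid (by omega) (by omega) (by omega)
      omega

lemma leL0 (S : Setup Γ n A B g i i' j j' p) {I : Set (ℕ × ℕ)} (hI : IsIndep n A B I)
    {v w : ℕ × ℕ} (hv : v ∈ I) (hw : w ∈ I)
    (hsv1 : Surv n i i' p v.1) (hsv2 : Surv n j j' p v.2)
    (hsw1 : Surv n i i' p w.1) (hsw2 : Surv n j j' p w.2)
    (e : cut i i' p w.1 = cut i i' p v.1) (ne : cut j j' p w.2 ≠ cut j j' p v.2) :
    False := by
  have hvv : IsVertex n A B v.1 v.2 := hI.1 v hv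
  have hvw : IsVertex n A B w.1 w.2 := hI.1 w hw
  have h1 : w.1 = v.1 := surv_eq_of_cut_eq S.sepA hsw1 hsv1 e
  have h2 : w.2 ≠ v.2 := by intro h; rw [h] at ne; exact ne rfl
  exact hI.2 v hv w hw (adj_intro hvv hvw 0 (by omega) (Or.inl ⟨by omega, by omega⟩))

lemma leL0' (S : Setup Γ n A B g i i' j j' p) {I : Set (ℕ × ℕ)} (hI : IsIndep n A B I)
    {v w : ℕ × ℕ} (hv : v ∈ I) (hw : w ∈ I)
    (hsv1 : Surv n i i' p v.1) (hsv2 : Surv n j j' p v.2)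
    (hsw1 : Surv n i i' p w.1) (hsw2 : Surv n j j' p w.2)
    (e : cut j j' p w.2 = cut j j' p v.2) (ne : cut i i' p w.1 ≠ cut i i' p v.1) :
    False := by
  have hvv : IsVertex n A B v.1 v.2 := hI.1 v hv
  have hvw : IsVertex n A B w.1 w.2 := hI.1 w hw
  have h1 : w.2 = v.2 := surv_eq_of_cut_eq S.sepB hsw2 hsv2 e
  have h2 : w.1 ≠ v.1 := by intro h; rw [h] at ne; exact ne rfl
  exact hI.2 v hv w hw (adj_intro hvv hvw 0 (by omega) (Or.inr ⟨by omega, by omega⟩))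

end LECore

section EmptyLevel

variable {n : ℕ} {A B : Fin n → Γ} {g : Γ} {i i' j j' p : ℕ}

lemma hIadj_of_indep {I : Set (ℕ × ℕ)} (hI : IsIndep n A B I) :
    ∀ v ∈ I, ∀ w ∈ I, ∀ s : ℤ, (s = -1 ∨ s = 0 ∨ s = 1) →
      ((((w.1 : ℤ) = v.1 + s ∧ (w.2 : ℤ) ≠ v.2 + s) ∨
        ((w.2 : ℤ) = v.2 + s ∧ (w.1 : ℤ) ≠ v.1 + s))) → False := by
  intro v hv w hw s hs hd
  exact hI.2 v hv w hw (adj_intro (hI.1 v hv) (hI.1 w hw) s hs hd)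

lemma empty_level (S : Setup Γ n A B g i i' j j' p) {I : Set (ℕ × ℕ)}
    (hI : IsIndep n A B I) {c d : ℕ} (hcd : (c = j ∧ d = j') ∨ (c = j' ∧ d = j))
    (hL : ∃ v ∈ I, (v.1+1 = i ∧ v.2+1 = c) ∨ (v.1+1 = i' ∧ v.2+1 = d))
    (hR : ∃ w ∈ I, (w.1 = i+p ∧ w.2 = d+p) ∨ (w.1 = i'+p ∧ w.2 = c+p)) :
    ∃ q, q < p ∧ (i+q, c+q) ∉ I ∧ (i+q, d+q) ∉ I ∧ (i'+q, c+q) ∉ I ∧ (i'+q, d+q) ∉ I := by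
  have hsepA := S.sepA
  have hsepB := S.sepB
  have hp := S.hp
  have hcd' : c ≠ d ∧ c + p < n ∧ d + p < n := by
    have := S.bndB
    rcases hcd with ⟨rfl, rfl⟩ | ⟨rfl, rfl⟩ <;> exact ⟨by omega, by omega, by omega⟩
  have hadj := hIadj_of_indep hI
  by_contra hno
  push_neg at hno
  have hocc : ∀ q, q < p →
      ((i+q, c+q) ∈ I ∨ (i+q, d+q) ∈ I ∨ (i'+q, c+q) ∈ I ∨ (i'+q, d+q) ∈ I) := by
    intro q hq
    by_contra hcon
    push_neg at hcon
    exact hcon.2.2.2 (hno q hq hcon.1 hcon.2.1 hcon.2.2.1)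
  obtain ⟨v, hv, hvty⟩ := hL
  obtain ⟨w, hw, hwty⟩ := hR
  have hchain : ∀ q, q < p → ((i+q, c+q) ∈ I ∨ (i'+q, d+q) ∈ I) := by
    intro q
    induction q with
    | zero =>
      intro h0
      rcases hocc 0 h0 with h | h | h | h
      · exact Or.inl h
      · exfalso
        rcases hvty with ⟨e1, e2⟩ | ⟨e1, e2⟩
        · exact hadj v hv _ h 1 (by omega) (by omega)
        · exact hadj v hv _ h 1 (by omega) (by omega)
      · exfalso
        rcases hvty with ⟨e1, e2⟩ | ⟨e1, e2⟩
        · exact hadj v hv _ h 1 (by omega) (by omega)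
        · exact hadj v hv _ h 1 (by omega) (by omega)
      · exact Or.inr h
    | succ k ih =>
      intro hk1
      have hk := ih (by omega)
      rcases hocc (k+1) hk1 with h | h | h | h
      · exact Or.inl h
      · exfalso
        rcases hk with hm | hm
        · exact hadj _ hm _ h 1 (by omega) (by omega)
        · exact hadj _ hm _ h 1 (by omega) (by omega)
      · exfalso
        rcases hk with hm | hm
        · exact hadj _ hm _ h 1 (by omega) (by omega)
        · exact hadj _ hm _ h 1 (by omega) (by omega)
      · exact Or.inr h
  have hlast := hchain (p-1) (by omega)
  rcases hlast with hm | hm <;> rcases hwty with ⟨f1, f2⟩ | ⟨f1, f2⟩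
  · exact hadj _ hm w hw 1 (by omega) (by omega)
  · exact hadj _ hm w hw 1 (by omega) (by omega)
  · exact hadj _ hm w hw 1 (by omega) (by omega)
  · exact hadj _ hm w hw 1 (by omega) (by omega)

end EmptyLevel

section LEDir

variable {n : ℕ} {A B : Fin n → Γ} {g : Γ} {i i' j j' p : ℕ} {A' B' : Fin (n - 2*p) → Γ}

lemma le_dir (S : Setup Γ n A B g i i' j j' p)
    (ha' : ∀ k, k < n - 2*p → pf (n-2*p) A' g k = pf n A g (unc i i' p k))
    (hb' : ∀ k, k < n - 2*p → pf (n-2*p) B' g k = pf n B g (unc j j' p k)) :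
    alphaG n A B ≤ alphaG (n - 2*p) A' B' + 2*p := by
  classical
  obtain ⟨I, hI, hcard⟩ := alphaG_spec A B
  rw [← hcard]
  have hsepA := S.sepA
  have hsepB := S.sepB
  have hp := S.hp
  have hadj := hIadj_of_indep hI
  have hIfin : I.Finite := indep_finite hI
  set SQ : Set (ℕ × ℕ) := {v | ∃ q, q < p ∧ (v = (i+q, j+q) ∨ v = (i+q, j'+q) ∨
      v = (i'+q, j+q) ∨ v = (i'+q, j'+q))} with hSQdef
  set LB : Set (ℕ × ℕ) := {v | (v.1+1 = i ∨ v.1+1 = i') ∧ (v.2+1 = j ∨ v.2+1 = j')} with hLBdef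
  -- survivors
  have hsurv : ∀ v ∈ I, v ∉ SQ → Surv n i i' p v.1 ∧ Surv n j j' p v.2 := by
    intro v hv hnsq
    have hvv : IsVertex n A B v.1 v.2 := hI.1 v hv
    have hb := vertex_lt hvv
    constructor
    · refine ⟨by omega, ?_, ?_⟩
      · by_contra hcon
        obtain ⟨q, hq, hxe, hyor⟩ := clA S hvv (by omega) (by omega)
        refine hnsq ⟨q, hq, ?_⟩
        rcases hyor with h | h
        · exact Or.inl (Prod.ext hxe h)
        · exact Or.inr (Or.inl (Prod.ext hxe h))
      · by_contra hcon
        obtain ⟨q, hq, hxe, hyor⟩ := clA' S hvv (by omega) (by omega)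
        refine hnsq ⟨q, hq, ?_⟩
        rcases hyor with h | h
        · exact Or.inr (Or.inr (Or.inl (Prod.ext hxe h)))
        · exact Or.inr (Or.inr (Or.inr (Prod.ext hxe h)))
    · refine ⟨by omega, ?_, ?_⟩
      · by_contra hcon
        obtain ⟨q, hq, hxe, hyor⟩ := clA S.swap (vertex_symm hvv) (by omega) (by omega)
        refine hnsq ⟨q, hq, ?_⟩
        rcases hyor with h | h
        · exact Or.inl (Prod.ext h hxe)
        · exact Or.inr (Or.inr (Or.inl (Prod.ext h hxe)))
      · by_contra hcon
        obtain ⟨q, hq, hxe, hyor⟩ := clA' S.swap (vertex_symm hvv) (by omega) (by omega)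
        refine hnsq ⟨q, hq, ?_⟩
        rcases hyor with h | h
        · exact Or.inr (Or.inl (Prod.ext h hxe))
        · exact Or.inr (Or.inr (Or.inr (Prod.ext h hxe)))
  -- first coordinate is injective on subsets of I
  have hinj_fst : ∀ J : Set (ℕ × ℕ), J ⊆ I → Set.InjOn Prod.fst J := by
    intro J hJ v hv w hw he
    by_cases h2 : v.2 = w.2
    · exact Prod.ext he h2
    · exact absurd (hadj v (hJ hv) w (hJ hw) 0 (by omega) (by omega)) not_false
  have hcount : ∀ (J : Set (ℕ × ℕ)) (T : Finset ℕ), J ⊆ I → (∀ v ∈ J, v.1 ∈ T) →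
      J.ncard ≤ T.card := by
    intro J T hJ hT
    calc J.ncard = (Prod.fst '' J).ncard := (Set.ncard_image_of_injOn (hinj_fst J hJ)).symm
      _ ≤ (↑T : Set ℕ).ncard := Set.ncard_le_ncard
          (by rintro x ⟨v, hv, rfl⟩; exact hT v hv) T.finite_toSet
      _ = T.card := Set.ncard_coe_finset T
  -- the finset of first coordinates of square vertices
  set TO : Finset ℕ := ((Finset.range p).image (i + ·)) ∪ ((Finset.range p).image (i' + ·))
    with hTO
  have hTOcard : TO.card = 2*p := by
    rw [hTO, Finset.card_union_of_disjoint, Finset.card_image_of_injective _ (add_right_injective i),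
      Finset.card_image_of_injective _ (add_right_injective i'), Finset.card_range]
    · omega
    · rw [Finset.disjoint_left]
      intro a ha hb
      simp only [Finset.mem_image, Finset.mem_range] at ha hb
      obtain ⟨q1, hq1, rfl⟩ := ha
      obtain ⟨q2, hq2, he⟩ := hb
      omega
  have hTOmem : ∀ v : ℕ × ℕ, v ∈ I ∩ SQ → v.1 ∈ TO := by
    rintro v ⟨-, q, hq, (rfl | rfl | rfl | rfl)⟩ <;>
      simp only [hTO, Finset.mem_union, Finset.mem_image, Finset.mem_range]
    · exact Or.inl ⟨q, hq, rfl⟩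
    · exact Or.inl ⟨q, hq, rfl⟩
    · exact Or.inr ⟨q, hq, rfl⟩
    · exact Or.inr ⟨q, hq, rfl⟩
  -- main computation, parameterized by the discarded set D
  have main : ∀ D : Set (ℕ × ℕ), D ⊆ I → (I ∩ SQ) ⊆ D → D.ncard ≤ 2*p →
      (∀ v ∈ I \ D, ∀ w ∈ I \ D, ClashShape i i' j j' p v w → False) →
      I.ncard ≤ alphaG (n - 2*p) A' B' + 2*p := by
    intro D hDsub hDSQ hDcard hshape
    have hsurv0 : ∀ v ∈ I \ D, Surv n i i' p v.1 ∧ Surv n j j' p v.2 := by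
      intro v hv
      exact hsurv v hv.1 (fun hsq => hv.2 (hDSQ ⟨hv.1, hsq⟩))
    have hvert : ∀ v ∈ I \ D, IsVertex (n-2*p) A' B' (cut i i' p v.1) (cut j j' p v.2) := by
      intro v hv
      exact push S ha' hb' (hI.1 v hv.1) (hsurv0 v hv).1
    have hindep' : IsIndep (n-2*p) A' B'
        ((fun v : ℕ × ℕ => (cut i i' p v.1, cut j j' p v.2)) '' (I \ D)) := by
      constructor
      · rintro _ ⟨v, hv, rfl⟩
        exact hvert v hv
      · rintro _ ⟨v, hv, rfl⟩ _ ⟨w, hw, rfl⟩ hA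
        obtain ⟨-, -, -, s, hs, hd⟩ := hA
        simp only at hd
        have sv := hsurv0 v hv
        have sw := hsurv0 w hw
        rcases hs with rfl | rfl | rfl <;> rcases hd with ⟨d1, d2⟩ | ⟨d1, d2⟩
        · exact hshape w hw v hv (leL1 S hI hw.1 hv.1 sw.1 sw.2 sv.1 sv.2 (by omega) (by omega))
        · exact hshape w hw v hv (leL2 S hI hw.1 hv.1 sw.1 sw.2 sv.1 sv.2 (by omega) (by omega))
        · exact leL0 S hI hv.1 hw.1 sv.1 sv.2 sw.1 sw.2 (by omega) (by omega)
        · exact leL0' S hI hv.1 hw.1 sv.1 sv.2 sw.1 sw.2 (by omega) (by omega)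
        · exact hshape v hv w hw (leL1 S hI hv.1 hw.1 sv.1 sv.2 sw.1 sw.2 (by omega) (by omega))
        · exact hshape v hv w hw (leL2 S hI hv.1 hw.1 sv.1 sv.2 sw.1 sw.2 (by omega) (by omega))
    have hinjF : Set.InjOn (fun v : ℕ × ℕ => (cut i i' p v.1, cut j j' p v.2)) (I \ D) := by
      intro v hv w hw he
      have sv := hsurv0 v hv
      have sw := hsurv0 w hw
      have e1 : cut i i' p v.1 = cut i i' p w.1 := congrArg Prod.fst he
      have e2 : cut j j' p v.2 = cut j j' p w.2 := congrArg Prod.snd he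
      exact Prod.ext (surv_eq_of_cut_eq S.sepA sv.1 sw.1 e1)
        (surv_eq_of_cut_eq S.sepB sv.2 sw.2 e2)
    calc I.ncard = (D ∪ (I \ D)).ncard := by rw [Set.union_diff_cancel hDsub]
      _ ≤ D.ncard + (I \ D).ncard := Set.ncard_union_le _ _
      _ = D.ncard + ((fun v : ℕ × ℕ => (cut i i' p v.1, cut j j' p v.2)) '' (I \ D)).ncard := by
          rw [Set.ncard_image_of_injOn hinjF]
      _ ≤ 2*p + alphaG (n - 2*p) A' B' := by
          exact add_le_add hDcard (le_alphaG hindep')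
      _ = alphaG (n - 2*p) A' B' + 2*p := by omega
  by_cases hconf :
      ((∃ v ∈ I, (v.1+1 = i ∧ v.2+1 = j) ∨ (v.1+1 = i' ∧ v.2+1 = j')) ∧
       (∃ w ∈ I, (w.1 = i+p ∧ w.2 = j'+p) ∨ (w.1 = i'+p ∧ w.2 = j+p))) ∨
      ((∃ v ∈ I, (v.1+1 = i ∧ v.2+1 = j') ∨ (v.1+1 = i' ∧ v.2+1 = j)) ∧
       (∃ w ∈ I, (w.1 = i+p ∧ w.2 = j+p) ∨ (w.1 = i'+p ∧ w.2 = j'+p)))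
  · -- conflict case : there is an empty level
    have hempty : ∃ q, q < p ∧ (i+q, j+q) ∉ I ∧ (i+q, j'+q) ∉ I ∧
        (i'+q, j+q) ∉ I ∧ (i'+q, j'+q) ∉ I := by
      rcases hconf with ⟨hL, hR⟩ | ⟨hL, hR⟩
      · obtain ⟨q, hq, h1, h2, h3, h4⟩ :=
          empty_level S hI (c := j) (d := j') (Or.inl ⟨rfl, rfl⟩) hL hR
        exact ⟨q, hq, h1, h2, h3, h4⟩
      · obtain ⟨q, hq, h1, h2, h3, h4⟩ :=
          empty_level S hI (c := j') (d := j) (Or.inr ⟨rfl, rfl⟩) hL hR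
        exact ⟨q, hq, h2, h1, h4, h3⟩
    obtain ⟨q₀, hq₀, he1, he2, he3, he4⟩ := hempty
    refine main ((I ∩ SQ) ∪ (I ∩ LB)) (by intro v hv; rcases hv with h | h <;> exact h.1)
      Set.subset_union_left ?_ ?_
    · -- cardinality bound 2p - 2 + 2
      have hTO' : ∀ v : ℕ × ℕ, v ∈ I ∩ SQ → v.1 ∈ (TO.erase (i+q₀)).erase (i'+q₀) := by
        rintro v ⟨hvI, q, hq, hsh⟩
        have hmem := hTOmem v ⟨hvI, q, hq, hsh⟩
        rcases hsh with rfl | rfl | rfl | rfl <;> simp only [Finset.mem_erase]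
        · refine ⟨by omega, ?_, hmem⟩
          intro hcon
          have hqq : q = q₀ := by omega
          subst hqq
          exact absurd hvI he1
        · refine ⟨by omega, ?_, hmem⟩
          intro hcon
          have hqq : q = q₀ := by omega
          subst hqq
          exact absurd hvI he2
        · refine ⟨?_, by omega, hmem⟩
          intro hcon
          have hqq : q = q₀ := by omega
          subst hqq
          exact absurd hvI he3
        · refine ⟨?_, by omega, hmem⟩
          intro hcon
          have hqq : q = q₀ := by omega
          subst hqq
          exact absurd hvI he4
      have hc1 : (I ∩ SQ).ncard ≤ 2*p - 2 := by
        have := hcount (I ∩ SQ) ((TO.erase (i+q₀)).erase (i'+q₀)) Set.inter_subset_left hTO'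
        have hm1 : (i+q₀) ∈ TO := by
          simp only [hTO, Finset.mem_union, Finset.mem_image, Finset.mem_range]
          exact Or.inl ⟨q₀, hq₀, rfl⟩
        have hm2 : (i'+q₀) ∈ TO.erase (i+q₀) := by
          rw [Finset.mem_erase]
          refine ⟨by omega, ?_⟩
          simp only [hTO, Finset.mem_union, Finset.mem_image, Finset.mem_range]
          exact Or.inr ⟨q₀, hq₀, rfl⟩
        rw [Finset.card_erase_of_mem hm2, Finset.card_erase_of_mem hm1, hTOcard] at this
        omega
      have hc2 : (I ∩ LB).ncard ≤ 2 := by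
        have := hcount (I ∩ LB) {i-1, i'-1} Set.inter_subset_left ?_
        · have hcc : ({i-1, i'-1} : Finset ℕ).card ≤ 2 := by
            apply le_trans (Finset.card_insert_le _ _)
            simp
          omega
        · rintro v ⟨-, hv⟩
          obtain ⟨h1, -⟩ := hv
          simp only [Finset.mem_insert, Finset.mem_singleton]
          omega
      calc ((I ∩ SQ) ∪ (I ∩ LB)).ncard ≤ (I ∩ SQ).ncard + (I ∩ LB).ncard :=
            Set.ncard_union_le _ _
        _ ≤ 2*p := by omega
    · -- clash excluded : v would be in LB
      intro v hv w hw hcl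
      apply hv.2
      refine Or.inr ⟨hv.1, ?_⟩
      rcases hcl with ⟨hvl, -⟩ | ⟨hvl, -⟩ <;>
        rcases hvl with ⟨a1, a2⟩ | ⟨a1, a2⟩ <;>
        exact ⟨by omega, by omega⟩
  · -- no conflict
    refine main (I ∩ SQ) Set.inter_subset_left (by exact fun v hv => hv) ?_ ?_
    · have := hcount (I ∩ SQ) TO Set.inter_subset_left hTOmem
      omega
    · intro v hv w hw hcl
      apply hconf
      rcases hcl with ⟨hvl, hwr⟩ | ⟨hvl, hwr⟩
      · exact Or.inl ⟨⟨v, hv.1, hvl⟩, ⟨w, hw.1, hwr⟩⟩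
      · exact Or.inr ⟨⟨v, hv.1, hvl⟩, ⟨w, hw.1, hwr⟩⟩
end LEDir

lemma square_swapI {n : ℕ} {A B : Fin n → Γ} {i i' j j' : ℕ}
    (h : IsConflictSquare n A B i i' j j') : IsConflictSquare n A B i' i j j' := by
  obtain ⟨h1, h2, v1, v2, v3, v4⟩ := h
  exact ⟨h1.symm, h2, v3, v4, v1, v2⟩

lemma square_swapJ {n : ℕ} {A B : Fin n → Γ} {i i' j j' : ℕ}
    (h : IsConflictSquare n A B i i' j j') : IsConflictSquare n A B i i' j' j := by
  obtain ⟨h1, h2, v1, v2, v3, v4⟩ := h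
  exact ⟨h1, h2.symm, v2, v1, v4, v3⟩

lemma deleteTwoBlocks_comm {L : List Γ} {u w p : ℕ} :
    deleteTwoBlocks L u w p = deleteTwoBlocks L w u p := by
  simp [deleteTwoBlocks, min_comm, max_comm]
end Stmt14

theorem stmt_14 {Γ : Type*} (n : ℕ) (hn : 2 ≤ n) (A B : Fin n → Γ)
    (σ : Equiv.Perm (Fin n)) (hB : B = A ∘ σ)
    (h2 : ∀ c : Γ, {x : Fin n | A x = c}.ncard ≤ 2)
    (i i' j j' p : ℕ) (hp : 1 ≤ p)
    (hser : ∀ q < p, IsConflictSquare n A B (i + q) (i' + q) (j + q) (j' + q))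
    (hmax1 : ¬ ∃ i₀ i₀' j₀ j₀' : ℕ, i₀ + 1 = i ∧ i₀' + 1 = i' ∧ j₀ + 1 = j ∧ j₀' + 1 = j' ∧
        IsConflictSquare n A B i₀ i₀' j₀ j₀')
    (hmax2 : ¬ IsConflictSquare n A B (i + p) (i' + p) (j + p) (j' + p))
    (A' B' : Fin (n - 2 * p) → Γ)
    (hA' : List.ofFn A' = deleteTwoBlocks (List.ofFn A) i i' p)
    (hB' : List.ofFn B' = deleteTwoBlocks (List.ofFn B) j j' p) :
    alphaG n A B = alphaG (n - 2 * p) A' B' + 2 * p := by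
  have hp0 : 0 < p := hp
  have hne_i : i ≠ i' := (hser 0 hp0).1
  have hne_j : j ≠ j' := (hser 0 hp0).2.1
  have hn0 : 0 < n := by omega
  set g : Γ := A ⟨0, hn0⟩ with hg
  rcases Nat.lt_or_ge i i' with hii | hii
  · rcases Nat.lt_or_ge j j' with hjj | hjj
    · -- i < i', j < j'
      have S := Stmt14.mkSetup hB h2 hp hser hii hjj g
      have ha' : ∀ k, k < n - 2*p →
          Stmt14.pf (n-2*p) A' g k = Stmt14.pf n A g (Stmt14.unc i i' p k) :=
        fun k hk => Stmt14.pf_reduced hA' (by have := S.sepA; omega)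
          (by have := S.bndA; omega) hk
      have hb' : ∀ k, k < n - 2*p →
          Stmt14.pf (n-2*p) B' g k = Stmt14.pf n B g (Stmt14.unc j j' p k) :=
        fun k hk => Stmt14.pf_reduced hB' (by have := S.sepB; omega)
          (by have := S.bndB; omega) hk
      exact le_antisymm (Stmt14.le_dir S ha' hb') (Stmt14.ge_dir S ha' hb')
    · -- i < i', j' < j
      have hjj' : j' < j := by omega
      have hser2 : ∀ q < p, IsConflictSquare n A B (i + q) (i' + q) (j' + q) (j + q) :=
        fun q hq => Stmt14.square_swapJ (hser q hq)
      have S := Stmt14.mkSetup hB h2 hp hser2 hii hjj' g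
      have ha' : ∀ k, k < n - 2*p →
          Stmt14.pf (n-2*p) A' g k = Stmt14.pf n A g (Stmt14.unc i i' p k) :=
        fun k hk => Stmt14.pf_reduced hA' (by have := S.sepA; omega)
          (by have := S.bndA; omega) hk
      have hb' : ∀ k, k < n - 2*p →
          Stmt14.pf (n-2*p) B' g k = Stmt14.pf n B g (Stmt14.unc j' j p k) :=
        fun k hk => Stmt14.pf_reduced (hB'.trans Stmt14.deleteTwoBlocks_comm)
          (by have := S.sepB; omega) (by have := S.bndB; omega) hk
      exact le_antisymm (Stmt14.le_dir S ha' hb') (Stmt14.ge_dir S ha' hb')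
  · have hii' : i' < i := by omega
    have hserI : ∀ q < p, IsConflictSquare n A B (i' + q) (i + q) (j + q) (j' + q) :=
      fun q hq => Stmt14.square_swapI (hser q hq)
    rcases Nat.lt_or_ge j j' with hjj | hjj
    · have S := Stmt14.mkSetup hB h2 hp hserI hii' hjj g
      have ha' : ∀ k, k < n - 2*p →
          Stmt14.pf (n-2*p) A' g k = Stmt14.pf n A g (Stmt14.unc i' i p k) :=
        fun k hk => Stmt14.pf_reduced (hA'.trans Stmt14.deleteTwoBlocks_comm)
          (by have := S.sepA; omega) (by have := S.bndA; omega) hk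
      have hb' : ∀ k, k < n - 2*p →
          Stmt14.pf (n-2*p) B' g k = Stmt14.pf n B g (Stmt14.unc j j' p k) :=
        fun k hk => Stmt14.pf_reduced hB' (by have := S.sepB; omega)
          (by have := S.bndB; omega) hk
      exact le_antisymm (Stmt14.le_dir S ha' hb') (Stmt14.ge_dir S ha' hb')
    · have hjj' : j' < j := by omega
      have hser2 : ∀ q < p, IsConflictSquare n A B (i' + q) (i + q) (j' + q) (j + q) :=
        fun q hq => Stmt14.square_swapJ (hserI q hq)
      have S := Stmt14.mkSetup hB h2 hp hser2 hii' hjj' g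
      have ha' : ∀ k, k < n - 2*p →
          Stmt14.pf (n-2*p) A' g k = Stmt14.pf n A g (Stmt14.unc i' i p k) :=
        fun k hk => Stmt14.pf_reduced (hA'.trans Stmt14.deleteTwoBlocks_comm)
          (by have := S.sepA; omega) (by have := S.bndA; omega) hk
      have hb' : ∀ k, k < n - 2*p →
          Stmt14.pf (n-2*p) B' g k = Stmt14.pf n B g (Stmt14.unc j' j p k) :=
        fun k hk => Stmt14.pf_reduced (hB'.trans Stmt14.deleteTwoBlocks_comm)
          (by have := S.sepB; omega) (by have := S.bndB; omega) hk
      exact le_antisymm (Stmt14.le_dir S ha' hb') (Stmt14.ge_dir S ha' hb')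
end

section
/- Let G be a finite simple graph, let L be the set of vertices of G of degree at most 1, and suppose L is an independent set of G. Let N[L] = L ∪ N(L) be the closed neighborhood of L. Then α(G) = |L| + α(G[V ∖ N[L]]), where G[V ∖ N[L]] is the induced subgraph on the vertices outside N[L] and α denotes the maximum cardinality of an independent set. -/
/-- `α(G)`: the largest cardinality of an independent set (a set of pairwise
non-adjacent vertices) of the simple graph `G`. -/
noncomputable def alphaSG {W : Type*} (G : SimpleGraph W) : ℕ :=
  sSup {m : ℕ | ∃ s : Set W, s.Pairwise (fun u v => ¬ G.Adj u v) ∧ s.ncard = m}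

/-!
Split a maximum independent set `S` of `G` along `N[L]`. Outside `N[L]` it is independent in
`G[V ∖ N[L]]`. Inside, every vertex of `S ∩ N(L)` has a neighbour in `L \ S`, and these
neighbours are distinct because vertices of `L` have degree at most one; hence
`|S ∩ N[L]| ≤ |S ∩ L| + |L \ S| = |L|`. Conversely `L` has no neighbour outside `N[L]`, so `L`
together with any independent set of `G[V ∖ N[L]]` is independent in `G`.
-/

namespace SimpleGraph

variable {V : Type*} {G : SimpleGraph V}

section alphaSG

variable [Finite V]

lemma bddAbove_ncard_isIndepSet (G : SimpleGraph V) :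
    BddAbove {m : ℕ | ∃ s : Set V, G.IsIndepSet s ∧ s.ncard = m} :=
  ⟨Nat.card V, by
    rintro _ ⟨s, -, rfl⟩
    exact Set.ncard_le_card s⟩

lemma IsIndepSet.ncard_le_alphaSG {s : Set V} (hs : G.IsIndepSet s) : s.ncard ≤ alphaSG G :=
  le_csSup (bddAbove_ncard_isIndepSet G) ⟨s, hs, rfl⟩

lemma exists_isIndepSet_ncard_eq_alphaSG (G : SimpleGraph V) :
    ∃ s : Set V, G.IsIndepSet s ∧ s.ncard = alphaSG G :=
  Nat.sSup_mem (s := {m : ℕ | ∃ s : Set V, G.IsIndepSet s ∧ s.ncard = m})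
    ⟨0, ∅, Set.pairwise_empty _, Set.ncard_empty V⟩ (bddAbove_ncard_isIndepSet G)

lemma IsIndepSet.ncard_inter_le_alphaSG_induce {s : Set V} (hs : G.IsIndepSet s) (A : Set V) :
    (s ∩ A).ncard ≤ alphaSG (G.induce A) := by
  have hindep : (G.induce A).IsIndepSet (Subtype.val ⁻¹' s) :=
    fun x hx y hy hxy => hs hx hy (Subtype.val_injective.ne hxy)
  calc (s ∩ A).ncard = (Subtype.val ⁻¹' s : Set A).ncard := by
        rw [← Set.ncard_image_of_injective _ Subtype.val_injective, Subtype.image_preimage_coe,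
          Set.inter_comm]
    _ ≤ alphaSG (G.induce A) := hindep.ncard_le_alphaSG

end alphaSG

lemma IsIndepSet.union_image_val {s A : Set V} (hs : G.IsIndepSet s)
    (hsA : ∀ u ∈ s, ∀ v ∈ A, ¬ G.Adj u v) {t : Set A} (ht : (G.induce A).IsIndepSet t) :
    G.IsIndepSet (s ∪ Subtype.val '' t) := by
  rintro x (hx | ⟨x, hx, rfl⟩) y (hy | ⟨y, hy, rfl⟩) hxy
  · exact hs hx hy hxy
  · exact hsA x hx y y.2
  · exact fun h => hsA y hy x x.2 h.symm
  · exact ht hx hy (fun h => hxy (congrArg Subtype.val h))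

lemma IsIndepSet.ncard_add_alphaSG_induce_le [Finite V] {s A : Set V} (hs : G.IsIndepSet s)
    (hsA : ∀ u ∈ s, ∀ v ∈ A, ¬ G.Adj u v) (hdisj : Disjoint s A) :
    s.ncard + alphaSG (G.induce A) ≤ alphaSG G := by
  obtain ⟨t, ht, htcard⟩ := exists_isIndepSet_ncard_eq_alphaSG (G.induce A)
  have hdisj' : Disjoint s (Subtype.val '' t) :=
    hdisj.mono_right (Set.image_subset_range _ _ |>.trans Subtype.range_val.subset)
  calc s.ncard + alphaSG (G.induce A) = (s ∪ Subtype.val '' t).ncard := by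
        rw [Set.ncard_union_eq hdisj', Set.ncard_image_of_injective _ Subtype.val_injective,
          htcard]
    _ ≤ alphaSG G := (hs.union_image_val hsA ht).ncard_le_alphaSG

lemma IsIndepSet.ncard_inter_neighbors_le [Finite V] {s L : Set V} (hs : G.IsIndepSet s)
    (hL : ∀ u ∈ L, (G.neighborSet u).Subsingleton) :
    (s ∩ {v | ∃ u ∈ L, G.Adj u v}).ncard ≤ (L \ s).ncard := by
  have hnbr : ∀ v ∈ s ∩ {v | ∃ u ∈ L, G.Adj u v}, ∃ u ∈ L \ s, G.Adj u v := by
    rintro v ⟨hvs, u, huL, huv⟩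
    exact ⟨u, ⟨huL, fun hus => hs hus hvs huv.ne huv⟩, huv⟩
  choose! f hfL hfadj using hnbr
  refine Set.ncard_le_ncard_of_injOn f hfL fun v hv w hw hvw => ?_
  exact hL (f v) (hfL v hv).1 (hfadj v hv) (hvw ▸ hfadj w hw)

lemma IsIndepSet.ncard_inter_closedNeighbors_le [Finite V] {s L : Set V} (hs : G.IsIndepSet s)
    (hL : ∀ u ∈ L, (G.neighborSet u).Subsingleton) :
    (s ∩ (L ∪ {v | ∃ u ∈ L, G.Adj u v})).ncard ≤ L.ncard :=
  calc (s ∩ (L ∪ {v | ∃ u ∈ L, G.Adj u v})).ncard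
      ≤ (s ∩ L).ncard + (s ∩ {v | ∃ u ∈ L, G.Adj u v}).ncard := by
        rw [Set.inter_union_distrib_left]
        exact Set.ncard_union_le _ _
    _ ≤ (L ∩ s).ncard + (L \ s).ncard := by
        rw [Set.inter_comm]
        exact Nat.add_le_add_left (hs.ncard_inter_neighbors_le hL) _
    _ = L.ncard := Set.ncard_inter_add_ncard_sdiff_eq_ncard L s

end SimpleGraph

open SimpleGraph in
theorem stmt_15 {V : Type*} [Fintype V] (G : SimpleGraph V)
    (L : Set V) (hL : L = {v : V | {w : V | G.Adj v w}.ncard ≤ 1})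
    (hLind : L.Pairwise (fun u v => ¬ G.Adj u v))
    (NL : Set V) (hNL : NL = L ∪ {v : V | ∃ u ∈ L, G.Adj u v}) :
    alphaSG G = L.ncard + alphaSG (G.induce NLᶜ) := by
  have hleaf : ∀ u ∈ L, (G.neighborSet u).Subsingleton := by
    intro u hu
    rw [hL] at hu
    exact Set.ncard_le_one_iff_subsingleton.mp hu
  have hLNL : L ⊆ NL := hNL ▸ Set.subset_union_left
  have hLout : ∀ u ∈ L, ∀ v ∈ NLᶜ, ¬ G.Adj u v := fun u hu v hv huv =>
    hv (hNL ▸ Or.inr ⟨u, hu, huv⟩)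
  refine le_antisymm ?_ (IsIndepSet.ncard_add_alphaSG_induce_le hLind hLout
    (Set.disjoint_compl_right_iff_subset.mpr hLNL))
  obtain ⟨S, hS, hScard⟩ := exists_isIndepSet_ncard_eq_alphaSG G
  calc alphaSG G = (S ∩ NL).ncard + (S ∩ NLᶜ).ncard := by
        rw [← hScard, ← Set.sdiff_eq, Set.ncard_inter_add_ncard_sdiff_eq_ncard]
    _ ≤ L.ncard + alphaSG (G.induce NLᶜ) :=
        Nat.add_le_add (hNL ▸ hS.ncard_inter_closedNeighbors_le hleaf)
          (hS.ncard_inter_le_alphaSG_induce NLᶜ)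
end

section
/- Let π be a permutation of Fin n such that A x = B(π x) for all x (i.e., π is a perfect matching of equal letters). Then the set I = {(i, π i) : i ≤ n-2 and π(i+1) = π(i) + 1} consists of vertices and is an independent set of the conflict graph G; the elements of I correspond exactly to the duos of A preserved by π. -/
theorem stmt_16 {Γ : Type*} (n : ℕ) (hn : 2 ≤ n) (A B : Fin n → Γ)
    (σ : Equiv.Perm (Fin n)) (hB : B = A ∘ σ)
    (π : Equiv.Perm (Fin n)) (hπ : ∀ x : Fin n, A x = B (π x))
    (I : Set (ℕ × ℕ))
    (hI : I = {v : ℕ × ℕ | ∃ hv : v.1 + 1 < n,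
      v.2 = (π ⟨v.1, by omega⟩ : Fin n).1 ∧
      (π ⟨v.1 + 1, hv⟩ : Fin n).1 = (π ⟨v.1, by omega⟩ : Fin n).1 + 1}) :
    (∀ v ∈ I, IsVertex n A B v.1 v.2) ∧
    (∀ v ∈ I, ∀ w ∈ I, ¬ ConflictAdj n A B v w) := by
  subst hI
  have key : ∀ (a b : ℕ) (ha : a < n) (hb : b < n), a = b →
      (π ⟨a, ha⟩ : Fin n).1 = (π ⟨b, hb⟩ : Fin n).1 := by
    intro a b ha hb hab; subst hab; rfl
  have inj : ∀ (a b : ℕ) (ha : a < n) (hb : b < n),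
      (π ⟨a, ha⟩ : Fin n).1 = (π ⟨b, hb⟩ : Fin n).1 → a = b := by
    intro a b ha hb hab
    have := π.injective (Fin.ext hab)
    exact congrArg Fin.val this
  constructor
  · rintro ⟨i, j⟩ ⟨hv, hj, hs⟩
    dsimp only at hv hj hs
    have hjn : j + 1 < n := by
      have h1 := (π ⟨i + 1, hv⟩).2
      omega
    refine ⟨hv, hjn, ?_, ?_⟩
    · rw [hπ ⟨i, by omega⟩]
      congr 1
      exact Fin.ext hj.symm
    · rw [hπ ⟨i + 1, hv⟩]
      congr 1
      apply Fin.ext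
      simp only [hs, hj]
  · rintro ⟨i, j⟩ ⟨hv, hj, hs⟩ ⟨h, l⟩ ⟨hw, hl, ht⟩ ⟨-, -, hne, p, hp, hcase⟩
    dsimp only at hv hj hs hw hl ht hne hcase
    rcases hp with rfl | rfl | rfl
    · -- p = -1
      rcases hcase with ⟨h1, h2⟩ | ⟨h1, h2⟩
      · -- h + 1 = i, claim l + 1 = j
        have hhi : h + 1 = i := by omega
        have : j = l + 1 := by
          have e1 : (π ⟨i, by omega⟩ : Fin n).1 = (π ⟨h + 1, hw⟩ : Fin n).1 :=
            key _ _ _ _ hhi.symm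
          omega
        omega
      · -- l + 1 = j
        have hlj : l + 1 = j := by omega
        have : h + 1 = i := by
          apply inj _ _ hw (by omega)
          have e1 : (π ⟨h + 1, hw⟩ : Fin n).1 = l + 1 := by omega
          omega
        omega
    · -- p = 0
      rcases hcase with ⟨h1, h2⟩ | ⟨h1, h2⟩
      · have hhi : h = i := by omega
        have : l = j := by
          have := key h i (by omega) (by omega) hhi
          omega
        omega
      · have hlj : l = j := by omega
        have : h = i := by
          apply inj _ _ (by omega) (by omega)
          omega
        omega
    · -- p = 1
      rcases hcase with ⟨h1, h2⟩ | ⟨h1, h2⟩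
      · have hhi : h = i + 1 := by omega
        have : l = j + 1 := by
          have := key h (i + 1) (by omega) hv hhi
          omega
        omega
      · have hlj : l = j + 1 := by omega
        have : h = i + 1 := by
          apply inj _ _ (by omega) hv
          omega
        omega
end
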